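/- arXiv:2301.13370 — 5 statements merged into one kernel-verified Lean document; each statement's English description precedes it below -/
import Mathlib

section
/- If the neural network z_L has bias parameters, then for every finite nonempty M ⊆ ℝ the density of the non-differentiable set satisfies |ndf_Ω(z_L)|/|Ω| ≤ (1/|M|) · Σ_{l∈[L], i∈[N_l]} |ndf(σ_{l,i})|. -/
open Filter Topology Set

/-- The parameter space `ℝ^W = ℝ^{W_1} × ⋯ × ℝ^{W_L}` of a neural network. -/
abbrev Params (L : ℕ) (Wd : Fin L → ℕ) : Type := (l : Fin L) → Fin (Wd l) → ℝ

/-- `f : ℝ → ℝ` is piecewise-analytic: there are finitely many pairwise disjoint nonempty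
intervals covering `ℝ` on each of which `f` agrees with an analytic function `ℝ → ℝ`. -/
def PiecewiseAnalytic (f : ℝ → ℝ) : Prop :=
  ∃ (n : ℕ) (A : Fin n → Set ℝ) (g : Fin n → ℝ → ℝ),
    (∀ i, (A i).Nonempty ∧ (A i).OrdConnected) ∧
    (Pairwise fun i j => Disjoint (A i) (A j)) ∧
    (⋃ i, A i) = Set.univ ∧
    (∀ i x, AnalyticAt ℝ (g i) x) ∧
    (∀ i, ∀ x ∈ A i, f x = g i x)

/-- `g` is an extended derivative of `f`. -/
def IsExtendedDeriv (f g : ℝ → ℝ) : Prop :=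
  ∀ x, DifferentiableAt ℝ f x → g x = deriv f x

/-- An extended derivative `g` of `f` is consistent. -/
def IsConsistentWith (f g : ℝ → ℝ) : Prop :=
  ∀ x, ¬DifferentiableAt ℝ f x →
    ∃ u : ℕ → ℝ, Tendsto u atTop (𝓝 x) ∧ (∀ k, DifferentiableAt ℝ f (u k)) ∧
      Tendsto (fun k => deriv f (u k)) atTop (𝓝 (g x))

/-- A pre-activation function `τ : ℝ^n × ℝ^m → ℝ^k` has bias parameters. -/
def HasBiasParams {n m k : ℕ} (τ : (Fin n → ℝ) × (Fin m → ℝ) → Fin k → ℝ) : Prop :=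
  ∃ (h : k ≤ m) (f : Fin k → (Fin n → ℝ) → (Fin (m - k) → ℝ) → ℝ),
    ∀ (i : Fin k) (x : Fin n → ℝ) (u : Fin m → ℝ),
      τ (x, u) i =
        f i x (fun j => u (Fin.castLE (Nat.sub_le m k) j)) +
          u ⟨m - k + i.val, by have := i.isLt; omega⟩

/-- A pre-activation function `τ : ℝ^n × ℝ^m → ℝ^k` is well-structured biaffine. -/
def WellStructuredBiaffine {n m k : ℕ} (τ : (Fin n → ℝ) × (Fin m → ℝ) → Fin k → ℝ) : Prop :=
  ∃ (A : Fin k → Matrix (Fin n) (Fin m) ℝ) (c : Fin k → ℝ),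
    (∀ (i : Fin k) (x : Fin n → ℝ) (u : Fin m → ℝ),
      τ (x, u) i = (∑ a, ∑ b, x a * A i a b * u b) + c i) ∧
    (∀ (i : Fin k) (b : Fin m), {a : Fin n | A i a b ≠ 0}.Subsingleton)

/-- The diagonal continuous linear map `ℝ^n → ℝ^n` with diagonal entries `d`. -/
noncomputable def diagCLM {n : ℕ} (d : Fin n → ℝ) : (Fin n → ℝ) →L[ℝ] (Fin n → ℝ) :=
  ContinuousLinearMap.pi fun i => d i • ContinuousLinearMap.proj i

/-- The set of points of non-differentiability of `f : ℝ → ℝ`. -/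
def ndfSet (f : ℝ → ℝ) : Set ℝ := {x | ¬DifferentiableAt ℝ f x}

/-- The set of points where `f : ℝ → ℝ` is not continuously differentiable. -/
def ncdfSet (f : ℝ → ℝ) : Set ℝ := {x | ¬ContDiffAt ℝ 1 f x}

/-- The boundary of the zero set of `f : ℝ → ℝ`. -/
def bdzSet (f : ℝ → ℝ) : Set ℝ := frontier {x | f x = 0}

lemma frontier_subset_of_ordConnected {A : Set ℝ} (hne : A.Nonempty) (hoc : A.OrdConnected) :
    frontier A ⊆ {sInf A, sSup A} := by
  intro x hx
  obtain ⟨hxc, hxi⟩ := hx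
  by_cases hlb : ∀ a ∈ A, x ≤ a
  · left
    have hglb : IsGLB A x := by
      constructor
      · exact hlb
      · intro y hy
        by_contra hxy
        push_neg at hxy
        obtain ⟨a, ha, haA⟩ := mem_closure_iff.mp hxc (Iio y) isOpen_Iio hxy
        exact absurd (hy haA) (not_le.mpr ha)
    exact (hglb.csInf_eq hne).symm
  · push_neg at hlb
    obtain ⟨a, haA, hax⟩ := hlb
    by_cases hub : ∀ b ∈ A, b ≤ x
    · right
      have hlub : IsLUB A x := by
        constructor
        · exact hub
        · intro y hy
          by_contra hxy
          push_neg at hxy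
          obtain ⟨b, hb, hbA⟩ := mem_closure_iff.mp hxc (Ioi y) isOpen_Ioi hxy
          exact absurd (hy hbA) (not_le.mpr hb)
      exact (hlub.csSup_eq hne).symm
    · push_neg at hub
      obtain ⟨b, hbA, hxb⟩ := hub
      exfalso
      apply hxi
      have hsub : Ioo a b ⊆ A := fun t ht => hoc.out haA hbA ⟨le_of_lt ht.1, le_of_lt ht.2⟩
      exact mem_interior.mpr ⟨Ioo a b, hsub, isOpen_Ioo, ⟨hax, hxb⟩⟩

lemma pa_finite {f : ℝ → ℝ} (h : PiecewiseAnalytic f) : (ndfSet f).Finite := by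
  obtain ⟨n, A, g, hA, hdisj, hcover, hg, hfg⟩ := h
  have hsub : ndfSet f ⊆ ⋃ i, frontier (A i) := by
    intro x hx
    by_contra hxf
    simp only [mem_iUnion, not_exists] at hxf
    have hxA : x ∈ ⋃ i, A i := hcover ▸ mem_univ x
    obtain ⟨i, hi⟩ := mem_iUnion.mp hxA
    have hxint : x ∈ interior (A i) := by
      have := hxf i
      rw [frontier, mem_diff] at this
      push_neg at this
      exact this (subset_closure hi)
    have heq : f =ᶠ[𝓝 x] g i := by
      filter_upwards [isOpen_interior.mem_nhds hxint] with t ht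
      exact hfg i t (interior_subset ht)
    exact hx (((hg i x).differentiableAt).congr_of_eventuallyEq heq)
  apply Set.Finite.subset _ hsub
  apply Set.finite_iUnion
  intro i
  exact (Set.finite_singleton _ |>.insert _).subset
    (frontier_subset_of_ordConnected (hA i).1 (hA i).2)

/-- If the neural network `z_L` has bias parameters, then for every finite
nonempty `M ⊆ ℝ` the density of the non-differentiable set over `Ω = M^W` is at most
`(1/|M|) · Σ_{l,i} |ndf(σ_{l,i})|`. -/
theorem stmt1
    (L : ℕ) (hL : 1 ≤ L)
    (N : ℕ → ℕ) (hN : ∀ l, 1 ≤ N l)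
    (Wd : Fin L → ℕ) (hW : 1 ≤ ∑ l, Wd l)
    (τ : (l : Fin L) → (Fin (N l.val) → ℝ) × (Fin (Wd l) → ℝ) → Fin (N (l.val + 1)) → ℝ)
    (hτ : ∀ l p, AnalyticAt ℝ (τ l) p)
    (σ : (l : Fin L) → Fin (N (l.val + 1)) → ℝ → ℝ)
    (hσc : ∀ l i, Continuous (σ l i))
    (hσpa : ∀ l i, PiecewiseAnalytic (σ l i))
    (c : Fin (N 0) → ℝ)
    (z : (l : ℕ) → Params L Wd → Fin (N l) → ℝ)
    (y : (l : Fin L) → Params L Wd → Fin (N (l.val + 1)) → ℝ)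
    (hz0 : ∀ w, z 0 w = c)
    (hy : ∀ l w, y l w = τ l (z l.val w, w l))
    (hz : ∀ l w i, z (l.val + 1) w i = σ l i (y l w i))
    (hbias : ∀ l, HasBiasParams (τ l))
    (M : Set ℝ) (hMfin : M.Finite) (hMne : M.Nonempty) :
    (({w : Params L Wd | (∀ l j, w l j ∈ M) ∧ ¬DifferentiableAt ℝ (z L) w}).ncard : ℝ) /
        (({w : Params L Wd | ∀ l j, w l j ∈ M}).ncard : ℝ) ≤
      (1 / (M.ncard : ℝ)) *
        ∑ l : Fin L, ∑ i : Fin (N (l.val + 1)), ((ndfSet (σ l i)).ncard : ℝ) := by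
  classical
  have hndf : ∀ l i, (ndfSet (σ l i)).Finite := fun l i => pa_finite (hσpa l i)
  have hΩfin : ({w : Params L Wd | ∀ l j, w l j ∈ M}).Finite := by
    have heq : {w : Params L Wd | ∀ l j, w l j ∈ M}
        = Set.univ.pi (fun l => Set.univ.pi fun _ : Fin (Wd l) => M) := by
      ext w; simp [Set.mem_pi]
    rw [heq]
    exact Set.Finite.pi fun l => Set.Finite.pi fun _ => hMfin
  set ΩF : Finset (Params L Wd) := hΩfin.toFinset with hΩF
  have hmemΩF : ∀ w, w ∈ ΩF ↔ ∀ l j, w l j ∈ M := by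
    intro w; rw [hΩF, Set.Finite.mem_toFinset]; exact Iff.rfl
  -- z k depends only on earlier layers
  have zdep : ∀ (k : ℕ), k ≤ L → ∀ w w' : Params L Wd,
      (∀ l' : Fin L, l'.val < k → w l' = w' l') → z k w = z k w' := by
    intro k
    induction k with
    | zero => intro _ w w' _; rw [hz0, hz0]
    | succ k ih =>
      intro hk w w' hag
      have hkL : k < L := hk
      funext i
      have e1 : z (k + 1) w i = σ ⟨k, hkL⟩ i (y ⟨k, hkL⟩ w i) := hz ⟨k, hkL⟩ w i
      have e2 : z (k + 1) w' i = σ ⟨k, hkL⟩ i (y ⟨k, hkL⟩ w' i) := hz ⟨k, hkL⟩ w' i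
      rw [e1, e2]
      have h1 : z k w = z k w' :=
        ih (le_of_lt hkL) w w' (fun l' hl' => hag l' (Nat.lt_succ_of_lt hl'))
      have h2 : w ⟨k, hkL⟩ = w' ⟨k, hkL⟩ := hag ⟨k, hkL⟩ (Nat.lt_succ_self k)
      have e3 : y ⟨k, hkL⟩ w = τ ⟨k, hkL⟩ (z k w, w ⟨k, hkL⟩) := hy ⟨k, hkL⟩ w
      have e4 : y ⟨k, hkL⟩ w' = τ ⟨k, hkL⟩ (z k w', w' ⟨k, hkL⟩) := hy ⟨k, hkL⟩ w'
      rw [e3, e4, h1, h2]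
  -- differentiability through the network
  have diffz : ∀ w : Params L Wd,
      (∀ l i, DifferentiableAt ℝ (σ l i) (y l w i)) →
      ∀ k : ℕ, k ≤ L → DifferentiableAt ℝ (z k) w := by
    intro w hall k
    induction k with
    | zero =>
      intro _
      have hc : z 0 = fun _ => c := funext hz0
      rw [hc]; exact differentiableAt_const c
    | succ k ih =>
      intro hk
      have hkL : k < L := hk
      have hzk : DifferentiableAt ℝ (z k) w := ih (le_of_lt hkL)
      have hproj : DifferentiableAt ℝ (fun w : Params L Wd => w ⟨k, hkL⟩) w :=
        (ContinuousLinearMap.proj (R := ℝ)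
          (φ := fun l : Fin L => Fin (Wd l) → ℝ) ⟨k, hkL⟩).differentiableAt
      have hpair : DifferentiableAt ℝ
          (fun w : Params L Wd => (z k w, w ⟨k, hkL⟩)) w := hzk.prodMk hproj
      have hcomp : DifferentiableAt ℝ
          (fun w : Params L Wd => τ ⟨k, hkL⟩ (z k w, w ⟨k, hkL⟩)) w :=
        ((hτ ⟨k, hkL⟩ (z k w, w ⟨k, hkL⟩)).differentiableAt).comp w hpair
      have hyd : ∀ i, DifferentiableAt ℝ (fun w => y ⟨k, hkL⟩ w i) w := by
        intro i
        have hcoord : DifferentiableAt ℝ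
            (fun w : Params L Wd => τ ⟨k, hkL⟩ (z k w, w ⟨k, hkL⟩) i) w :=
          (differentiableAt_pi.mp hcomp) i
        have hfun : (fun w : Params L Wd => y ⟨k, hkL⟩ w i)
            = fun w : Params L Wd => τ ⟨k, hkL⟩ (z k w, w ⟨k, hkL⟩) i :=
          funext fun w => by rw [hy ⟨k, hkL⟩ w]
        rw [hfun]; exact hcoord
      have hzf : z (k + 1) = fun w i => σ ⟨k, hkL⟩ i (y ⟨k, hkL⟩ w i) :=
        funext fun w => funext fun i => hz ⟨k, hkL⟩ w i
      rw [hzf]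
      apply differentiableAt_pi.mpr
      intro i
      exact (hall ⟨k, hkL⟩ i).comp w (hyd i)
  -- Step A
  have stepA : ∀ w : Params L Wd, ¬DifferentiableAt ℝ (z L) w →
      ∃ l i, y l w i ∈ ndfSet (σ l i) := by
    intro w hw
    by_contra hcon
    push_neg at hcon
    refine hw (diffz w ?_ L le_rfl)
    intro l i
    have := hcon l i
    simpa [ndfSet] using this
  -- Key counting lemma
  have key : ∀ (l : Fin L) (i : Fin (N (l.val + 1))) (t : ℝ),
      M.ncard * (ΩF.filter fun w => y l w i = t).card ≤ ΩF.card := by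
    intro l i t
    obtain ⟨hle, f, hf⟩ := hbias l
    have hbval : Wd l - N (l.val + 1) + i.val < Wd l := by have := i.isLt; omega
    set b : Fin (Wd l) := ⟨Wd l - N (l.val + 1) + i.val, hbval⟩ with hbdef
    set S := ΩF.filter fun w => y l w i = t with hS
    set φ : ℝ × Params L Wd → Params L Wd :=
      fun p => Function.update p.2 l (Function.update (p.2 l) b p.1) with hφ
    have hyw : ∀ w : Params L Wd, y l w i
        = f i (z l.val w) (fun j => w l (Fin.castLE (Nat.sub_le _ _) j)) + w l b := by
      intro w
      have e : y l w i = τ l (z l.val w, w l) i := by rw [hy l w]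
      rw [e]; exact hf i (z l.val w) (w l)
    have himg : Finset.image φ (hMfin.toFinset ×ˢ S) ⊆ ΩF := by
      intro u hu
      obtain ⟨⟨m, w⟩, hmw, rfl⟩ := Finset.mem_image.mp hu
      rw [Finset.mem_product] at hmw
      obtain ⟨hm, hwS⟩ := hmw
      have hm' : m ∈ M := hMfin.mem_toFinset.mp hm
      have hw' : ∀ l' j, w l' j ∈ M := (hmemΩF w).mp (Finset.mem_filter.mp hwS).1
      rw [hmemΩF]
      intro l' j
      by_cases hl' : l' = l
      · subst hl'
        simp only [hφ, Function.update_self]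
        by_cases hj : j = b
        · subst hj; simp [Function.update_self, hm']
        · simp [Function.update_of_ne hj, hw']
      · simp [hφ, Function.update_of_ne hl', hw']
    have hinj : Set.InjOn φ ↑(hMfin.toFinset ×ˢ S) := by
      rintro ⟨m₁, w₁⟩ hp ⟨m₂, w₂⟩ hq hpq
      simp only [Finset.coe_product, Set.mem_prod, Finset.mem_coe] at hp hq
      have hw₁S := (Finset.mem_filter.mp hp.2).2
      have hw₂S := (Finset.mem_filter.mp hq.2).2
      have hoff : ∀ l' : Fin L, l' ≠ l → w₁ l' = w₂ l' := by
        intro l' hl'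
        have := congrFun hpq l'
        simpa [hφ, Function.update_of_ne hl'] using this
      have hoffj : ∀ j : Fin (Wd l), j ≠ b → w₁ l j = w₂ l j := by
        intro j hj
        have := congrFun (congrFun hpq l) j
        simpa [hφ, Function.update_self, Function.update_of_ne hj] using this
      have hmeq : m₁ = m₂ := by
        have := congrFun (congrFun hpq l) b
        simpa [hφ, Function.update_self] using this
      have hzeq : z l.val w₁ = z l.val w₂ :=
        zdep l.val (le_of_lt l.isLt) w₁ w₂ (fun l' hl' =>
          hoff l' (fun h => absurd (h ▸ hl') (lt_irrefl l.val)))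
      have hfeq : (fun j => w₁ l (Fin.castLE (Nat.sub_le _ _) j))
          = (fun j => w₂ l (Fin.castLE (Nat.sub_le (Wd l) (N (l.val + 1))) j)) := by
        funext j
        apply hoffj
        apply Fin.ne_of_val_ne
        simp only [Fin.castLE, hbdef]
        have := j.isLt
        omega
      have hbeq : w₁ l b = w₂ l b := by
        have h1 := hyw w₁
        have h2 := hyw w₂
        rw [hw₁S] at h1
        rw [hw₂S] at h2
        rw [hzeq, hfeq] at h1
        have := h1.symm.trans h2
        exact add_left_cancel this
      have hweq : w₁ = w₂ := by
        funext l' j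
        by_cases hl' : l' = l
        · subst hl'
          by_cases hj : j = b
          · subst hj; exact hbeq
          · exact hoffj j hj
        · exact congrFun (hoff l' hl') j
      rw [Prod.mk.injEq]
      exact ⟨hmeq, hweq⟩
    calc M.ncard * S.card = hMfin.toFinset.card * S.card := by
          rw [Set.ncard_eq_toFinset_card _ hMfin]
      _ = (hMfin.toFinset ×ˢ S).card := (Finset.card_product _ _).symm
      _ = (Finset.image φ (hMfin.toFinset ×ˢ S)).card :=
          (Finset.card_image_of_injOn hinj).symm
      _ ≤ ΩF.card := Finset.card_le_card himg
  -- union bound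
  set BadF := ΩF.filter fun w => ¬DifferentiableAt ℝ (z L) w with hBadF
  have hbadcard : M.ncard * BadF.card
      ≤ (∑ l : Fin L, ∑ i : Fin (N (l.val + 1)), (ndfSet (σ l i)).ncard) * ΩF.card := by
    have hsub : BadF ⊆ Finset.univ.biUnion (fun l : Fin L =>
        Finset.univ.biUnion fun i : Fin (N (l.val + 1)) =>
          (hndf l i).toFinset.biUnion fun t => ΩF.filter fun w => y l w i = t) := by
      intro w hw
      rw [hBadF, Finset.mem_filter] at hw
      obtain ⟨hwΩ, hwnd⟩ := hw
      obtain ⟨l, i, hli⟩ := stepA w hwnd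
      simp only [Finset.mem_biUnion, Finset.mem_univ, true_and]
      exact ⟨l, i, y l w i, (hndf l i).mem_toFinset.mpr hli,
        Finset.mem_filter.mpr ⟨hwΩ, rfl⟩⟩
    have hcard1 : BadF.card ≤ ∑ l : Fin L, ∑ i : Fin (N (l.val + 1)),
        ∑ t ∈ (hndf l i).toFinset, (ΩF.filter fun w => y l w i = t).card := by
      calc BadF.card ≤ _ := Finset.card_le_card hsub
        _ ≤ ∑ l : Fin L, (Finset.univ.biUnion fun i : Fin (N (l.val + 1)) =>
              (hndf l i).toFinset.biUnion fun t =>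
                ΩF.filter fun w => y l w i = t).card := Finset.card_biUnion_le
        _ ≤ ∑ l : Fin L, ∑ i : Fin (N (l.val + 1)),
              ((hndf l i).toFinset.biUnion fun t =>
                ΩF.filter fun w => y l w i = t).card :=
            Finset.sum_le_sum fun l _ => Finset.card_biUnion_le
        _ ≤ ∑ l : Fin L, ∑ i : Fin (N (l.val + 1)),
              ∑ t ∈ (hndf l i).toFinset, (ΩF.filter fun w => y l w i = t).card :=
            Finset.sum_le_sum fun l _ => Finset.sum_le_sum fun i _ => Finset.card_biUnion_le
    calc M.ncard * BadF.card
        ≤ M.ncard * ∑ l : Fin L, ∑ i : Fin (N (l.val + 1)),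
            ∑ t ∈ (hndf l i).toFinset, (ΩF.filter fun w => y l w i = t).card :=
          Nat.mul_le_mul_left _ hcard1
      _ = ∑ l : Fin L, ∑ i : Fin (N (l.val + 1)),
            ∑ t ∈ (hndf l i).toFinset, M.ncard * (ΩF.filter fun w => y l w i = t).card := by
          simp [Finset.mul_sum]
      _ ≤ ∑ l : Fin L, ∑ i : Fin (N (l.val + 1)),
            ∑ _t ∈ (hndf l i).toFinset, ΩF.card :=
          Finset.sum_le_sum fun l _ => Finset.sum_le_sum fun i _ =>
            Finset.sum_le_sum fun t _ => key l i t
      _ = ∑ l : Fin L, ∑ i : Fin (N (l.val + 1)), (ndfSet (σ l i)).ncard * ΩF.card := by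
          refine Finset.sum_congr rfl fun l _ => Finset.sum_congr rfl fun i _ => ?_
          rw [Finset.sum_const, smul_eq_mul, Set.ncard_eq_toFinset_card _ (hndf l i)]
      _ = (∑ l : Fin L, ∑ i : Fin (N (l.val + 1)), (ndfSet (σ l i)).ncard) * ΩF.card := by
          rw [Finset.sum_mul]
          exact Finset.sum_congr rfl fun l _ => (Finset.sum_mul _ _ _).symm
  -- positivity
  obtain ⟨m₀, hm₀⟩ := hMne
  have hΩne : (fun _ _ => m₀ : Params L Wd) ∈ ΩF := (hmemΩF _).mpr fun l j => hm₀
  have hΩpos : 0 < ΩF.card := Finset.card_pos.mpr ⟨_, hΩne⟩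
  have hMpos : 0 < M.ncard := by
    rw [Set.ncard_eq_toFinset_card _ hMfin]
    exact Finset.card_pos.mpr ⟨m₀, hMfin.mem_toFinset.mpr hm₀⟩
  -- identify sets in statement
  have hset1 : ({w : Params L Wd | (∀ l j, w l j ∈ M) ∧ ¬DifferentiableAt ℝ (z L) w}).ncard
      = BadF.card := by
    rw [← Set.ncard_coe_finset]
    congr 1
    ext w
    simp only [hBadF, Finset.coe_filter, Set.mem_setOf_eq, hmemΩF]
  have hset2 : ({w : Params L Wd | ∀ l j, w l j ∈ M}).ncard = ΩF.card := by
    rw [← Set.ncard_coe_finset]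
    congr 1
    ext w
    simp only [Finset.mem_coe, hmemΩF, Set.mem_setOf_eq]
  rw [hset1, hset2]
  have hcast : (M.ncard : ℝ) * BadF.card
      ≤ (∑ l : Fin L, ∑ i : Fin (N (l.val + 1)), ((ndfSet (σ l i)).ncard : ℝ)) * ΩF.card := by
    have h0 := (Nat.cast_le (α := ℝ)).mpr hbadcard
    push_cast at h0
    convert h0 using 2
  have hO : (0 : ℝ) < ΩF.card := by exact_mod_cast hΩpos
  have hK : (0 : ℝ) < M.ncard := by exact_mod_cast hMpos
  rw [div_le_iff₀ hO, one_div]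
  calc (BadF.card : ℝ) = (M.ncard : ℝ)⁻¹ * ((M.ncard : ℝ) * BadF.card) := by
        field_simp
    _ ≤ (M.ncard : ℝ)⁻¹ *
        ((∑ l : Fin L, ∑ i : Fin (N (l.val + 1)), ((ndfSet (σ l i)).ncard : ℝ)) * ΩF.card) :=
        mul_le_mul_of_nonneg_left hcast (le_of_lt (inv_pos.mpr hK))
    _ = ((M.ncard : ℝ)⁻¹ *
        ∑ l : Fin L, ∑ i : Fin (N (l.val + 1)), ((ndfSet (σ l i)).ncard : ℝ)) * ΩF.card := by
        ring
end

section
/- For every finite nonempty M ⊆ ℝ and all n, α ∈ ℕ with n ≥ 2 and α ≤ |M|/(n−1), there exists a neural network z_L : ℝ^W → ℝ (i.e. with N_L = 1) which has bias parameters, has N_1 + ⋯ + N_L = n+1 neurons, satisfies |ndf(σ_{1,i})| = α for all i ∈ [N_1], and satisfies |ndf_Ω(z_L)|/|Ω| ≥ (1/2) · (1/|M|) · Σ_{l∈[L], i∈[N_l]} |ndf(σ_{l,i})|. -/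
open Filter Topology Set

open scoped Classical

noncomputable def phiF {α : ℕ} (k : Fin α → ℝ) (x : ℝ) : ℝ := ∑ j, |x - k j|

lemma phiF_cont {α : ℕ} (k : Fin α → ℝ) : Continuous (phiF k) :=
  continuous_finset_sum _ fun j _ => (continuous_id.sub continuous_const).abs

lemma diff_abs_shift {c x : ℝ} (h : x ≠ c) : DifferentiableAt ℝ (fun y => |y - c|) x :=
  (differentiableAt_abs (sub_ne_zero.2 h)).comp x (differentiableAt_id.sub_const c)

lemma not_diff_abs_shift (c : ℝ) : ¬ DifferentiableAt ℝ (fun y => |y - c|) c := by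
  intro h
  have hf : DifferentiableAt ℝ (fun t : ℝ => t + c) 0 := differentiableAt_fun_id.add_const c
  have h3 := DifferentiableAt.comp (𝕜 := ℝ) 0 (by simpa using h) hf
  have h2 : DifferentiableAt ℝ (fun t : ℝ => |t|) 0 := by
    simpa [Function.comp_def, add_sub_cancel_right] using h3
  exact not_differentiableAt_abs_zero h2

lemma ndf_phiF {α : ℕ} (k : Fin α → ℝ) (hk : Function.Injective k) :
    ndfSet (phiF k) = Set.range k := by
  ext x
  simp only [ndfSet, Set.mem_setOf_eq, Set.mem_range]
  constructor
  · intro h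
    by_contra hr
    push_neg at hr
    refine h ?_
    unfold phiF
    exact DifferentiableAt.fun_sum fun j _ => diff_abs_shift fun he => hr j he.symm
  · rintro ⟨j₀, rfl⟩ h
    have hrest : DifferentiableAt ℝ (fun y => ∑ j ∈ Finset.univ.erase j₀, |y - k j|) (k j₀) :=
      DifferentiableAt.fun_sum fun j hj =>
        diff_abs_shift fun he => (Finset.ne_of_mem_erase hj) (hk he.symm)
    have h2 := h.fun_sub hrest
    have he : (fun y => phiF k y - ∑ j ∈ Finset.univ.erase j₀, |y - k j|) =
        fun y => |y - k j₀| := by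
      funext y
      unfold phiF
      rw [← Finset.add_sum_erase _ _ (Finset.mem_univ j₀)]
      ring
    rw [he] at h2
    exact not_diff_abs_shift (k j₀) h2

noncomputable def cnt {α : ℕ} (k : Fin α → ℝ) (x : ℝ) : ℕ :=
  (Finset.univ.filter (fun j => k j ≤ x)).card

lemma cnt_key {α : ℕ} {k : Fin α → ℝ} (hk : StrictMono k) (j : Fin α) (x : ℝ) :
    k j ≤ x ↔ j.val < cnt k x := by
  constructor
  · intro h
    have hsub : Finset.Iic j ⊆ Finset.univ.filter (fun j' => k j' ≤ x) := by
      intro j' hj'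
      simp only [Finset.mem_Iic] at hj'
      simp only [Finset.mem_filter, Finset.mem_univ, true_and]
      exact le_trans (hk.monotone hj') h
    have h2 := Finset.card_le_card hsub
    rw [Fin.card_Iic] at h2
    unfold cnt
    omega
  · intro h
    have hne : (Finset.univ.filter (fun j' => k j' ≤ x)).Nonempty := by
      rw [← Finset.card_pos]
      have : 0 < cnt k x := by omega
      exact this
    set S := Finset.univ.filter (fun j' => k j' ≤ x) with hS
    have hmax := S.max'_mem hne
    have hsub : S ⊆ Finset.Iic (S.max' hne) := fun a ha => Finset.mem_Iic.2 (S.le_max' a ha)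
    have hcard := Finset.card_le_card hsub
    rw [Fin.card_Iic] at hcard
    have hj : j ≤ S.max' hne := by
      have h3 : cnt k x ≤ (S.max' hne).val + 1 := hcard
      exact Fin.le_def.2 (by omega)
    exact le_trans (hk.monotone hj) ((Finset.mem_filter.1 hmax).2)

lemma cnt_mono {α : ℕ} (k : Fin α → ℝ) : Monotone (cnt k) := fun x y hxy =>
  Finset.card_le_card (Finset.monotone_filter_right _ (fun j _ hj => le_trans hj hxy))

lemma cnt_le {α : ℕ} (k : Fin α → ℝ) (x : ℝ) : cnt k x ≤ α := by
  have h := Finset.card_filter_le Finset.univ (fun j : Fin α => k j ≤ x)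
  simpa [cnt] using h

lemma phiF_pa {α : ℕ} {k : Fin α → ℝ} (hk : StrictMono k) : PiecewiseAnalytic (phiF k) := by
  refine ⟨α + 1, fun i => {x | cnt k x = i.val},
    fun i x => ∑ j : Fin α, (if (j : ℕ) < (i : ℕ) then x - k j else k j - x), ?_, ?_, ?_, ?_, ?_⟩
  · intro i
    constructor
    · rcases Nat.eq_zero_or_pos i.val with h0 | hpos
      · rcases Nat.eq_zero_or_pos α with hα0 | hαpos
        · subst hα0
          exact ⟨0, by simp [cnt, h0]⟩
        · refine ⟨k ⟨0, hαpos⟩ - 1, ?_⟩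
          have hemp : Finset.univ.filter (fun j => k j ≤ k ⟨0, hαpos⟩ - 1) = ∅ := by
            rw [Finset.filter_eq_empty_iff]
            intro j _
            have h1 : k ⟨0, hαpos⟩ ≤ k j := hk.monotone (by simp [Fin.le_def])
            intro hc
            linarith
          show cnt k _ = i.val
          rw [cnt, hemp, Finset.card_empty, h0]
      · obtain ⟨i', hi'⟩ : ∃ i', i.val = i' + 1 := ⟨i.val - 1, by omega⟩
        have hi'α : i' < α := by have := i.isLt; omega
        refine ⟨k ⟨i', hi'α⟩, ?_⟩
        show cnt k (k ⟨i', hi'α⟩) = i.val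
        have hfe : Finset.univ.filter (fun j => k j ≤ k ⟨i', hi'α⟩)
            = Finset.Iic ⟨i', hi'α⟩ := by
          ext j
          simp [hk.le_iff_le]
        rw [cnt, hfe, Fin.card_Iic, hi']
    · constructor
      intro x hx y hy z hz
      simp only [Set.mem_setOf_eq] at hx hy ⊢
      have h1 := cnt_mono k hz.1
      have h2 := cnt_mono k hz.2
      omega
  · intro i j hij
    rw [Set.disjoint_left]
    intro x hxi hxj
    simp only [Set.mem_setOf_eq] at hxi hxj
    exact hij (Fin.ext (by omega))
  · rw [Set.eq_univ_iff_forall]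
    intro x
    exact Set.mem_iUnion.2 ⟨⟨cnt k x, Nat.lt_succ_of_le (cnt_le k x)⟩, rfl⟩
  · intro i x
    apply Finset.analyticAt_fun_sum
    intro j _
    by_cases hj : (j : ℕ) < (i : ℕ)
    · simp only [if_pos hj]
      exact analyticAt_id.sub analyticAt_const
    · simp only [if_neg hj]
      exact analyticAt_const.sub analyticAt_id
  · intro i x hx
    simp only [Set.mem_setOf_eq] at hx
    unfold phiF
    apply Finset.sum_congr rfl
    intro j _
    by_cases hj : k j ≤ x
    · rw [if_pos (hx ▸ (cnt_key hk j x).1 hj), abs_of_nonneg (by linarith)]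
    · rw [if_neg (fun hlt => hj ((cnt_key hk j x).2 (hx ▸ hlt))),
        abs_of_nonpos (by linarith), neg_sub]

lemma bern (n : ℕ) : ∀ t : ℝ, 0 ≤ t → t ≤ 1 →
    (1 - t) ^ n ≤ 1 - (n : ℝ) * t + ((n : ℝ) * ((n : ℝ) - 1)) / 2 * t ^ 2 := by
  induction n with
  | zero => intro t h0 h1; simp
  | succ m ih =>
    intro t h0 h1
    have hb := ih t h0 h1
    have hnn : (0 : ℝ) ≤ 1 - t := by linarith
    have hc : (0 : ℝ) ≤ (m : ℝ) * ((m : ℝ) - 1) / 2 := by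
      rcases Nat.eq_zero_or_pos m with h | h
      · simp [h]
      · have : (1 : ℝ) ≤ (m : ℝ) := by exact_mod_cast h
        nlinarith
    have h2 : (1 - t) ^ (m + 1) ≤ (1 - (m : ℝ) * t + ((m : ℝ) * ((m : ℝ) - 1)) / 2 * t ^ 2) * (1 - t) := by
      rw [pow_succ]
      exact mul_le_mul_of_nonneg_right hb hnn
    have h3 : (0 : ℝ) ≤ (m : ℝ) * ((m : ℝ) - 1) / 2 * t ^ 3 := by positivity
    push_cast
    nlinarith [h2, h3]

lemma core (n : ℕ) (a b : ℝ) (hn : 2 ≤ n) (hb0 : 0 < b) (hba : b ≤ a)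
    (hnb : ((n : ℝ) - 1) * b ≤ a) :
    (1 / 2 : ℝ) * ((1 / a) * ((n : ℝ) * b)) ≤ ((a ^ n - (a - b) ^ n) * a) / (a ^ n * a) := by
  have ha : 0 < a := lt_of_lt_of_le hb0 hba
  set t := b / a with ht
  have h01 : 0 ≤ t := by positivity
  have h11 : t ≤ 1 := by rw [ht, div_le_one ha]; exact hba
  have hbt := bern n t h01 h11
  have hnt : ((n : ℝ) - 1) * t ≤ 1 := by
    rw [ht, mul_div_assoc', div_le_one ha]; exact hnb
  have hn1 : (2 : ℝ) ≤ (n : ℝ) := by exact_mod_cast hn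
  have key : (n : ℝ) * t ≤ 2 * (1 - (1 - t) ^ n) := by
    nlinarith [mul_nonneg (mul_nonneg (by linarith : (0:ℝ) ≤ (n:ℝ)) h01)
      (by linarith : (0:ℝ) ≤ 1 - ((n:ℝ) - 1) * t)]
  have hbeq : b = t * a := by rw [ht]; field_simp
  have habt : a - b = (1 - t) * a := by rw [hbeq]; ring
  have han : (0 : ℝ) < a ^ n := by positivity
  rw [habt, mul_pow,
    show (a ^ n - (1 - t) ^ n * a ^ n) * a = (1 - (1 - t) ^ n) * (a ^ n * a) by ring,
    mul_div_assoc, div_self (by positivity), mul_one]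
  rw [hbeq]
  have : (1 / 2 : ℝ) * ((1 / a) * ((n : ℝ) * (t * a))) = ((n : ℝ) * t) / 2 := by
    field_simp
  rw [this]
  linarith

abbrev Nn (n : ℕ) : ℕ → ℕ := fun l => match l with | 1 => n | _ => 1

abbrev Wdd (n : ℕ) : Fin 2 → ℕ := fun l => match l.val with | 0 => n | _ => 1

def tauF (n : ℕ) :
    (l : Fin 2) → (Fin (Nn n l.val) → ℝ) × (Fin (Wdd n l) → ℝ) → Fin (Nn n (l.val + 1)) → ℝ :=
  fun l => match l with
  | ⟨0, _⟩ => fun p i => p.2 i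
  | ⟨1, _⟩ => fun p _ => (∑ j, p.1 j) + p.2 ⟨0, Nat.one_pos⟩

def sigF (n : ℕ) (φ : ℝ → ℝ) : (l : Fin 2) → Fin (Nn n (l.val + 1)) → ℝ → ℝ :=
  fun l _ x => if l.val = 0 then φ x else x

def zF (n : ℕ) (φ : ℝ → ℝ) : (l : ℕ) → Params 2 (Wdd n) → Fin (Nn n l) → ℝ :=
  fun l => match l with
  | 0 => fun _ _ => 0
  | 1 => fun w i => φ (w ⟨0, Nat.two_pos⟩ i)
  | 2 => fun w _ => (∑ j, φ (w ⟨0, by omega⟩ j)) + w ⟨1, by omega⟩ ⟨0, Nat.one_pos⟩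
  | _ + 3 => fun _ _ => 0

noncomputable def yF (n : ℕ) (φ : ℝ → ℝ) :
    (l : Fin 2) → Params 2 (Wdd n) → Fin (Nn n (l.val + 1)) → ℝ :=
  fun l w => tauF n l (zF n φ l.val w, w l)

lemma zF_ndiff (n : ℕ) (φ : ℝ → ℝ) (w : Params 2 (Wdd n)) (j₀ : Fin n)
    (hj₀ : ¬ DifferentiableAt ℝ φ (w ⟨0, Nat.two_pos⟩ j₀)) :
    ¬ DifferentiableAt ℝ (zF n φ 2) w := by
  intro h
  have h0 : DifferentiableAt ℝ
      (fun w' : Params 2 (Wdd n) =>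
        (∑ j, φ (w' ⟨0, by omega⟩ j)) + w' ⟨1, by omega⟩ ⟨0, Nat.one_pos⟩) w :=
    (differentiableAt_pi.1 h) ⟨0, Nat.one_pos⟩
  set ι : ℝ → Params 2 (Wdd n) :=
    fun t l j => if l.val = 0 ∧ j.val = j₀.val then t else w l j with hι
  have hιd : DifferentiableAt ℝ ι (w ⟨0, Nat.two_pos⟩ j₀) := by
    apply differentiableAt_pi.2
    intro l
    apply differentiableAt_pi.2
    intro j
    by_cases hc : l.val = 0 ∧ j.val = j₀.val
    · simp only [hι, if_pos hc]
      exact differentiableAt_fun_id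
    · simp only [hι, if_neg hc]
      exact differentiableAt_const _
  have hι0 : ι (w ⟨0, Nat.two_pos⟩ j₀) = w := by
    funext l j
    simp only [hι]
    split_ifs with hc
    · obtain ⟨hl, hj⟩ := hc
      rcases l with ⟨lv, hlt⟩
      have hl' : lv = 0 := hl
      subst hl'
      exact congrArg _ (Fin.ext hj.symm)
    · rfl
  rw [← hι0] at h0
  have hcomp := DifferentiableAt.comp (𝕜 := ℝ) (w ⟨0, Nat.two_pos⟩ j₀) h0 hιd
  set C : ℝ := (∑ j ∈ Finset.univ.erase j₀, φ (w ⟨0, Nat.two_pos⟩ j))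
      + w ⟨1, by omega⟩ ⟨0, Nat.one_pos⟩ with hC
  have hkey : ((fun w' : Params 2 (Wdd n) =>
        (∑ j, φ (w' ⟨0, by omega⟩ j)) + w' ⟨1, by omega⟩ ⟨0, Nat.one_pos⟩) ∘ ι)
      = fun t => φ t + C := by
    funext t
    simp only [Function.comp_apply, hC]
    have h2 : ι t ⟨1, by omega⟩ ⟨0, Nat.one_pos⟩ = w ⟨1, by omega⟩ ⟨0, Nat.one_pos⟩ := by
      simp only [hι]
      exact if_neg (by simp)
    have h3 : (∑ j, φ (ι t ⟨0, by omega⟩ j))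
        = φ t + ∑ j ∈ Finset.univ.erase j₀, φ (w ⟨0, Nat.two_pos⟩ j) := by
      rw [← Finset.add_sum_erase _ _ (Finset.mem_univ (show Fin (Wdd n ⟨0, Nat.two_pos⟩) from j₀))]
      congr 1
      · congr 1
        simp [hι]
      · apply Finset.sum_congr rfl
        intro j hj
        congr 1
        simp only [hι]
        refine if_neg ?_
        rintro ⟨-, hjj⟩
        exact (Finset.ne_of_mem_erase hj) (Fin.ext hjj)
    rw [h2, h3]
    ring
  rw [hkey] at hcomp
  have hφ : DifferentiableAt ℝ φ (w ⟨0, Nat.two_pos⟩ j₀) := by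
    simpa using hcomp.sub_const C
  exact hj₀ hφ

lemma tauF_analytic (n : ℕ) : ∀ (l : Fin 2) p, AnalyticAt ℝ (tauF n l) p := by
  intro l p
  match l with
  | ⟨0, h⟩ =>
    exact (ContinuousLinearMap.snd ℝ (Fin (Nn n 0) → ℝ) (Fin (Wdd n ⟨0, h⟩) → ℝ)).analyticAt p
  | ⟨1, h⟩ =>
    apply AnalyticAt.pi
    intro _
    apply AnalyticAt.add
    · apply Finset.analyticAt_fun_sum
      intro j _
      exact ((ContinuousLinearMap.proj j).comp
        (ContinuousLinearMap.fst ℝ (Fin (Nn n 1) → ℝ) (Fin (Wdd n ⟨1, h⟩) → ℝ))).analyticAt p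
    · exact ((ContinuousLinearMap.proj ⟨0, Nat.one_pos⟩).comp
        (ContinuousLinearMap.snd ℝ (Fin (Nn n 1) → ℝ) (Fin (Wdd n ⟨1, h⟩) → ℝ))).analyticAt p

lemma tauF_bias (n : ℕ) : ∀ l, HasBiasParams (tauF n l) := by
  intro l
  match l with
  | ⟨0, h⟩ =>
    refine ⟨le_refl n, fun _ _ _ => 0, ?_⟩
    intro i x u
    rw [zero_add]
    exact congrArg u (Fin.ext (show i.val = n - n + i.val by omega))
  | ⟨1, h⟩ =>
    refine ⟨le_refl 1, fun _ x _ => ∑ j, x j, ?_⟩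
    intro i x u
    have hi : i.val < 1 := i.isLt
    exact congrArg (fun r => (∑ j, x j) + r) (congrArg u (Fin.ext (show (0:ℕ) = 1 - 1 + i.val by omega)))

lemma pa_id : PiecewiseAnalytic (fun x : ℝ => x) := by
  refine ⟨1, fun _ => Set.univ, fun _ x => x, fun i => ⟨⟨0, trivial⟩, Set.ordConnected_univ⟩,
    fun i j hij => absurd (Subsingleton.elim i j) hij, by simp [Set.iUnion_const],
    fun i x => analyticAt_id, fun i x _ => rfl⟩

lemma ndf_id : ndfSet (fun x : ℝ => x) = ∅ := by
  ext x
  simp only [ndfSet, Set.mem_setOf_eq, Set.mem_empty_iff_false, iff_false, not_not]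
  exact differentiableAt_fun_id

/-- Tight lower bound on the density of the non-differentiable set for
networks with bias parameters. -/
theorem stmt2 (M : Set ℝ) (hMfin : M.Finite) (hMne : M.Nonempty)
    (n α : ℕ) (hn : 2 ≤ n) (hα : 1 ≤ α)
    (hαM : (α : ℝ) ≤ (M.ncard : ℝ) / ((n : ℝ) - 1)) :
    ∃ (L : ℕ) (hL : 1 ≤ L) (N : ℕ → ℕ) (_ : ∀ l, 1 ≤ N l) (_ : N L = 1)
      (Wd : Fin L → ℕ) (_ : 1 ≤ ∑ l, Wd l)
      (τ : (l : Fin L) → (Fin (N l.val) → ℝ) × (Fin (Wd l) → ℝ) → Fin (N (l.val + 1)) → ℝ)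
      (_ : ∀ l p, AnalyticAt ℝ (τ l) p)
      (σ : (l : Fin L) → Fin (N (l.val + 1)) → ℝ → ℝ)
      (_ : ∀ l i, Continuous (σ l i)) (_ : ∀ l i, PiecewiseAnalytic (σ l i))
      (c : Fin (N 0) → ℝ)
      (z : (l : ℕ) → Params L Wd → Fin (N l) → ℝ)
      (y : (l : Fin L) → Params L Wd → Fin (N (l.val + 1)) → ℝ)
      (_ : ∀ w, z 0 w = c)
      (_ : ∀ l w, y l w = τ l (z l.val w, w l))
      (_ : ∀ l w i, z (l.val + 1) w i = σ l i (y l w i)),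
      (∀ l, HasBiasParams (τ l)) ∧
      (∑ l : Fin L, N (l.val + 1)) = n + 1 ∧
      (∀ i : Fin (N (0 + 1)), (ndfSet (σ ⟨0, by omega⟩ i)).ncard = α) ∧
      (1 / 2 : ℝ) * ((1 / (M.ncard : ℝ)) *
            ∑ l : Fin L, ∑ i : Fin (N (l.val + 1)), ((ndfSet (σ l i)).ncard : ℝ)) ≤
        (({w : Params L Wd | (∀ l' j, w l' j ∈ M) ∧ ¬DifferentiableAt ℝ (z L) w}).ncard : ℝ) /
          (({w : Params L Wd | ∀ l' j, w l' j ∈ M}).ncard : ℝ) := by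
  classical
  -- basic numeric facts
  have hm1 : 1 ≤ M.ncard := (Set.ncard_pos hMfin).2 hMne
  have hn1R : (1 : ℝ) ≤ (n : ℝ) - 1 := by
    have : (2 : ℝ) ≤ (n : ℝ) := by exact_mod_cast hn
    linarith
  have hαm : α ≤ M.ncard := by
    have h1 : (α : ℝ) ≤ (M.ncard : ℝ) :=
      le_trans hαM (div_le_self (by positivity) hn1R)
    exact_mod_cast h1
  -- choose the kink set
  set Mf : Finset ℝ := hMfin.toFinset with hMf
  have hMfcard : Mf.card = M.ncard := (Set.ncard_eq_toFinset_card _ _).symm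
  obtain ⟨Kf, hKM, hKcard⟩ := Finset.exists_subset_card_eq (show α ≤ Mf.card by omega)
  set k := Kf.orderEmbOfFin hKcard with hk
  set φ : ℝ → ℝ := phiF ⇑k with hφ
  have hndfφ : ndfSet φ = ↑Kf := by
    rw [hφ, ndf_phiF _ k.injective]
    exact Finset.range_orderEmbOfFin Kf hKcard
  refine ⟨2, one_le_two, Nn n, ?_, rfl, Wdd n, ?_, tauF n, tauF_analytic n, sigF n φ,
    ?_, ?_, fun _ => 0, zF n φ, yF n φ, fun w => rfl, fun l w => rfl, ?_,
    tauF_bias n, ?_, ?_, ?_⟩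
  · intro l
    match l with
    | 0 => exact le_refl 1
    | 1 => exact show 1 ≤ n by omega
    | (l + 2) => exact le_refl 1
  · rw [Fin.sum_univ_two]
    show 1 ≤ n + 1
    omega
  · intro l i
    match l with
    | ⟨0, h⟩ => exact phiF_cont ⇑k
    | ⟨1, h⟩ => exact continuous_id
  · intro l i
    match l with
    | ⟨0, h⟩ => exact phiF_pa k.strictMono
    | ⟨1, h⟩ => exact pa_id
  · intro l w i
    match l with
    | ⟨0, h⟩ => rfl
    | ⟨1, h⟩ => rfl
  · rw [Fin.sum_univ_two]; rfl
  · intro i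
    show (ndfSet φ).ncard = α
    rw [hndfφ, Set.ncard_coe_finset, hKcard]
  · -- the main density estimate
    have hsum : (∑ l : Fin 2, ∑ i : Fin (Nn n (l.val + 1)), ((ndfSet (sigF n φ l i)).ncard : ℝ))
        = (n : ℝ) * (α : ℝ) := by
      rw [Fin.sum_univ_two]
      have e0 : (∑ i : Fin (Nn n ((0 : Fin 2).val + 1)), ((ndfSet (sigF n φ 0 i)).ncard : ℝ))
          = (n : ℝ) * (α : ℝ) := by
        have h1 : ∀ i : Fin (Nn n ((0 : Fin 2).val + 1)),
            ((ndfSet (sigF n φ 0 i)).ncard : ℝ) = (α : ℝ) := by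
          intro i
          show ((ndfSet φ).ncard : ℝ) = (α : ℝ)
          rw [hndfφ, Set.ncard_coe_finset, hKcard]
        rw [Finset.sum_congr rfl fun i _ => h1 i, Finset.sum_const, Finset.card_univ]
        show (Fintype.card (Fin n)) • (α : ℝ) = (n : ℝ) * (α : ℝ)
        rw [Fintype.card_fin, nsmul_eq_mul]
      have e1 : (∑ i : Fin (Nn n ((1 : Fin 2).val + 1)), ((ndfSet (sigF n φ 1 i)).ncard : ℝ))
          = 0 := by
        have h1 : ∀ i : Fin (Nn n ((1 : Fin 2).val + 1)),
            ((ndfSet (sigF n φ 1 i)).ncard : ℝ) = 0 := by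
          intro i
          show ((ndfSet (fun x : ℝ => x)).ncard : ℝ) = 0
          rw [ndf_id]
          simp
        rw [Finset.sum_congr rfl fun i _ => h1 i, Finset.sum_const, smul_zero]
      rw [e0, e1, add_zero]
    rw [hsum]
    -- finite sets of parameters
    set ΩF : Finset (Params 2 (Wdd n)) :=
      Fintype.piFinset (fun l => Fintype.piFinset (fun _ : Fin (Wdd n l) => Mf)) with hΩF
    set GF : Finset (Params 2 (Wdd n)) :=
      Fintype.piFinset (fun l =>
        Fintype.piFinset (fun _ : Fin (Wdd n l) => if l.val = 0 then Mf \ Kf else Mf)) with hGF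
    have hΩset : {w : Params 2 (Wdd n) | ∀ l' j, w l' j ∈ M} = ↑ΩF := by
      ext w
      simp [hΩF, hMf, Fintype.mem_piFinset, hMfin.mem_toFinset]
    have hGsub : GF ⊆ ΩF := by
      apply Fintype.piFinset_subset
      intro l
      apply Fintype.piFinset_subset
      intro j
      split_ifs
      · exact Finset.sdiff_subset
      · exact subset_rfl
    have hΩcard : ΩF.card = Mf.card ^ n * Mf.card := by
      rw [hΩF, Fintype.card_piFinset, Fin.prod_univ_two]
      simp only [Fintype.card_piFinset, Finset.prod_const, Finset.card_univ, Fintype.card_fin]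
      rw [show Wdd n 0 = n from rfl, show Wdd n 1 = 1 from rfl, pow_one]
    have hGcard : GF.card = (Mf.card - α) ^ n * Mf.card := by
      rw [hGF, Fintype.card_piFinset, Fin.prod_univ_two]
      simp only [Fintype.card_piFinset, Finset.prod_const, Finset.card_univ, Fintype.card_fin]
      rw [if_pos (show ((0 : Fin 2) : ℕ) = 0 from rfl),
        if_neg (show ¬((1 : Fin 2) : ℕ) = 0 by simp)]
      rw [Finset.card_sdiff_of_subset hKM, hKcard,
        show Wdd n 0 = n from rfl, show Wdd n 1 = 1 from rfl, pow_one]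
    -- the bad set is contained in the non-differentiability set
    set D : Set (Params 2 (Wdd n)) :=
      {w | (∀ l' j, w l' j ∈ M) ∧ ¬DifferentiableAt ℝ (zF n φ 2) w} with hD
    have hDsub : D ⊆ ↑ΩF := by
      intro w hw
      rw [← hΩset]
      exact hw.1
    have hBD : ↑(ΩF \ GF) ⊆ D := by
      intro w hw
      simp only [Finset.coe_sdiff, Set.mem_diff, Finset.mem_coe] at hw
      obtain ⟨hwΩ, hwG⟩ := hw
      have hwM : ∀ l' j, w l' j ∈ M := by
        intro l' j
        exact hMfin.mem_toFinset.1 (Fintype.mem_piFinset.1 (Fintype.mem_piFinset.1 hwΩ l') j)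
      refine ⟨hwM, ?_⟩
      have hex : ∃ l, ∃ j, w l j ∉ (if (l : Fin 2).val = 0 then Mf \ Kf else Mf) := by
        by_contra hall
        push_neg at hall
        exact hwG (Fintype.mem_piFinset.2 fun l => Fintype.mem_piFinset.2 (hall l))
      obtain ⟨⟨lv, hlv⟩, j, hj⟩ := hex
      match lv, hlv, j, hj with
      | 0, hlv, j, hj =>
        have hmem : w ⟨0, hlv⟩ j ∈ Mf := hMfin.mem_toFinset.2 (hwM _ j)
        have hK : w ⟨0, hlv⟩ j ∈ Kf := by
          by_contra hKc
          exact hj (by simp only [if_pos rfl]; exact Finset.mem_sdiff.2 ⟨hmem, hKc⟩)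
        refine zF_ndiff n φ w j ?_
        have hmem2 : w ⟨0, by omega⟩ j ∈ ndfSet φ := by
          rw [hndfφ]
          exact hK
        exact hmem2
      | 1, hlv, j, hj =>
        have hmem : w ⟨1, hlv⟩ j ∈ Mf := hMfin.mem_toFinset.2 (hwM _ j)
        rw [if_neg (by simp)] at hj
        exact absurd hmem hj
    -- cardinality comparisons
    have hDfin : D.Finite := (ΩF.finite_toSet).subset hDsub
    have hcard1 : ((ΩF \ GF).card : ℝ) ≤ (D.ncard : ℝ) := by
      have h1 := Set.ncard_le_ncard hBD hDfin
      rw [Set.ncard_coe_finset] at h1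
      exact_mod_cast h1
    have hGle := Finset.card_le_card hGsub
    have hsdcard : (ΩF \ GF).card = ΩF.card - GF.card := Finset.card_sdiff_of_subset hGsub
    -- pass to the reals
    have hb0 : 0 < (α : ℝ) := by exact_mod_cast hα
    have hba : (α : ℝ) ≤ (M.ncard : ℝ) := by exact_mod_cast hαm
    have ha0 : 0 < (M.ncard : ℝ) := lt_of_lt_of_le hb0 hba
    have hnb : ((n : ℝ) - 1) * (α : ℝ) ≤ (M.ncard : ℝ) := by
      have h2 := (le_div_iff₀ (by linarith : (0 : ℝ) < (n : ℝ) - 1)).1 hαM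
      linarith
    have hcore := core n (M.ncard : ℝ) (α : ℝ) hn hb0 hba hnb
    have hMfR : ((Mf.card : ℕ) : ℝ) = (M.ncard : ℝ) := by rw [hMfcard]
    have hΩR : ((ΩF.card : ℕ) : ℝ) = (M.ncard : ℝ) ^ n * (M.ncard : ℝ) := by
      rw [hΩcard, Nat.cast_mul, Nat.cast_pow, hMfR]
    have hGR : ((GF.card : ℕ) : ℝ)
        = ((M.ncard : ℝ) - (α : ℝ)) ^ n * (M.ncard : ℝ) := by
      rw [hGcard, Nat.cast_mul, Nat.cast_pow, Nat.cast_sub (by omega : α ≤ Mf.card), hMfR]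
    have hsdR : (((ΩF \ GF).card : ℕ) : ℝ)
        = (M.ncard : ℝ) ^ n * (M.ncard : ℝ)
          - ((M.ncard : ℝ) - (α : ℝ)) ^ n * (M.ncard : ℝ) := by
      rw [hsdcard, Nat.cast_sub hGle, hΩR, hGR]
    rw [hΩset, Set.ncard_coe_finset, hΩR]
    calc (1 / 2 : ℝ) * (1 / (M.ncard : ℝ) * ((n : ℝ) * (α : ℝ)))
        ≤ (((M.ncard : ℝ) ^ n - ((M.ncard : ℝ) - (α : ℝ)) ^ n) * (M.ncard : ℝ))
            / ((M.ncard : ℝ) ^ n * (M.ncard : ℝ)) := hcore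
      _ = ((M.ncard : ℝ) ^ n * (M.ncard : ℝ)
            - ((M.ncard : ℝ) - (α : ℝ)) ^ n * (M.ncard : ℝ))
            / ((M.ncard : ℝ) ^ n * (M.ncard : ℝ)) := by ring_nf
      _ ≤ (D.ncard : ℝ) / ((M.ncard : ℝ) ^ n * (M.ncard : ℝ)) := by
          apply (div_le_div_iff_of_pos_right (by positivity)).2
          rw [← hsdR]
          exact hcard1
end

section
/- If the neural network z_L has bias parameters, then for every w ∈ ℝ^W the following are equivalent: (a) z_L is not differentiable at w; (b) there exist l ∈ [L] and i ∈ [N_l] such that y_{l,i}(w) ∈ ndf(σ_{l,i}) and the AD partial derivative ∂̂z_L/∂z_{l,i} at w is not the zero vector. -/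
open Filter Topology Set

section Helpers
open Asymptotics

lemma ptLip (f : ℝ → ℝ) (hc : Continuous f) (hpa : PiecewiseAnalytic f) (y : ℝ) :
    ∃ C : ℝ, ∀ᶠ x in 𝓝 y, |f x - f y| ≤ C * |x - y| := by
  obtain ⟨n, A, g, hA, hdisj, hcover, hg, hfg⟩ := hpa
  have hgC : ∀ j : Fin n, Continuous (g j) :=
    fun j => continuous_iff_continuousAt.2 fun x => (hg j x).continuousAt
  have hlip : ∀ j : Fin n, ∃ K : NNReal, ∃ t ∈ 𝓝 y, LipschitzOnWith K (g j) t := by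
    intro j
    exact ((hg j y).contDiffAt (n := 1)).exists_lipschitzOnWith
  choose K t ht hK using hlip
  have hbad : ∀ j, g j y ≠ f y → ∀ᶠ x in 𝓝 y, x ∉ A j := by
    intro j hj
    have hyc : y ∉ closure (A j) := by
      intro hyc
      have heq : EqOn (g j) f (A j) := fun x hx => (hfg j x hx).symm
      exact hj (heq.closure (hgC j) hc hyc)
    have h2 : ∀ᶠ x in 𝓝 y, x ∈ (closure (A j))ᶜ :=
      (isClosed_closure.isOpen_compl).mem_nhds hyc
    exact h2.mono fun x hx hxA => hx (subset_closure hxA)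
  have hbadall : ∀ᶠ x in 𝓝 y, ∀ j, g j y ≠ f y → x ∉ A j := by
    rw [eventually_all]
    intro j
    by_cases hj : g j y = f y
    · exact Eventually.of_forall fun x h => absurd hj h
    · exact (hbad j hj).mono fun x hx _ => hx
  have htall : ∀ᶠ x in 𝓝 y, ∀ j, x ∈ t j := by
    rw [eventually_all]; intro j; exact ht j
  refine ⟨(Finset.univ.sup K : NNReal), ?_⟩
  filter_upwards [hbadall, htall] with x hx hxt
  have hxU : x ∈ ⋃ i, A i := hcover ▸ mem_univ x
  obtain ⟨j, hj⟩ := mem_iUnion.1 hxU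
  have hgood : g j y = f y := by
    by_contra h
    exact hx j h hj
  have hyt : y ∈ t j := mem_of_mem_nhds (ht j)
  have := (hK j).dist_le_mul x (hxt j) y hyt
  rw [Real.dist_eq, Real.dist_eq] at this
  calc |f x - f y| = |g j x - g j y| := by rw [hfg j x hj, hgood]
    _ ≤ (K j : ℝ) * |x - y| := this
    _ ≤ (Finset.univ.sup K : NNReal) * |x - y| := by
        gcongr
        exact_mod_cast Finset.le_sup (Finset.mem_univ j)

lemma smul_const_littleO {α E : Type*} [NormedAddCommGroup E] [NormedSpace ℝ E]
    {F : Type*} [NormedAddCommGroup F]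
    {l : Filter α} {e : α → ℝ} {g : α → F} (h : e =o[l] g) (v : E) :
    (fun x => e x • v) =o[l] g := by
  rcases eq_or_ne v 0 with rfl | hv
  · simpa using (isLittleO_zero g l : (fun _ : α => (0:E)) =o[l] g)
  · rw [isLittleO_iff]
    intro c hc
    have hv' : 0 < ‖v‖ := norm_pos_iff.2 hv
    filter_upwards [isLittleO_iff.1 h (div_pos hc hv')] with x hx
    rw [norm_smul]
    calc ‖e x‖ * ‖v‖ ≤ (c / ‖v‖ * ‖g x‖) * ‖v‖ := by
          exact mul_le_mul_of_nonneg_right hx (norm_nonneg v)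
      _ = c * ‖g x‖ := by field_simp

lemma chain_key {n : ℕ} {E G : Type*} [NormedAddCommGroup E] [NormedSpace ℝ E]
    [NormedAddCommGroup G] [NormedSpace ℝ G]
    (σ : Fin n → ℝ → ℝ) (y d : Fin n → ℝ) (q : E)
    (hσc : ∀ j, ContinuousAt (σ j) (y j))
    (hlip : ∀ j, ∃ C : ℝ, ∀ᶠ x in 𝓝 (y j), |σ j x - σ j (y j)| ≤ C * |x - y j|)
    (F : (Fin n → ℝ) × E → G) (DF : ((Fin n → ℝ) × E) →L[ℝ] G)
    (hF : HasFDerivAt F DF ((fun j => σ j (y j)), q))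
    (hd : ∀ j, HasDerivAt (σ j) (d j) (y j) ∨ DF (Pi.single j 1, 0) = 0) :
    HasFDerivAt (fun p : (Fin n → ℝ) × E => F ((fun j => σ j (p.1 j)), p.2))
      (DF.comp ((diagCLM d).prodMap (ContinuousLinearMap.id ℝ E))) (y, q) := by
  rw [hasFDerivAt_iff_isLittleO_nhds_zero]
  set s : Fin n → ℝ := fun j => σ j (y j) with hs
  set u : (Fin n → ℝ) × E → (Fin n → ℝ) × E :=
    fun h => ((fun j => σ j (y j + h.1 j) - s j), h.2) with hu
  choose C hC using hlip
  set C0 : ℝ := (∑ j, |C j|) + 1 with hC0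
  have hC0pos : (0:ℝ) < C0 := by positivity
  have hCle : ∀ j, C j ≤ C0 := by
    intro j
    calc C j ≤ |C j| := le_abs_self _
      _ ≤ ∑ j', |C j'| := Finset.single_le_sum (f := fun j' => |C j'|) (fun _ _ => abs_nonneg _) (Finset.mem_univ j)
      _ ≤ C0 := by simp [hC0]
  have htendj : ∀ j, Tendsto (fun h : (Fin n → ℝ) × E => y j + h.1 j) (𝓝 0) (𝓝 (y j)) := by
    intro j
    have h1 : Tendsto (fun h : (Fin n → ℝ) × E => h.1 j) (𝓝 0) (𝓝 0) :=
      ((continuous_apply j).comp continuous_fst).tendsto' 0 0 (by simp)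
    simpa using tendsto_const_nhds.add h1
  have hev : ∀ᶠ h : (Fin n → ℝ) × E in 𝓝 0, ∀ j, |σ j (y j + h.1 j) - s j| ≤ C j * |h.1 j| := by
    rw [eventually_all]
    intro j
    have := (htendj j).eventually (hC j)
    refine this.mono fun h hh => ?_
    simpa using hh
  have habs : ∀ (h : (Fin n → ℝ) × E) (j : Fin n), |h.1 j| ≤ ‖h‖ := by
    intro h j
    calc |h.1 j| = ‖h.1 j‖ := (Real.norm_eq_abs _).symm
      _ ≤ ‖h.1‖ := norm_le_pi_norm _ j
      _ ≤ ‖h‖ := norm_fst_le h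
  have uO : u =O[𝓝 0] (fun h : (Fin n → ℝ) × E => h) := by
    refine IsBigO.of_bound C0 ?_
    filter_upwards [hev] with h hh
    rw [Prod.norm_def]
    refine max_le ?_ ?_
    · rw [pi_norm_le_iff_of_nonneg (by positivity)]
      intro j
      calc ‖σ j (y j + h.1 j) - s j‖ = |σ j (y j + h.1 j) - s j| := Real.norm_eq_abs _
        _ ≤ C j * |h.1 j| := hh j
        _ ≤ C0 * |h.1 j| := mul_le_mul_of_nonneg_right (hCle j) (abs_nonneg _)
        _ ≤ C0 * ‖h‖ := mul_le_mul_of_nonneg_left (habs h j) hC0pos.le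
    · calc ‖h.2‖ ≤ ‖h‖ := norm_snd_le h
        _ = 1 * ‖h‖ := (one_mul _).symm
        _ ≤ C0 * ‖h‖ := mul_le_mul_of_nonneg_right (by simp [hC0]; positivity) (norm_nonneg _)
  have utend : Tendsto u (𝓝 0) (𝓝 0) := by
    have h1 : Tendsto (fun h : (Fin n → ℝ) × E => (fun j => σ j (y j + h.1 j) - s j : Fin n → ℝ))
        (𝓝 0) (𝓝 0) := by
      rw [tendsto_pi_nhds]
      intro j
      have := ((hσc j).tendsto.comp (htendj j)).sub_const (s j)
      simpa [Function.comp, hs] using this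
    have h2 : Tendsto (fun h : (Fin n → ℝ) × E => h.2) (𝓝 0) (𝓝 0) :=
      continuous_snd.tendsto' 0 0 rfl
    exact h1.prodMk_nhds h2
  have hA : (fun h : (Fin n → ℝ) × E => F ((s, q) + u h) - F (s, q) - DF (u h))
      =o[𝓝 0] (fun h : (Fin n → ℝ) × E => h) := by
    have hF' := hasFDerivAt_iff_isLittleO_nhds_zero.1 hF
    exact (hF'.comp_tendsto utend).trans_isBigO uO
  set ej : Fin n → (Fin n → ℝ) × E → ℝ :=
    fun j h => σ j (y j + h.1 j) - s j - d j * h.1 j with hej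
  have hR : (fun h : (Fin n → ℝ) × E => DF (u h) -
      DF (((diagCLM d).prodMap (ContinuousLinearMap.id ℝ E)) h))
      =o[𝓝 0] (fun h : (Fin n → ℝ) × E => h) := by
    have hsum : ∀ h : (Fin n → ℝ) × E, DF (u h) -
        DF (((diagCLM d).prodMap (ContinuousLinearMap.id ℝ E)) h)
        = ∑ j, ej j h • DF (Pi.single j 1, 0) := by
      intro h
      rw [← map_sub]
      have pm_apply : ((diagCLM d).prodMap (ContinuousLinearMap.id ℝ E)) h
          = ((fun j => d j * h.1 j : Fin n → ℝ), h.2) := rfl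
      have harg : u h - ((diagCLM d).prodMap (ContinuousLinearMap.id ℝ E)) h
          = ((fun j => ej j h : Fin n → ℝ), (0:E)) := by
        rw [pm_apply]
        refine Prod.ext ?_ ?_
        · funext j
          show (σ j (y j + h.1 j) - s j) - d j * h.1 j = ej j h
          simp [hej]
        · show h.2 - h.2 = 0
          simp
      rw [harg]
      have hdec : ((fun j => ej j h : Fin n → ℝ), (0:E)) =
          ∑ j, ((ContinuousLinearMap.inl ℝ (Fin n → ℝ) E) (Pi.single j (ej j h))) := by
        rw [← map_sum, Finset.univ_sum_single]
        simp
      rw [hdec, map_sum]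
      refine Finset.sum_congr rfl fun j _ => ?_
      have : (Pi.single j (ej j h) : Fin n → ℝ) = ej j h • (Pi.single j 1 : Fin n → ℝ) := by
        rw [← Pi.single_smul]
        simp
      rw [this, map_smul, map_smul, ContinuousLinearMap.inl_apply]
    have : ∀ j : Fin n, (fun h : (Fin n → ℝ) × E => ej j h • DF (Pi.single j 1, 0))
        =o[𝓝 0] (fun h : (Fin n → ℝ) × E => h) := by
      intro j
      rcases hd j with hder | h0
      · have hder' := hasDerivAt_iff_isLittleO_nhds_zero.1 hder
        have htj : Tendsto (fun h : (Fin n → ℝ) × E => h.1 j) (𝓝 0) (𝓝 0) :=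
          ((continuous_apply j).comp continuous_fst).tendsto' 0 0 (by simp)
        have hcomp := hder'.comp_tendsto htj
        have hOj : (fun h : (Fin n → ℝ) × E => h.1 j) =O[𝓝 0]
            (fun h : (Fin n → ℝ) × E => h) := by
          refine IsBigO.of_bound 1 (Eventually.of_forall fun h => ?_)
          rw [one_mul, Real.norm_eq_abs]
          exact habs h j
        have hej' : (fun h : (Fin n → ℝ) × E => ej j h) =o[𝓝 0]
            (fun h : (Fin n → ℝ) × E => h) := by
          refine (IsLittleO.congr' (hcomp.trans_isBigO hOj) ?_ (by rfl))
          exact Eventually.of_forall fun h => by simp [hej, Function.comp]; ring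
        exact smul_const_littleO hej' _
      · simp only [h0, smul_zero]
        exact isLittleO_zero _ _
    have := IsLittleO.sum (fun j (_ : j ∈ Finset.univ) => this j)
    refine IsLittleO.congr' this (Eventually.of_forall fun h => by simp only [Finset.sum_apply]; exact (hsum h).symm) (by rfl)
  have hfinal := hA.add hR
  refine IsLittleO.congr' hfinal (Eventually.of_forall fun h => ?_) (by rfl)
  simp only [ContinuousLinearMap.comp_apply]
  have harg2 : (s, q) + u h =
      ((fun j => σ j (((y, q) + h).1 j) : Fin n → ℝ), ((y, q) + h).2) := by
    refine Prod.ext (funext fun j => ?_) rfl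
    show s j + (σ j (y j + h.1 j) - s j) = σ j (y j + h.1 j)
    ring
  rw [harg2]
  abel

lemma scalar_nondiff (σ : ℝ → ℝ) (y : ℝ)
    (hσc : ContinuousAt σ y)
    (hlip : ∃ C : ℝ, ∀ᶠ x in 𝓝 y, |σ x - σ y| ≤ C * |x - y|)
    (hnd : ¬DifferentiableAt ℝ σ y)
    (F : ℝ × ℝ → ℝ) (DF : (ℝ × ℝ) →L[ℝ] ℝ) (hF : HasFDerivAt F DF (σ y, 0))
    (ha : DF (1, 0) ≠ 0) :
    ¬DifferentiableAt ℝ (fun t => F (σ (y + t), t)) 0 := by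
  intro hd
  apply hnd
  obtain ⟨C, hC⟩ := hlip
  set ψ : ℝ → ℝ := fun t => F (σ (y + t), t) with hψdef
  have hψ : HasDerivAt ψ (deriv ψ 0) 0 := hd.hasDerivAt
  set b := deriv ψ 0 with hb
  set a := DF (1, 0) with hadef
  set cc := DF (0, 1) with hcc
  set u : ℝ → ℝ × ℝ := fun t => (σ (y + t) - σ y, t) with hu
  have htend0 : Tendsto (fun t : ℝ => y + t) (𝓝 0) (𝓝 y) := by
    simpa using tendsto_const_nhds.add (tendsto_id (x := 𝓝 (0:ℝ)))
  have uO : u =O[𝓝 0] (fun t : ℝ => t) := by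
    refine IsBigO.of_bound (|C| + 1) ?_
    filter_upwards [htend0.eventually hC] with t ht
    rw [Prod.norm_def]
    refine max_le ?_ ?_
    · calc ‖σ (y + t) - σ y‖ = |σ (y + t) - σ y| := Real.norm_eq_abs _
        _ ≤ C * |y + t - y| := ht
        _ = C * |t| := by ring_nf
        _ ≤ (|C| + 1) * |t| := by
            have : C ≤ |C| + 1 := le_trans (le_abs_self C) (by linarith)
            exact mul_le_mul_of_nonneg_right this (abs_nonneg _)
        _ = (|C| + 1) * ‖t‖ := by rw [Real.norm_eq_abs]
    · calc ‖t‖ = 1 * ‖t‖ := (one_mul _).symm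
        _ ≤ (|C| + 1) * ‖t‖ := by
            have : (0:ℝ) ≤ |C| := abs_nonneg _
            exact mul_le_mul_of_nonneg_right (by linarith) (norm_nonneg _)
  have utend : Tendsto u (𝓝 0) (𝓝 0) := by
    have h1 : Tendsto (fun t : ℝ => σ (y + t) - σ y) (𝓝 0) (𝓝 0) := by
      have := (hσc.tendsto.comp htend0).sub_const (σ y)
      simpa [Function.comp] using this
    exact h1.prodMk_nhds (continuous_id.tendsto' 0 0 rfl)
  have hE1 : (fun t => F ((σ y, 0) + u t) - F (σ y, 0) - DF (u t)) =o[𝓝 0] (fun t : ℝ => t) :=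
    ((hasFDerivAt_iff_isLittleO_nhds_zero.1 hF).comp_tendsto utend).trans_isBigO uO
  have hE2 : (fun t => ψ t - ψ 0 - t • b) =o[𝓝 0] (fun t : ℝ => t) := by
    have := hasDerivAt_iff_isLittleO_nhds_zero.1 hψ
    simpa using this
  have key : (fun t => t • b - DF (u t)) =o[𝓝 0] (fun t : ℝ => t) := by
    have hsub := hE1.sub hE2
    refine hsub.congr' (Eventually.of_forall fun t => ?_) (by rfl)
    have h1 : (σ y, (0:ℝ)) + u t = (σ (y + t), t) := by
      refine Prod.ext ?_ ?_
      · show σ y + (σ (y + t) - σ y) = σ (y + t); ring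
      · show 0 + t = t; ring
    have h2 : ψ 0 = F (σ y, 0) := by rw [hψdef]; simp
    show F ((σ y, 0) + u t) - F (σ y, 0) - DF (u t) - (ψ t - ψ 0 - t • b)
        = t • b - DF (u t)
    rw [h1, ← h2]
    show ψ t - ψ 0 - DF (u t) - (ψ t - ψ 0 - t • b) = t • b - DF (u t)
    ring
  have hDFu : ∀ t, DF (u t) = (σ (y + t) - σ y) * a + t * cc := by
    intro t
    have h3 : u t = (σ (y + t) - σ y) • ((1:ℝ), (0:ℝ)) + t • ((0:ℝ), (1:ℝ)) := by
      refine Prod.ext ?_ ?_ <;> simp [hu]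
    rw [h3, map_add, map_smul, map_smul, smul_eq_mul, smul_eq_mul, hadef, hcc]
  have key2 : (fun t => t * b - ((σ (y + t) - σ y) * a + t * cc)) =o[𝓝 0] (fun t : ℝ => t) := by
    refine key.congr' (Eventually.of_forall fun t => ?_) (by rfl)
    show t • b - DF (u t) = t * b - ((σ (y + t) - σ y) * a + t * cc)
    rw [hDFu, smul_eq_mul]
  have key3 : (fun t : ℝ => σ (y + t) - σ y - t • ((b - cc)/a)) =o[𝓝 0] (fun t : ℝ => t) := by
    have hk := (key2.const_smul_left a⁻¹).neg_left
    refine hk.congr' (Eventually.of_forall fun t => ?_) (by rfl)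
    show -(a⁻¹ • (t * b - ((σ (y + t) - σ y) * a + t * cc)))
        = σ (y + t) - σ y - t • ((b - cc)/a)
    rw [smul_eq_mul, smul_eq_mul]
    field_simp
    ring
  exact (hasDerivAt_iff_isLittleO_nhds_zero.2 (by simpa using key3)).differentiableAt

end Helpers

/-- For a network with bias parameters, non-differentiability at `w` is
equivalent to some pre-activation value hitting a non-differentiable point of its activation
function while the corresponding AD partial derivative `∂̂z_L/∂z_{l,i}` is non-zero. -/
theorem stmt3
    (L : ℕ) (hL : 1 ≤ L)
    (N : ℕ → ℕ) (hN : ∀ l, 1 ≤ N l)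
    (Wd : Fin L → ℕ) (hW : 1 ≤ ∑ l, Wd l)
    (τ : (l : Fin L) → (Fin (N l.val) → ℝ) × (Fin (Wd l) → ℝ) → Fin (N (l.val + 1)) → ℝ)
    (hτ : ∀ l p, AnalyticAt ℝ (τ l) p)
    (σ : (l : Fin L) → Fin (N (l.val + 1)) → ℝ → ℝ)
    (hσc : ∀ l i, Continuous (σ l i))
    (hσpa : ∀ l i, PiecewiseAnalytic (σ l i))
    (c : Fin (N 0) → ℝ)
    (z : (l : ℕ) → Params L Wd → Fin (N l) → ℝ)
    (y : (l : Fin L) → Params L Wd → Fin (N (l.val + 1)) → ℝ)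
    (hz0 : ∀ w, z 0 w = c)
    (hy : ∀ l w, y l w = τ l (z l.val w, w l))
    (hz : ∀ l w i, z (l.val + 1) w i = σ l i (y l w i))
    (dσ : (l : Fin L) → Fin (N (l.val + 1)) → ℝ → ℝ)
    (hdσ : ∀ l i, IsExtendedDeriv (σ l i) (dσ l i))
    (B : (l : ℕ) → Params L Wd → ((Fin (N l) → ℝ) →L[ℝ] (Fin (N L) → ℝ)))
    (hBL : ∀ w, B L w = ContinuousLinearMap.id ℝ (Fin (N L) → ℝ))
    (hBstep : ∀ (l : Fin L) (w : Params L Wd),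
      B l.val w =
        (B (l.val + 1) w).comp
          ((diagCLM fun i => dσ l i (y l w i)).comp
            ((fderiv ℝ (τ l) (z l.val w, w l)).comp
              (ContinuousLinearMap.inl ℝ (Fin (N l.val) → ℝ) (Fin (Wd l) → ℝ)))))
    (hbias : ∀ l, HasBiasParams (τ l)) :
    ∀ w : Params L Wd,
      ¬DifferentiableAt ℝ (z L) w ↔
        ∃ (l : Fin L) (i : Fin (N (l.val + 1))),
          y l w i ∈ ndfSet (σ l i) ∧ (B (l.val + 1) w) (Pi.single i 1) ≠ 0 := by
  classical
  intro w
  -- main downward induction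
  have main : ∀ (m k : ℕ), k + m = L →
      (∀ (l' : Fin L), k ≤ l'.val → ∀ j, DifferentiableAt ℝ (σ l' j) (y l' w j) ∨
        B (l'.val + 1) w (Pi.single j 1) = 0) →
      ∃ (T : (Fin (N k) → ℝ) × Params L Wd → Fin (N L) → ℝ)
        (D : ((Fin (N k) → ℝ) × Params L Wd) →L[ℝ] (Fin (N L) → ℝ)),
        (∀ w', z L w' = T (z k w', w')) ∧ HasFDerivAt T D (z k w, w) ∧
        D.comp (ContinuousLinearMap.inl ℝ (Fin (N k) → ℝ) (Params L Wd)) = B k w := by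
    intro m
    induction m with
    | zero =>
      intro k hk _
      have hkL : k = L := by omega
      subst hkL
      refine ⟨fun p => p.1, ContinuousLinearMap.fst ℝ _ _, fun w' => rfl, hasFDerivAt_fst, ?_⟩
      rw [hBL w]
      rfl
    | succ m ih =>
      intro k hk H
      have hkL : k < L := by omega
      set lF : Fin L := ⟨k, hkL⟩ with hlF
      obtain ⟨T', D', hT'z, hT'd, hD'inl⟩ := ih (k + 1) (by omega)
        (fun l' hl' j => H l' (by omega) j)
      have e1 : ∀ v, D' (v, 0) = B (k + 1) w v := by
        intro v
        rw [← hD'inl]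
        rfl
      -- derivative of τ at the point
      have hτd : HasFDerivAt (τ lF) (fderiv ℝ (τ lF) (z k w, w lF)) (z k w, w lF) :=
        ((hτ lF (z k w, w lF)).differentiableAt).hasFDerivAt
      set J : ((Fin (N k) → ℝ) × Params L Wd) →L[ℝ]
          ((Fin (N k) → ℝ) × (Fin (Wd lF) → ℝ)) :=
        (ContinuousLinearMap.fst ℝ _ _).prod
          ((ContinuousLinearMap.proj lF).comp (ContinuousLinearMap.snd ℝ _ _)) with hJ
      have hJd : HasFDerivAt
          (fun p : (Fin (N k) → ℝ) × Params L Wd => ((p.1, p.2 lF) :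
            (Fin (N k) → ℝ) × (Fin (Wd lF) → ℝ))) J (z k w, w) := J.hasFDerivAt
      have hτc : HasFDerivAt
          (fun p : (Fin (N k) → ℝ) × Params L Wd => τ lF (p.1, p.2 lF))
          ((fderiv ℝ (τ lF) (z k w, w lF)).comp J) (z k w, w) :=
        HasFDerivAt.comp _ hτd hJd
      have hΨ : HasFDerivAt
          (fun p : (Fin (N k) → ℝ) × Params L Wd => ((τ lF (p.1, p.2 lF), p.2) :
            (Fin (N (k+1)) → ℝ) × Params L Wd))
          (((fderiv ℝ (τ lF) (z k w, w lF)).comp J).prod (ContinuousLinearMap.snd ℝ _ _))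
          (z k w, w) :=
        HasFDerivAt.prodMk hτc hasFDerivAt_snd
      -- the chain step over σ
      have hT'd2 : HasFDerivAt T' D' ((fun j => σ lF j (y lF w j)), w) := by
        have hzz : z (k + 1) w = fun j => σ lF j (y lF w j) := funext fun j => hz lF w j
        rw [← hzz]
        exact hT'd
      have hd : ∀ j, HasDerivAt (σ lF j) (dσ lF j (y lF w j)) (y lF w j) ∨
          D' (Pi.single j 1, 0) = 0 := by
        intro j
        rcases H lF le_rfl j with hD | h0
        · left
          have := hD.hasDerivAt
          rwa [← hdσ lF j _ hD] at this
        · right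
          rw [e1]
          exact h0
      have Hck := chain_key (σ lF) (y lF w) (fun j => dσ lF j (y lF w j)) w
        (fun j => (hσc lF j).continuousAt)
        (fun j => ptLip _ (hσc lF j) (hσpa lF j) _)
        T' D' hT'd2 hd
      -- rewrite the point of Hck
      have hyw : y lF w = τ lF (z k w, w lF) := hy lF w
      have Hck' : HasFDerivAt
          (fun p : (Fin (N (k+1)) → ℝ) × Params L Wd => T' ((fun j => σ lF j (p.1 j)), p.2))
          (D'.comp ((diagCLM fun j => dσ lF j (y lF w j)).prodMap
            (ContinuousLinearMap.id ℝ (Params L Wd))))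
          (τ lF (z k w, w lF), w) := by
        rw [← hyw]
        exact Hck
      have hTfull := HasFDerivAt.comp (x := ((z k w, w) : (Fin (N k) → ℝ) × Params L Wd))
        Hck' hΨ
      refine ⟨_, _, ?_, hTfull, ?_⟩
      · intro w'
        have hzz' : (fun j => σ lF j (τ lF (z k w', w' lF) j)) = z (k+1) w' := by
          funext j
          rw [← hy lF w']
          exact (hz lF w' j).symm
        calc z L w' = T' (z (k+1) w', w') := hT'z w'
          _ = _ := by rw [← hzz']; rfl
      · refine ContinuousLinearMap.ext fun x => ?_
        have hB : B k w =
            (B (k + 1) w).comp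
              ((diagCLM fun i => dσ lF i (y lF w i)).comp
                ((fderiv ℝ (τ lF) (z k w, w lF)).comp
                  (ContinuousLinearMap.inl ℝ (Fin (N k) → ℝ) (Fin (Wd lF) → ℝ)))) :=
          hBstep lF w
        rw [hB]
        show D' ((diagCLM fun i => dσ lF i (y lF w i))
            ((fderiv ℝ (τ lF) (z k w, w lF)) (J (x, 0))), 0) =
          B (k + 1) w ((diagCLM fun i => dσ lF i (y lF w i))
            ((fderiv ℝ (τ lF) (z k w, w lF)) (x, 0)))
        rw [e1]
        rfl
      done
  constructor
  · -- not differentiable implies witness exists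
    intro hnd
    by_contra hcon
    push_neg at hcon
    have H : ∀ (l' : Fin L), 0 ≤ l'.val → ∀ j, DifferentiableAt ℝ (σ l' j) (y l' w j) ∨
        B (l'.val + 1) w (Pi.single j 1) = 0 := by
      intro l' _ j
      by_cases hD : DifferentiableAt ℝ (σ l' j) (y l' w j)
      · exact Or.inl hD
      · exact Or.inr (hcon l' j hD)
    obtain ⟨T, D, hTz, hTd, _⟩ := main L 0 (by omega) H
    apply hnd
    have hzeq : z L = fun w' => T (c, w') := funext fun w' => by rw [hTz w', hz0 w']
    rw [hzeq]
    rw [hz0 w] at hTd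
    exact ((hTd.comp w (HasFDerivAt.prodMk (hasFDerivAt_const c w) (hasFDerivAt_id w)))).differentiableAt
  · -- witness implies not differentiable
    rintro ⟨l0, i0, hnd0, hB0⟩ hdiff
    set s : Finset (Fin L) := Finset.univ.filter
      (fun l' => ∃ i', ¬DifferentiableAt ℝ (σ l' i') (y l' w i') ∧
        B (l'.val + 1) w (Pi.single i' 1) ≠ 0) with hsdef
    have hne : s.Nonempty :=
      ⟨l0, Finset.mem_filter.2 ⟨Finset.mem_univ _, ⟨i0, hnd0, hB0⟩⟩⟩
    set lm : Fin L := s.max' hne with hlm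
    obtain ⟨iv, hndiv, hBiv⟩ := (Finset.mem_filter.1 (s.max'_mem hne)).2
    have H : ∀ (l' : Fin L), lm.val + 1 ≤ l'.val → ∀ j,
        DifferentiableAt ℝ (σ l' j) (y l' w j) ∨ B (l'.val + 1) w (Pi.single j 1) = 0 := by
      intro l' hl' j
      by_cases hD : DifferentiableAt ℝ (σ l' j) (y l' w j)
      · exact Or.inl hD
      by_cases hB : B (l'.val + 1) w (Pi.single j 1) = 0
      · exact Or.inr hB
      exfalso
      have hmem : l' ∈ s := Finset.mem_filter.2 ⟨Finset.mem_univ _, ⟨j, hD, hB⟩⟩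
      have := s.le_max' l' hmem
      rw [← hlm] at this
      have : l'.val ≤ lm.val := this
      omega
    obtain ⟨T, D, hTz, hTd, hDinl⟩ := main (L - (lm.val + 1)) (lm.val + 1) (by omega) H
    have e1 : ∀ v, D (v, 0) = B (lm.val + 1) w v := by
      intro v
      rw [← hDinl]
      rfl
    -- bias parameters of layer lm
    obtain ⟨hkb, fb, hfb⟩ := hbias lm
    have hivlt := iv.isLt
    set biasIdx : Fin (N (lm.val + 1)) → Fin (Wd lm) :=
      fun j => ⟨Wd lm - N (lm.val + 1) + j.val, by have := j.isLt; omega⟩ with hbi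
    set e : Params L Wd := Function.update (0 : Params L Wd) lm
      (fun b => if b = biasIdx iv then (1:ℝ) else 0) with he
    set wt : ℝ → Params L Wd := fun t => w + t • e with hwt
    have F1 : ∀ t (l' : Fin L), l' ≠ lm → wt t l' = w l' := by
      intro t l' hne'
      show w l' + t • e l' = w l'
      rw [he, Function.update_of_ne hne']
      show w l' + t • (0 : Fin (Wd l') → ℝ) = w l'
      rw [smul_zero, add_zero]
    have F2 : ∀ t, wt t lm = fun bb => w lm bb + t * (if bb = biasIdx iv then 1 else 0) := by
      intro t
      funext bb
      show w lm bb + (t • e lm) bb = _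
      rw [he, Function.update_self]
      show w lm bb + t * (if bb = biasIdx iv then 1 else 0) = _
      rfl
    have F3 : ∀ t, ∀ k' : ℕ, k' ≤ lm.val → z k' (wt t) = z k' w := by
      intro t k'
      induction k' with
      | zero => intro _; rw [hz0, hz0]
      | succ k' ih =>
        intro hk'
        have hk'L : k' < L := by have := lm.isLt; omega
        set prev : Fin L := ⟨k', hk'L⟩ with hprev
        have hprev_ne : prev ≠ lm := by
          intro hcontra
          have : k' = lm.val := by rw [← hcontra]
          omega
        funext j
        have h1 : z (k' + 1) (wt t) j = σ prev j (y prev (wt t) j) := hz prev (wt t) j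
        have h2 : z (k' + 1) w j = σ prev j (y prev w j) := hz prev w j
        rw [h1, h2]
        have h3 : y prev (wt t) = y prev w := by
          have ha1 : y prev (wt t) = τ prev (z k' (wt t), wt t prev) := hy prev (wt t)
          have ha2 : y prev w = τ prev (z k' w, w prev) := hy prev w
          rw [ha1, ha2, ih (by omega), F1 t prev hprev_ne]
        rw [h3]
    have F4 : ∀ t j, y lm (wt t) j = y lm w j + (if j = iv then t else 0) := by
      intro t j
      have ha1 : y lm (wt t) = τ lm (z lm.val (wt t), wt t lm) := hy lm (wt t)
      have ha2 : y lm w = τ lm (z lm.val w, w lm) := hy lm w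
      rw [ha1, ha2, F3 t lm.val le_rfl]
      rw [hfb j (z lm.val w) (wt t lm), hfb j (z lm.val w) (w lm)]
      have hcast : ∀ j' : Fin (Wd lm - N (lm.val + 1)),
          wt t lm (Fin.castLE (Nat.sub_le (Wd lm) (N (lm.val + 1))) j') =
          w lm (Fin.castLE (Nat.sub_le (Wd lm) (N (lm.val + 1))) j') := by
        intro j'
        rw [F2 t]
        have hne2 : (Fin.castLE (Nat.sub_le (Wd lm) (N (lm.val + 1))) j') ≠ biasIdx iv := by
          intro hcontra
          have := congrArg Fin.val hcontra
          simp [hbi] at this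
          have := j'.isLt
          omega
        simp [hne2]
      have hbterm : wt t lm ⟨Wd lm - N (lm.val + 1) + j.val, by have := j.isLt; omega⟩ =
          w lm ⟨Wd lm - N (lm.val + 1) + j.val, by have := j.isLt; omega⟩ +
            (if j = iv then t else 0) := by
        rw [F2 t]
        by_cases hj : j = iv
        · subst hj
          have : (⟨Wd lm - N (lm.val + 1) + j.val, by have := j.isLt; omega⟩ : Fin (Wd lm)) =
              biasIdx j := rfl
          simp [this]
        · have : (⟨Wd lm - N (lm.val + 1) + j.val, by have := j.isLt; omega⟩ : Fin (Wd lm)) ≠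
              biasIdx iv := by
            intro hcontra
            have h5 := congrArg Fin.val hcontra
            simp [hbi] at h5
            exact hj (Fin.ext h5)
          simp [this, hj]
      have hfuncongr : (fun j' => wt t lm (Fin.castLE (Nat.sub_le (Wd lm) (N (lm.val + 1))) j'))
          = (fun j' => w lm (Fin.castLE (Nat.sub_le (Wd lm) (N (lm.val + 1))) j')) :=
        funext hcast
      rw [hfuncongr, hbterm]
      ring
    have F5 : ∀ t, z (lm.val + 1) (wt t) =
        fun j => if j = iv then σ lm iv (y lm w iv + t) else z (lm.val + 1) w j := by
      intro t
      funext j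
      have h1 : z (lm.val + 1) (wt t) j = σ lm j (y lm (wt t) j) := hz lm (wt t) j
      rw [h1, F4]
      by_cases hj : j = iv
      · subst hj
        simp
      · simp only [hj, if_false, add_zero]
        exact (hz lm w j).symm
    -- pick nonzero output coordinate
    obtain ⟨kc, hkc⟩ : ∃ kc, B (lm.val + 1) w (Pi.single iv 1) kc ≠ 0 := by
      by_contra hcon2
      push_neg at hcon2
      exact hBiv (funext hcon2)
    -- the affine inner map
    set v1 : Fin (N (lm.val + 1)) → ℝ := Pi.single iv 1 with hv1
    set a0 : Fin (N (lm.val + 1)) → ℝ :=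
      fun j => if j = iv then 0 else z (lm.val + 1) w j with ha0
    set LΦ : (ℝ × ℝ) →L[ℝ] ((Fin (N (lm.val + 1)) → ℝ) × Params L Wd) :=
      ((ContinuousLinearMap.fst ℝ ℝ ℝ).smulRight v1).prod
        ((ContinuousLinearMap.snd ℝ ℝ ℝ).smulRight e) with hLΦ
    set Φf : ℝ × ℝ → (Fin (N (lm.val + 1)) → ℝ) × Params L Wd :=
      fun p => ((fun j => if j = iv then p.1 else z (lm.val + 1) w j), w + p.2 • e) with hΦf
    have hΦd : ∀ p₀, HasFDerivAt Φf LΦ p₀ := by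
      intro p₀
      have heq : Φf = fun p => (a0, w) + LΦ p := by
        funext p
        refine Prod.ext ?_ rfl
        funext j
        show (if j = iv then p.1 else z (lm.val + 1) w j) = a0 j + p.1 • v1 j
        by_cases hj : j = iv
        · subst hj
          simp [ha0, hv1]
        · simp [ha0, hv1, hj, Pi.single_eq_of_ne hj]
      rw [heq]
      exact LΦ.hasFDerivAt.const_add (a0, w)
    have hΦpt : Φf (σ lm iv (y lm w iv), 0) = (z (lm.val + 1) w, w) := by
      refine Prod.ext ?_ ?_
      · funext j
        show (if j = iv then σ lm iv (y lm w iv) else z (lm.val + 1) w j) = z (lm.val + 1) w j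
        by_cases hj : j = iv
        · subst hj
          simp
          exact (hz lm w j).symm
        · simp [hj]
      · show w + (0:ℝ) • e = w
        rw [zero_smul, add_zero]
    have hTd' : HasFDerivAt T D (Φf (σ lm iv (y lm w iv), 0)) := by
      rw [hΦpt]
      exact hTd
    have hFsc : HasFDerivAt (fun p => T (Φf p)) (D.comp LΦ) (σ lm iv (y lm w iv), 0) :=
      HasFDerivAt.comp _ hTd' (hΦd _)
    have hFk : HasFDerivAt (fun p => T (Φf p) kc)
        ((ContinuousLinearMap.proj kc).comp (D.comp LΦ)) (σ lm iv (y lm w iv), 0) :=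
      HasFDerivAt.comp _
        ((ContinuousLinearMap.proj kc : (Fin (N L) → ℝ) →L[ℝ] ℝ).hasFDerivAt) hFsc
    have haa : ((ContinuousLinearMap.proj kc).comp (D.comp LΦ)) ((1:ℝ), (0:ℝ)) ≠ 0 := by
      have hL1 : LΦ ((1:ℝ), (0:ℝ)) = (v1, (0 : Params L Wd)) := by
        refine Prod.ext ?_ ?_
        · show (1:ℝ) • v1 = v1
          rw [one_smul]
        · show (0:ℝ) • e = 0
          rw [zero_smul]
      show ((D.comp LΦ) ((1:ℝ), (0:ℝ))) kc ≠ 0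
      have : (D.comp LΦ) ((1:ℝ), (0:ℝ)) = D (v1, 0) := by
        rw [ContinuousLinearMap.comp_apply, hL1]
      rw [this, e1]
      exact hkc
    have hndiff2 := scalar_nondiff (σ lm iv) (y lm w iv) (hσc lm iv).continuousAt
      (ptLip _ (hσc lm iv) (hσpa lm iv) _) hndiv
      (fun p => T (Φf p) kc) ((ContinuousLinearMap.proj kc).comp (D.comp LΦ)) hFk haa
    apply hndiff2
    -- z L is differentiable at w, so the composite along the bias line is differentiable
    have hwtd : HasFDerivAt wt ((ContinuousLinearMap.id ℝ ℝ).smulRight e) 0 := by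
      have : wt = fun t => w + ((ContinuousLinearMap.id ℝ ℝ).smulRight e) t := rfl
      rw [this]
      exact (((ContinuousLinearMap.id ℝ ℝ).smulRight e).hasFDerivAt).const_add w
    have hdiff' : DifferentiableAt ℝ (z L) (wt 0) := by
      have : wt 0 = w := by
        show w + (0:ℝ) • e = w
        rw [zero_smul, add_zero]
      rw [this]
      exact hdiff
    have h1 : DifferentiableAt ℝ (fun t => z L (wt t)) 0 :=
      hdiff'.comp 0 hwtd.differentiableAt
    have h2 : DifferentiableAt ℝ (fun t => z L (wt t) kc) 0 :=
      ((ContinuousLinearMap.proj kc : (Fin (N L) → ℝ) →L[ℝ] ℝ).differentiableAt).comp 0 h1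
    have heq2 : (fun t => z L (wt t) kc) =
        (fun t => (fun p => T (Φf p) kc) (σ lm iv (y lm w iv + t), t)) := by
      funext t
      show z L (wt t) kc = T (Φf (σ lm iv (y lm w iv + t), t)) kc
      rw [hTz (wt t)]
      congr 1
      have : Φf (σ lm iv (y lm w iv + t), t) = (z (lm.val + 1) (wt t), wt t) := by
        refine Prod.ext ?_ rfl
        rw [F5 t]
      rw [this]
    rw [← heq2]
    exact h2
end

section
/- Assume every extended derivative ∂̂σ_{l,i} is consistent. Let w ∈ ℝ^W. If y_{l,i}(w) ∉ ncdf(σ_{l,i}) for every pair (l,i) with l ∈ [L], i ∈ [N_l] such that τ_l does not have bias parameters, then: if z_L is differentiable at w, D^AD z_L(w) = D z_L(w); and if z_L is not differentiable at w, there exists a sequence w′_n → w with z_L differentiable at each w′_n and D^AD z_L(w) = lim_{n→∞} D z_L(w′_n). In particular, D^AD z_L(w) lies in the Clarke subdifferential of z_L at w (the convex hull of all limits lim_n D z_L(x_n) over sequences x_n → w at which z_L is differentiable). -/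
open Filter Topology Set

section Stage1

open Filter Topology Set

lemma exists_right_piece (f : ℝ → ℝ) (hpa : PiecewiseAnalytic f) (hc : Continuous f) (x : ℝ) :
    ∃ δ : ℝ, 0 < δ ∧ ∃ g : ℝ → ℝ, (∀ t, AnalyticAt ℝ g t) ∧ EqOn f g (Icc x (x + δ)) := by
  obtain ⟨n, A, g, hA, hdisj, hcover, hg, hfg⟩ := hpa
  have hmem : ∀ k : ℕ, ∃ i, x + 1/(k+1) ∈ A i := by
    intro k
    have : x + 1/(k+1) ∈ ⋃ i, A i := by rw [hcover]; trivial
    simpa using this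
  choose φ hφ using hmem
  have hfib : ∃ i, (φ ⁻¹' {i}).Infinite := by
    have : Nonempty (Fin n) := ⟨φ 0⟩
    obtain ⟨i, hi⟩ := Finite.exists_infinite_fiber φ
    exact ⟨i, Set.infinite_coe_iff.mp hi⟩
  obtain ⟨i, hi⟩ := hfib
  obtain ⟨k₀, hk₀⟩ := hi.nonempty
  have hk₀' : φ k₀ = i := hk₀
  have hδpos : (0:ℝ) < 1/(k₀+1) := by positivity
  refine ⟨1/(k₀+1), hδpos, g i, hg i, ?_⟩
  have hsub : Ioc x (x + 1/(k₀+1)) ⊆ A i := by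
    intro t ht
    obtain ⟨ht1, ht2⟩ := ht
    obtain ⟨m, hm⟩ := exists_nat_gt (1/(t - x))
    obtain ⟨k, hk, hkm⟩ := hi.exists_gt m
    have hk' : φ k = i := hk
    have htx : (0:ℝ) < t - x := by linarith
    have h1 : x + 1/(k+1) ≤ t := by
      have h2 : 1/(t-x) < (k:ℝ)+1 := by
        calc 1/(t-x) < (m:ℝ) := hm
        _ ≤ (k:ℝ) := by exact_mod_cast hkm.le
        _ < (k:ℝ)+1 := by linarith
      have h3 : (1:ℝ)/((k:ℝ)+1) < t - x := by
        rw [div_lt_iff₀ htx] at h2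
        rw [div_lt_iff₀ (by positivity)]
        nlinarith
      linarith
    have hmem1 : x + 1/(k+1) ∈ A i := hk' ▸ hφ k
    have hmem2 : x + 1/(k₀+1) ∈ A i := hk₀' ▸ hφ k₀
    exact (hA i).2.out hmem1 hmem2 ⟨h1, ht2⟩
  intro t ht
  rcases eq_or_lt_of_le ht.1 with rfl | hlt
  · have h1 : Tendsto f (𝓝[>] x) (𝓝 (f x)) := (hc.continuousAt).continuousWithinAt
    have h2 : Tendsto f (𝓝[>] x) (𝓝 (g i x)) := by
      have h3 : Tendsto (g i) (𝓝[>] x) (𝓝 (g i x)) := ((hg i x).continuousAt).continuousWithinAt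
      refine h3.congr' ?_
      filter_upwards [Ioc_mem_nhdsGT_of_mem
        (left_mem_Ico.mpr (show x < x + 1/(k₀+1) by linarith))] with u hu
      exact (hfg i u (hsub hu)).symm
    exact tendsto_nhds_unique h1 h2
  · exact hfg i t (hsub ⟨hlt, ht.2⟩)

lemma exists_left_piece (f : ℝ → ℝ) (hpa : PiecewiseAnalytic f) (hc : Continuous f) (x : ℝ) :
    ∃ δ : ℝ, 0 < δ ∧ ∃ g : ℝ → ℝ, (∀ t, AnalyticAt ℝ g t) ∧ EqOn f g (Icc (x - δ) x) := by
  obtain ⟨n, A, g, hA, hdisj, hcover, hg, hfg⟩ := hpa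
  have hmem : ∀ k : ℕ, ∃ i, x - 1/(k+1) ∈ A i := by
    intro k
    have : x - 1/(k+1) ∈ ⋃ i, A i := by rw [hcover]; trivial
    simpa using this
  choose φ hφ using hmem
  have hfib : ∃ i, (φ ⁻¹' {i}).Infinite := by
    have : Nonempty (Fin n) := ⟨φ 0⟩
    obtain ⟨i, hi⟩ := Finite.exists_infinite_fiber φ
    exact ⟨i, Set.infinite_coe_iff.mp hi⟩
  obtain ⟨i, hi⟩ := hfib
  obtain ⟨k₀, hk₀⟩ := hi.nonempty
  have hk₀' : φ k₀ = i := hk₀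
  have hδpos : (0:ℝ) < 1/(k₀+1) := by positivity
  refine ⟨1/(k₀+1), hδpos, g i, hg i, ?_⟩
  have hsub : Ico (x - 1/(k₀+1)) x ⊆ A i := by
    intro t ht
    obtain ⟨ht1, ht2⟩ := ht
    obtain ⟨m, hm⟩ := exists_nat_gt (1/(x - t))
    obtain ⟨k, hk, hkm⟩ := hi.exists_gt m
    have hk' : φ k = i := hk
    have htx : (0:ℝ) < x - t := by linarith
    have h1 : t ≤ x - 1/(k+1) := by
      have h2 : 1/(x-t) < (k:ℝ)+1 := by
        calc 1/(x-t) < (m:ℝ) := hm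
        _ ≤ (k:ℝ) := by exact_mod_cast hkm.le
        _ < (k:ℝ)+1 := by linarith
      have h3 : (1:ℝ)/((k:ℝ)+1) < x - t := by
        rw [div_lt_iff₀ htx] at h2
        rw [div_lt_iff₀ (by positivity)]
        nlinarith
      linarith
    have hmem1 : x - 1/(k+1) ∈ A i := hk' ▸ hφ k
    have hmem2 : x - 1/(k₀+1) ∈ A i := hk₀' ▸ hφ k₀
    exact (hA i).2.out hmem2 hmem1 ⟨ht1, h1⟩
  intro t ht
  rcases eq_or_lt_of_le ht.2 with heq | hlt
  · subst heq
    have h1 : Tendsto f (𝓝[<] t) (𝓝 (f t)) := (hc.continuousAt).continuousWithinAt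
    have h2 : Tendsto f (𝓝[<] t) (𝓝 (g i t)) := by
      have h3 : Tendsto (g i) (𝓝[<] t) (𝓝 (g i t)) := ((hg i t).continuousAt).continuousWithinAt
      refine h3.congr' ?_
      filter_upwards [Ico_mem_nhdsLT_of_mem
        (right_mem_Ioc.mpr (show t - 1/(k₀+1) < t by linarith))] with u hu
      exact (hfg i u (hsub hu)).symm
    exact tendsto_nhds_unique h1 h2
  · exact hfg i t (hsub ⟨ht.1, hlt⟩)

lemma analytic_deriv_continuous (g : ℝ → ℝ) (hg : ∀ t, AnalyticAt ℝ g t) :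
    Continuous (deriv g) := by
  have h1 : AnalyticOnNhd ℝ g univ := fun t _ => hg t
  exact continuous_iff_continuousAt.mpr fun t => ((h1.deriv) t trivial).continuousAt

lemma deriv_eq_right (f g : ℝ → ℝ) {x δ : ℝ} (hδ : 0 < δ) (heq : EqOn f g (Icc x (x + δ)))
    (hf : DifferentiableAt ℝ f x) (hgd : DifferentiableAt ℝ g x) : deriv f x = deriv g x := by
  have hev : f =ᶠ[𝓝[≥] x] g := by
    filter_upwards [Icc_mem_nhdsGE_of_mem (left_mem_Ico.2 (show x < x + δ by linarith))] with t ht using heq ht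
  have h1 : HasDerivWithinAt f (deriv f x) (Ici x) x := hf.hasDerivAt.hasDerivWithinAt
  have h2 : HasDerivWithinAt f (deriv g x) (Ici x) x :=
    (hgd.hasDerivAt.hasDerivWithinAt).congr_of_eventuallyEq hev (heq ⟨le_refl x, by linarith⟩)
  have hu : UniqueDiffWithinAt ℝ (Ici x) x := uniqueDiffOn_Ici x x self_mem_Ici
  rw [← h1.derivWithin hu]
  exact h2.derivWithin hu

lemma deriv_eq_left (f g : ℝ → ℝ) {x δ : ℝ} (hδ : 0 < δ) (heq : EqOn f g (Icc (x - δ) x))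
    (hf : DifferentiableAt ℝ f x) (hgd : DifferentiableAt ℝ g x) : deriv f x = deriv g x := by
  have hev : f =ᶠ[𝓝[≤] x] g := by
    filter_upwards [Icc_mem_nhdsLE_of_mem (right_mem_Ioc.2 (show x - δ < x by linarith))] with t ht using heq ht
  have h1 : HasDerivWithinAt f (deriv f x) (Iic x) x := hf.hasDerivAt.hasDerivWithinAt
  have h2 : HasDerivWithinAt f (deriv g x) (Iic x) x :=
    (hgd.hasDerivAt.hasDerivWithinAt).congr_of_eventuallyEq hev (heq ⟨by linarith, le_refl x⟩)
  have hu : UniqueDiffWithinAt ℝ (Iic x) x := uniqueDiffOn_Iic x x self_mem_Iic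
  rw [← h1.derivWithin hu]
  exact h2.derivWithin hu

end Stage1
section Stage2

open Filter Topology Set

lemma lim_deriv_eq (f g : ℝ → ℝ) (hg : ∀ t, AnalyticAt ℝ g t) {x df : ℝ} (u : ℕ → ℝ)
    (F : Filter ℕ) [hF : F.NeBot] (hux : Tendsto u F (𝓝 x))
    (hdf : Tendsto (fun k => deriv f (u k)) F (𝓝 df))
    (I : Set ℝ) (hI : IsOpen I) (hfg : EqOn f g I) (hmem : ∀ᶠ k in F, u k ∈ I) :
    deriv g x = df := by
  have h1 : Tendsto (fun k => deriv g (u k)) F (𝓝 (deriv g x)) :=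
    ((analytic_deriv_continuous g hg).continuousAt.tendsto).comp hux
  have h2 : Tendsto (fun k => deriv g (u k)) F (𝓝 df) := by
    refine Filter.Tendsto.congr' ?_ hdf
    filter_upwards [hmem] with k hk
    have hev : f =ᶠ[𝓝 (u k)] g := eventually_of_mem (hI.mem_nhds hk) hfg
    exact hev.deriv_eq
  exact tendsto_nhds_unique h1 h2

lemma select (f df : ℝ → ℝ) (hpa : PiecewiseAnalytic f) (hc : Continuous f)
    (hed : IsExtendedDeriv f df) (hco : IsConsistentWith f df) (x : ℝ) :
    ∃ (h : ℝ → ℝ) (s δ : ℝ), 0 < δ ∧ (s = 0 ∨ s * s = 1) ∧ Continuous h ∧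
      ContDiffAt ℝ 1 h x ∧ deriv h x = df x ∧
      (∀ t, 0 ≤ s * (t - x) → s * (t - x) ≤ δ → f t = h t) ∧
      (s ≠ 0 → ¬DifferentiableAt ℝ f x) := by
  obtain ⟨δR, hδR, gR, hgR, heqR⟩ := exists_right_piece f hpa hc x
  obtain ⟨δL, hδL, gL, hgL, heqL⟩ := exists_left_piece f hpa hc x
  have hgRd : ∀ t, DifferentiableAt ℝ gR t := fun t => (hgR t).differentiableAt
  have hgLd : ∀ t, DifferentiableAt ℝ gL t := fun t => (hgL t).differentiableAt
  have hfR : ∀ t ∈ Ioo x (x + δR), f =ᶠ[𝓝 t] gR := fun t ht =>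
    eventually_of_mem (isOpen_Ioo.mem_nhds ht) (fun u hu => heqR ⟨hu.1.le, hu.2.le⟩)
  have hfL : ∀ t ∈ Ioo (x - δL) x, f =ᶠ[𝓝 t] gL := fun t ht =>
    eventually_of_mem (isOpen_Ioo.mem_nhds ht) (fun u hu => heqL ⟨hu.1.le, hu.2.le⟩)
  by_cases hd : DifferentiableAt ℝ f x
  · refine ⟨f, 0, 1, one_pos, Or.inl rfl, hc, ?_, (hed x hd).symm, by simp, by simp⟩
    have hdiff : ∀ t ∈ Ioo (x - δL) (x + δR), DifferentiableAt ℝ f t := by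
      intro t ht
      rcases lt_trichotomy t x with h | h | h
      · exact (hfL t ⟨ht.1, h⟩).differentiableAt_iff.mpr (hgLd t)
      · exact h ▸ hd
      · exact (hfR t ⟨h, ht.2⟩).differentiableAt_iff.mpr (hgRd t)
    have hdRx : deriv f x = deriv gR x := deriv_eq_right f gR hδR heqR hd (hgRd x)
    have hdLx : deriv f x = deriv gL x := deriv_eq_left f gL hδL heqL hd (hgLd x)
    have hcder : ∀ t ∈ Ioo (x - δL) (x + δR), ContinuousAt (deriv f) t := by
      intro t ht
      rcases lt_trichotomy t x with h | h | h
      · exact ((analytic_deriv_continuous gL hgL).continuousAt).congr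
          ((hfL t ⟨ht.1, h⟩).deriv).symm
      · subst h
        show Tendsto (deriv f) (𝓝 t) (𝓝 (deriv f t))
        rw [← nhdsLT_sup_nhdsGE t, tendsto_sup]
        refine ⟨?_, ?_⟩
        · have hL1 : Tendsto (deriv gL) (𝓝[<] t) (𝓝 (deriv f t)) := by
            rw [hdLx]
            exact ((analytic_deriv_continuous gL hgL).continuousAt).continuousWithinAt
          refine hL1.congr' ?_
          filter_upwards [Ioo_mem_nhdsLT_of_mem
            (right_mem_Ioc.mpr (show t - δL < t by linarith) : t ∈ Ioc (t - δL) t)] with v hv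
          exact ((hfL v hv).deriv_eq).symm
        · have hR1 : Tendsto (deriv gR) (𝓝[≥] t) (𝓝 (deriv f t)) := by
            rw [hdRx]
            exact ((analytic_deriv_continuous gR hgR).continuousAt).continuousWithinAt
          refine hR1.congr' ?_
          filter_upwards [Ico_mem_nhdsGE_of_mem
            (left_mem_Ico.mpr (show t < t + δR by linarith))] with v hv
          rcases eq_or_lt_of_le hv.1 with rfl | hlt
          · exact hdRx.symm
          · exact ((hfR v ⟨hlt, hv.2⟩).deriv_eq).symm
      · exact ((analytic_deriv_continuous gR hgR).continuousAt).congr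
          ((hfR t ⟨h, ht.2⟩).deriv).symm
    refine contDiffAt_one_iff.mpr
      ⟨fun t => ContinuousLinearMap.smulRight (1 : ℝ →L[ℝ] ℝ) (deriv f t),
        Ioo (x - δL) (x + δR), isOpen_Ioo.mem_nhds ⟨by linarith, by linarith⟩, ?_, ?_⟩
    · exact ((ContinuousLinearMap.smulRightL ℝ ℝ ℝ (1 : ℝ →L[ℝ] ℝ)).continuous).comp_continuousOn
        (fun t ht => (hcder t ht).continuousWithinAt)
    · exact fun t ht => hasDerivAt_iff_hasFDerivAt.mp (hdiff t ht).hasDerivAt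
  · obtain ⟨u, hux, hud, hude⟩ := hco x hd
    have hune : ∀ k, u k ≠ x := fun k he => hd (he ▸ hud k)
    by_cases hP : (atTop ⊓ 𝓟 {k | x < u k}).NeBot
    · refine ⟨gR, 1, δR, hδR, Or.inr (by ring),
        continuous_iff_continuousAt.mpr (fun t => (hgR t).continuousAt),
        (hgR x).contDiffAt, ?_, ?_, fun _ => hd⟩
      · have := hP
        refine lim_deriv_eq f gR hgR u (atTop ⊓ 𝓟 {k | x < u k})
          (hux.mono_left inf_le_left) (hude.mono_left inf_le_left)
          (Ioo x (x + δR)) isOpen_Ioo (fun t ht => heqR ⟨ht.1.le, ht.2.le⟩) ?_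
        have e1 : ∀ᶠ k in atTop ⊓ 𝓟 {k | x < u k}, x < u k :=
          eventually_inf_principal.mpr (Eventually.of_forall (fun k hk => hk))
        have e2 : ∀ᶠ k in atTop ⊓ 𝓟 {k | x < u k}, u k < x + δR :=
          (hux.mono_left inf_le_left).eventually
            (Filter.Tendsto.eventually_lt_const (show x < x + δR by linarith) tendsto_id)
        filter_upwards [e1, e2] with k h1 h2 using ⟨h1, h2⟩
      · intro t h0 h1
        rw [one_mul] at h0 h1
        exact heqR ⟨by linarith, by linarith⟩
    · have hev : ∀ᶠ k in atTop, u k < x := by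
        have h1 : {k | x < u k}ᶜ ∈ atTop := by
          rw [not_neBot] at hP
          exact inf_principal_eq_bot.mp hP
        filter_upwards [h1] with k hk
        exact lt_of_le_of_ne (not_lt.mp hk) (hune k)
      have hQ : (atTop ⊓ 𝓟 {k | u k < x}).NeBot := by
        rw [neBot_iff]
        intro hbot
        rw [inf_principal_eq_bot] at hbot
        obtain ⟨k, h1, h2⟩ := (hev.and hbot).exists
        exact h2 h1
      refine ⟨gL, -1, δL, hδL, Or.inr (by ring),
        continuous_iff_continuousAt.mpr (fun t => (hgL t).continuousAt),
        (hgL x).contDiffAt, ?_, ?_, fun _ => hd⟩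
      · refine lim_deriv_eq f gL hgL u (atTop ⊓ 𝓟 {k | u k < x})
          (hux.mono_left inf_le_left) (hude.mono_left inf_le_left)
          (Ioo (x - δL) x) isOpen_Ioo (fun t ht => heqL ⟨ht.1.le, ht.2.le⟩) ?_
        have e1 : ∀ᶠ k in atTop ⊓ 𝓟 {k | u k < x}, u k < x :=
          eventually_inf_principal.mpr (Eventually.of_forall (fun k hk => hk))
        have e2 : ∀ᶠ k in atTop ⊓ 𝓟 {k | u k < x}, x - δL < u k :=
          (hux.mono_left inf_le_left).eventually
            (Filter.Tendsto.eventually_const_lt (show x - δL < x by linarith) tendsto_id)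
        filter_upwards [e1, e2] with k h1 h2 using ⟨h2, h1⟩
      · intro t h0 h1
        have h0' : t ≤ x := by nlinarith
        have h1' : x - δL ≤ t := by nlinarith
        exact heqL ⟨h1', h0'⟩

end Stage2
section Stage3

open Filter Topology Set

lemma fderiv_zero_on_ray {E F : Type*} [NormedAddCommGroup E] [NormedSpace ℝ E]
    [NormedAddCommGroup F] [NormedSpace ℝ F] {f : E → F} {p : E}
    (hf : DifferentiableAt ℝ f p) {ξ : E}
    (h0 : ∀ᶠ t in 𝓝[≥] (0:ℝ), f (p + t • ξ) = f p) : fderiv ℝ f p ξ = 0 := by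
  have hγ : HasDerivAt (fun t : ℝ => p + t • ξ) ξ 0 := by
    simpa using ((hasDerivAt_id (0:ℝ)).smul_const ξ).const_add p
  have hcomp : HasDerivAt (fun t : ℝ => f (p + t • ξ)) (fderiv ℝ f p ξ) 0 := by
    have hfp : HasFDerivAt f (fderiv ℝ f p) (p + (0:ℝ) • ξ) := by simpa using hf.hasFDerivAt
    exact hfp.comp_hasDerivAt 0 hγ
  have h1 : HasDerivWithinAt (fun t : ℝ => f (p + t • ξ)) (fderiv ℝ f p ξ) (Ici 0) 0 :=
    hcomp.hasDerivWithinAt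
  have h2 : HasDerivWithinAt (fun t : ℝ => f (p + t • ξ)) 0 (Ici 0) 0 := by
    refine (hasDerivWithinAt_const 0 (Ici (0:ℝ)) (f p)).congr_of_eventuallyEq h0 (by simp)
  have hu : UniqueDiffWithinAt ℝ (Ici (0:ℝ)) 0 := uniqueDiffOn_Ici 0 0 self_mem_Ici
  rw [← h1.derivWithin hu]
  exact h2.derivWithin hu

variable {L : ℕ} {N : ℕ → ℕ} {Wd : Fin L → ℕ}

noncomputable def zh
    (τ : (l : Fin L) → (Fin (N l.val) → ℝ) × (Fin (Wd l) → ℝ) → Fin (N (l.val + 1)) → ℝ)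
    (h : (l : Fin L) → Fin (N (l.val + 1)) → ℝ → ℝ) (c : Fin (N 0) → ℝ) :
    (l : ℕ) → Params L Wd → Fin (N l) → ℝ
  | 0 => fun _ => c
  | (l + 1) => fun w' i =>
      if hl : l < L then h ⟨l, hl⟩ i (τ ⟨l, hl⟩ (zh τ h c l w', w' ⟨l, hl⟩) i) else 0

lemma zh_congr
    (τ : (l : Fin L) → (Fin (N l.val) → ℝ) × (Fin (Wd l) → ℝ) → Fin (N (l.val + 1)) → ℝ)
    (h : (l : Fin L) → Fin (N (l.val + 1)) → ℝ → ℝ) (c : Fin (N 0) → ℝ) :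
    ∀ (l : ℕ) (w₁ w₂ : Params L Wd),
      (∀ l' : Fin L, l'.val < l → w₁ l' = w₂ l') → zh τ h c l w₁ = zh τ h c l w₂ := by
  intro l
  induction l with
  | zero => intro w₁ w₂ _; rfl
  | succ l ih =>
    intro w₁ w₂ hw
    funext i
    simp only [zh]
    by_cases hl : l < L
    · simp only [dif_pos hl]
      rw [ih w₁ w₂ (fun l' hl' => hw l' (Nat.lt_succ_of_lt hl')),
        hw ⟨l, hl⟩ (Nat.lt_succ_self l)]
    · simp only [dif_neg hl]

lemma zh_continuous
    (τ : (l : Fin L) → (Fin (N l.val) → ℝ) × (Fin (Wd l) → ℝ) → Fin (N (l.val + 1)) → ℝ)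
    (h : (l : Fin L) → Fin (N (l.val + 1)) → ℝ → ℝ) (c : Fin (N 0) → ℝ)
    (hτc : ∀ l, Continuous (τ l)) (hhc : ∀ l i, Continuous (h l i)) :
    ∀ l, Continuous (zh (L := L) (N := N) (Wd := Wd) τ h c l) := by
  intro l
  induction l with
  | zero => exact continuous_const
  | succ l ih =>
    by_cases hl : l < L
    · simp only [zh, dif_pos hl]
      apply continuous_pi
      intro i
      exact (hhc ⟨l, hl⟩ i).comp
        ((continuous_apply i).comp ((hτc ⟨l, hl⟩).comp (ih.prodMk (continuous_apply _))))
    · simp only [zh, dif_neg hl]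
      exact continuous_const

noncomputable def th
    (τ : (l : Fin L) → (Fin (N l.val) → ℝ) × (Fin (Wd l) → ℝ) → Fin (N (l.val + 1)) → ℝ)
    (h : (l : Fin L) → Fin (N (l.val + 1)) → ℝ → ℝ) (c : Fin (N 0) → ℝ)
    (B : (l : Fin L) → (Fin (N l.val) → ℝ) → (Fin (Wd l) → ℝ) →
      (Fin (N (l.val + 1)) → ℝ) → Fin (Wd l) → ℝ) :
    (steps : ℕ) → Params L Wd → ((l : Fin L) → Fin (N (l.val + 1)) → ℝ) → Params L Wd
  | 0 => fun wt _ => wt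
  | (l + 1) => fun wt a =>
      if hl : l < L then
        Function.update (th τ h c B l wt a) ⟨l, hl⟩
          (B ⟨l, hl⟩ (zh τ h c l (th τ h c B l wt a)) (th τ h c B l wt a ⟨l, hl⟩) (a ⟨l, hl⟩))
      else th τ h c B l wt a

variable {τ : (l : Fin L) → (Fin (N l.val) → ℝ) × (Fin (Wd l) → ℝ) → Fin (N (l.val + 1)) → ℝ}
  {h : (l : Fin L) → Fin (N (l.val + 1)) → ℝ → ℝ} {c : Fin (N 0) → ℝ}
  {B : (l : Fin L) → (Fin (N l.val) → ℝ) → (Fin (Wd l) → ℝ) →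
      (Fin (N (l.val + 1)) → ℝ) → Fin (Wd l) → ℝ}

lemma th_high (wt : Params L Wd) (a : (l : Fin L) → Fin (N (l.val + 1)) → ℝ) :
    ∀ (steps : ℕ) (l'' : Fin L), steps ≤ l''.val → th τ h c B steps wt a l'' = wt l'' := by
  intro steps
  induction steps with
  | zero => intro l'' _; rfl
  | succ s ih =>
    intro l'' hle
    simp only [th]
    by_cases hl : s < L
    · rw [dif_pos hl, Function.update_of_ne (by
        intro he
        rw [he] at hle
        simp at hle)]
      exact ih l'' (Nat.le_of_succ_le hle)
    · rw [dif_neg hl]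
      exact ih l'' (Nat.le_of_succ_le hle)

lemma th_low (wt : Params L Wd) (a : (l : Fin L) → Fin (N (l.val + 1)) → ℝ) :
    ∀ (s₂ s₁ : ℕ), s₁ ≤ s₂ → ∀ (l'' : Fin L), l''.val < s₁ →
      th τ h c B s₂ wt a l'' = th τ h c B s₁ wt a l'' := by
  intro s₂
  induction s₂ with
  | zero => intro s₁ hle l'' hlt; omega
  | succ s ih =>
    intro s₁ hle l'' hlt
    rcases Nat.lt_or_ge l''.val s with hcase | hcase
    · rcases Nat.eq_or_lt_of_le hle with rfl | hlt2
      · rfl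
      · have h1 : th τ h c B (s+1) wt a l'' = th τ h c B s wt a l'' := by
          simp only [th]
          by_cases hl : s < L
          · rw [dif_pos hl, Function.update_of_ne (by
              intro he; rw [he] at hcase; simp at hcase)]
          · rw [dif_neg hl]
        rw [h1, ih s₁ (Nat.lt_succ_iff.mp hlt2) l'' hlt]
    · -- l''.val = s, so s₁ = s + 1
      have : s₁ = s + 1 := by omega
      subst this
      rfl

lemma zh_th (wt : Params L Wd) (a : (l : Fin L) → Fin (N (l.val + 1)) → ℝ)
    {l s : ℕ} (hls : l ≤ s) :
    zh τ h c l (th τ h c B s wt a) = zh τ h c l (th τ h c B l wt a) :=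
  zh_congr τ h c l _ _ (fun l' hl' =>
    (th_low (τ := τ) (h := h) (c := c) (B := B) wt a s l hls l' hl'))
end Stage3
section Stage3b

open Filter Topology Set

def emb (m k : ℕ) (v : Fin (m - k) → ℝ) : Fin m → ℝ := fun j =>
  if hj : j.val < m - k then v ⟨j.val, hj⟩ else 0

lemma emb_castLE (m k : ℕ) (v : Fin (m - k) → ℝ) (j' : Fin (m - k)) :
    emb m k v (Fin.castLE (Nat.sub_le m k) j') = v j' := by
  simp [emb]

lemma emb_bias (m k : ℕ) (v : Fin (m - k) → ℝ) (i : ℕ) (hj : m - k + i < m) :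
    emb m k v ⟨m - k + i, hj⟩ = 0 := by
  have : ¬(m - k + i < m - k) := by omega
  simp [emb, this]

lemma emb_differentiable (m k : ℕ) : Differentiable ℝ (emb m k) := by
  intro v
  rw [differentiableAt_pi]
  intro j
  by_cases hj : j.val < m - k
  · simp only [emb, dif_pos hj]
    exact (ContinuousLinearMap.proj (R := ℝ) (φ := fun _ : Fin (m - k) => ℝ)
      ⟨j.val, hj⟩).differentiableAt
  · simp only [emb, dif_neg hj]
    exact differentiableAt_const 0

lemma proj_diagCLM_comp {n : ℕ} (d : Fin n → ℝ) {E : Type*} [NormedAddCommGroup E]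
    [NormedSpace ℝ E] (M : E →L[ℝ] (Fin n → ℝ)) (i : Fin n) :
    (ContinuousLinearMap.proj i).comp ((diagCLM d).comp M)
      = d i • ((ContinuousLinearMap.proj i).comp M) := by
  ext v
  simp [diagCLM]

end Stage3b

/-- Sufficient condition for AD to compute the standard derivative or a
Clarke subderivative, under consistent extended derivatives. -/
theorem stmt10
    (L : ℕ) (hL : 1 ≤ L)
    (N : ℕ → ℕ) (hN : ∀ l, 1 ≤ N l)
    (Wd : Fin L → ℕ) (hW : 1 ≤ ∑ l, Wd l)
    (τ : (l : Fin L) → (Fin (N l.val) → ℝ) × (Fin (Wd l) → ℝ) → Fin (N (l.val + 1)) → ℝ)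
    (hτ : ∀ l p, AnalyticAt ℝ (τ l) p)
    (σ : (l : Fin L) → Fin (N (l.val + 1)) → ℝ → ℝ)
    (hσc : ∀ l i, Continuous (σ l i))
    (hσpa : ∀ l i, PiecewiseAnalytic (σ l i))
    (c : Fin (N 0) → ℝ)
    (z : (l : ℕ) → Params L Wd → Fin (N l) → ℝ)
    (y : (l : Fin L) → Params L Wd → Fin (N (l.val + 1)) → ℝ)
    (hz0 : ∀ w, z 0 w = c)
    (hy : ∀ l w, y l w = τ l (z l.val w, w l))
    (hz : ∀ l w i, z (l.val + 1) w i = σ l i (y l w i))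
    (dσ : (l : Fin L) → Fin (N (l.val + 1)) → ℝ → ℝ)
    (hdσ : ∀ l i, IsExtendedDeriv (σ l i) (dσ l i))
    (J : (l : ℕ) → Params L Wd → (Params L Wd →L[ℝ] (Fin (N l) → ℝ)))
    (hJ0 : ∀ w, J 0 w = 0)
    (hJstep : ∀ (l : Fin L) (w : Params L Wd),
      J (l.val + 1) w =
        (diagCLM fun i => dσ l i (y l w i)).comp
          ((fderiv ℝ (τ l) (z l.val w, w l)).comp
            ((J l.val w).prod (ContinuousLinearMap.proj l))))
    (hcons : ∀ l i, IsConsistentWith (σ l i) (dσ l i))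
    (w : Params L Wd)
    (hcond : ∀ (l : Fin L) (i : Fin (N (l.val + 1))),
      ¬HasBiasParams (τ l) → y l w i ∉ ncdfSet (σ l i)) :
    (DifferentiableAt ℝ (z L) w → J L w = fderiv ℝ (z L) w) ∧
    (¬DifferentiableAt ℝ (z L) w →
      ∃ u : ℕ → Params L Wd, Tendsto u atTop (𝓝 w) ∧
        (∀ k, DifferentiableAt ℝ (z L) (u k)) ∧
        Tendsto (fun k => fderiv ℝ (z L) (u k)) atTop (𝓝 (J L w))) ∧
    J L w ∈ convexHull ℝ
      {A : Params L Wd →L[ℝ] (Fin (N L) → ℝ) |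
        ∃ u : ℕ → Params L Wd, Tendsto u atTop (𝓝 w) ∧
          (∀ k, DifferentiableAt ℝ (z L) (u k)) ∧
          Tendsto (fun k => fderiv ℝ (z L) (u k)) atTop (𝓝 A)} := by
  classical
  have hτc : ∀ l, Continuous (τ l) :=
    fun l => continuous_iff_continuousAt.2 fun p => (hτ l p).continuousAt
  -- pointwise packages
  have pkg : ∀ (l : Fin L) (i : Fin (N (l.val + 1))),
      ∃ (hh : ℝ → ℝ) (ss δδ : ℝ), 0 < δδ ∧ (ss = 0 ∨ ss * ss = 1) ∧ Continuous hh ∧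
        ContDiffAt ℝ 1 hh (y l w i) ∧ deriv hh (y l w i) = dσ l i (y l w i) ∧
        (∀ t, 0 ≤ ss * (t - y l w i) → ss * (t - y l w i) ≤ δδ → σ l i t = hh t) ∧
        (ss ≠ 0 → ¬DifferentiableAt ℝ (σ l i) (y l w i)) :=
    fun l i => select (σ l i) (dσ l i) (hσpa l i) (hσc l i) (hdσ l i) (hcons l i) (y l w i)
  choose hfun sg δs hδpos hsg hhcont hhcd hhder hhside hhnd using pkg
  set Z := zh (L := L) (N := N) (Wd := Wd) τ hfun c with hZ
  have hZsucc : ∀ (l : ℕ) (hl : l < L) (w' : Params L Wd) (i : Fin (N (l + 1))),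
      Z (l + 1) w' i = hfun ⟨l, hl⟩ i (τ ⟨l, hl⟩ (Z l w', w' ⟨l, hl⟩) i) := by
    intro l hl w' i
    rw [hZ]
    simp only [zh, dif_pos hl]
  -- z = Z at the base point w
  have hzw : ∀ l, l ≤ L → z l w = Z l w := by
    intro l
    induction l with
    | zero => intro _; rw [hz0]; rfl
    | succ l ih =>
      intro hlL
      have hl : l < L := hlL
      funext i
      rw [hz ⟨l, hl⟩ w i, hZsucc l hl w i]
      have hyy : τ ⟨l, hl⟩ (Z l w, w ⟨l, hl⟩) i = y ⟨l, hl⟩ w i := by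
        rw [← ih (le_of_lt hl), ← hy]
      rw [hyy]
      exact hhside ⟨l, hl⟩ i _ (by simp) (by simp; exact (hδpos _ _).le)
  have hyw : ∀ l : Fin L, τ l (Z l.val w, w l) = y l w := by
    intro l
    rw [← hzw l.val (le_of_lt l.isLt), ← hy]
  -- agreement lemma on the constraint set
  have hagree : ∀ w' : Params L Wd,
      (∀ (l : Fin L) (i : Fin (N (l.val + 1))), sg l i ≠ 0 →
        0 ≤ sg l i * (τ l (Z l.val w', w' l) i - y l w i) ∧
        sg l i * (τ l (Z l.val w', w' l) i - y l w i) ≤ δs l i) →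
      ∀ l, l ≤ L → z l w' = Z l w' := by
    intro w' hcon l
    induction l with
    | zero => intro _; rw [hz0]; rfl
    | succ l ih =>
      intro hlL
      have hl : l < L := hlL
      funext i
      rw [hz ⟨l, hl⟩ w' i, hZsucc l hl w' i]
      have hyy : y ⟨l, hl⟩ w' i = τ ⟨l, hl⟩ (Z l w', w' ⟨l, hl⟩) i := by
        rw [hy, ih (le_of_lt hl)]
      rw [hyy]
      by_cases hs0 : sg ⟨l, hl⟩ i = 0
      · exact hhside ⟨l, hl⟩ i _ (by simp [hs0]) (by simp [hs0]; exact (hδpos _ _).le)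
      · exact hhside ⟨l, hl⟩ i _ (hcon ⟨l, hl⟩ i hs0).1 (hcon ⟨l, hl⟩ i hs0).2
  -- smoothness of Z at w
  have hZcd : ∀ l, l ≤ L → ContDiffAt ℝ 1 (Z l) w := by
    intro l
    induction l with
    | zero => intro _; exact contDiffAt_const
    | succ l ih =>
      intro hlL
      have hl : l < L := hlL
      have hrw : Z (l + 1) = fun w' i => hfun ⟨l, hl⟩ i (τ ⟨l, hl⟩ (Z l w', w' ⟨l, hl⟩) i) := by
        funext w' i; exact hZsucc l hl w' i
      rw [hrw]
      rw [contDiffAt_pi]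
      intro i
      have hinner : ContDiffAt ℝ 1 (fun w' : Params L Wd => τ ⟨l, hl⟩ (Z l w', w' ⟨l, hl⟩) i) w := by
        have hτcd : ContDiffAt ℝ 1 (fun p => τ ⟨l, hl⟩ p i) (Z l w, w ⟨l, hl⟩) :=
          (contDiffAt_pi.mp ((hτ ⟨l, hl⟩ (Z l w, w ⟨l, hl⟩)).contDiffAt)) i
        exact hτcd.comp w ((ih (le_of_lt hl)).prodMk
          ((ContinuousLinearMap.proj (R := ℝ) (φ := fun l : Fin L => Fin (Wd l) → ℝ)
            ⟨l, hl⟩).contDiff.contDiffAt))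
      have houter : ContDiffAt ℝ 1 (hfun ⟨l, hl⟩ i) (τ ⟨l, hl⟩ (Z l w, w ⟨l, hl⟩) i) := by
        rw [show τ ⟨l, hl⟩ (Z l w, w ⟨l, hl⟩) i = y ⟨l, hl⟩ w i from congrFun (hyw ⟨l, hl⟩) i]
        exact hhcd ⟨l, hl⟩ i
      exact houter.comp w hinner
  -- AD derivative = derivative of Z at w
  have hZfd : ∀ l, l ≤ L → HasFDerivAt (Z l) (J l w) w := by
    intro l
    induction l with
    | zero => intro _; rw [hJ0]; exact hasFDerivAt_const c w
    | succ l ih =>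
      intro hlL
      have hl : l < L := hlL
      have hrw : Z (l + 1) = fun w' i => hfun ⟨l, hl⟩ i (τ ⟨l, hl⟩ (Z l w', w' ⟨l, hl⟩) i) := by
        funext w' i; exact hZsucc l hl w' i
      rw [hrw, hJstep ⟨l, hl⟩ w]
      apply hasFDerivAt_pi''
      intro i
      have hprod : HasFDerivAt (fun w' : Params L Wd => (Z l w', w' ⟨l, hl⟩))
          ((J l w).prod (ContinuousLinearMap.proj (R := ℝ)
            (φ := fun l : Fin L => Fin (Wd l) → ℝ) ⟨l, hl⟩)) w :=
        (ih (le_of_lt hl)).prodMk (ContinuousLinearMap.proj (R := ℝ)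
          (φ := fun l : Fin L => Fin (Wd l) → ℝ) ⟨l, hl⟩).hasFDerivAt
      have hτf : HasFDerivAt (τ ⟨l, hl⟩) (fderiv ℝ (τ ⟨l, hl⟩) (z l w, w ⟨l, hl⟩))
          (Z l w, w ⟨l, hl⟩) := by
        rw [hzw l (le_of_lt hl)]
        exact (hτ ⟨l, hl⟩ _).differentiableAt.hasFDerivAt
      have hcomp1 := hτf.comp w hprod
      have hcoord := hasFDerivAt_pi'.mp hcomp1 i
      have houter : HasDerivAt (hfun ⟨l, hl⟩ i) (dσ ⟨l, hl⟩ i (y ⟨l, hl⟩ w i))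
          (τ ⟨l, hl⟩ (Z l w, w ⟨l, hl⟩) i) := by
        have h1 : DifferentiableAt ℝ (hfun ⟨l, hl⟩ i) (y ⟨l, hl⟩ w i) :=
          (hhcd ⟨l, hl⟩ i).differentiableAt one_ne_zero
        have h2 := h1.hasDerivAt
        rw [hhder ⟨l, hl⟩ i] at h2
        rw [show τ ⟨l, hl⟩ (Z l w, w ⟨l, hl⟩) i = y ⟨l, hl⟩ w i from congrFun (hyw ⟨l, hl⟩) i]
        exact h2
      rw [proj_diagCLM_comp]
      exact houter.comp_hasFDerivAt w hcoord
  -- layers with an active one-sided constraint have bias parameters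
  have hnonbias : ∀ (l : Fin L) (i : Fin (N (l.val + 1))), sg l i ≠ 0 → HasBiasParams (τ l) := by
    intro l i hs
    by_contra hnb
    have h1 := hcond l i hnb
    have h2 : ContDiffAt ℝ 1 (σ l i) (y l w i) := by
      by_contra hcd
      exact h1 hcd
    exact (hhnd l i hs) (h2.differentiableAt one_ne_zero)
  have hlayer : ∀ l : Fin L,
      ∃ ff : Fin (N (l.val + 1)) → (Fin (N l.val) → ℝ) → (Fin (Wd l - N (l.val + 1)) → ℝ) → ℝ,
        (∃ i, sg l i ≠ 0) →
          (N (l.val + 1) ≤ Wd l) ∧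
          ∀ (i : Fin (N (l.val + 1))) (x : Fin (N l.val) → ℝ) (u : Fin (Wd l) → ℝ)
            (hj : Wd l - N (l.val + 1) + i.val < Wd l),
            τ l (x, u) i
              = ff i x (fun j => u (Fin.castLE (Nat.sub_le _ _) j)) + u ⟨_, hj⟩ := by
    intro l
    by_cases hmod : ∃ i, sg l i ≠ 0
    · obtain ⟨i₀, hi₀⟩ := hmod
      obtain ⟨hk, ff, hffl⟩ := hnonbias l i₀ hi₀
      exact ⟨ff, fun _ => ⟨hk, fun i x u hj => hffl i x u⟩⟩
    · exact ⟨fun _ _ _ => 0, fun hm => absurd hm hmod⟩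
  choose ff hff using hlayer
  have hkle : ∀ (l : Fin L) (i : Fin (N (l.val + 1))), sg l i ≠ 0 → N (l.val + 1) ≤ Wd l :=
    fun l i hs => (hff l ⟨i, hs⟩).1
  have hjlt : ∀ (l : Fin L) (i : Fin (N (l.val + 1))), sg l i ≠ 0 →
      Wd l - N (l.val + 1) + i.val < Wd l := by
    intro l i hs
    have h1 := hkle l i hs
    have h2 := i.isLt
    omega
  set B₀ : (l : Fin L) → (Fin (N l.val) → ℝ) → (Fin (Wd l) → ℝ) →
      (Fin (N (l.val + 1)) → ℝ) → Fin (Wd l) → ℝ := fun l x u a j =>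
    if hm : ∃ i : Fin (N (l.val + 1)), sg l i ≠ 0 ∧ Wd l - N (l.val + 1) + i.val = j.val then
      (y l w hm.choose + a hm.choose)
        - ff l hm.choose x (fun j' => u (Fin.castLE (Nat.sub_le _ _) j'))
    else u j
    with hB₀
  have hBbias : ∀ (l : Fin L) (x : Fin (N l.val) → ℝ) (u : Fin (Wd l) → ℝ)
      (a : Fin (N (l.val + 1)) → ℝ) (i : Fin (N (l.val + 1))) (hs : sg l i ≠ 0),
      B₀ l x u a ⟨Wd l - N (l.val + 1) + i.val, hjlt l i hs⟩
        = (y l w i + a i) - ff l i x (fun j' => u (Fin.castLE (Nat.sub_le _ _) j')) := by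
    intro l x u a i hs
    have hm : ∃ i' : Fin (N (l.val + 1)), sg l i' ≠ 0 ∧
        Wd l - N (l.val + 1) + i'.val
          = (⟨Wd l - N (l.val + 1) + i.val, hjlt l i hs⟩ : Fin (Wd l)).val := ⟨i, hs, rfl⟩
    simp only [hB₀]
    rw [dif_pos hm]
    obtain ⟨hs', heq⟩ := hm.choose_spec
    have heq' : Wd l - N (l.val + 1) + hm.choose.val = Wd l - N (l.val + 1) + i.val := heq
    have hch : hm.choose = i := Fin.ext (by omega)
    rw [hch]
  have hBfirst : ∀ (l : Fin L) (x : Fin (N l.val) → ℝ) (u : Fin (Wd l) → ℝ)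
      (a : Fin (N (l.val + 1)) → ℝ) (j' : Fin (Wd l - N (l.val + 1))),
      B₀ l x u a (Fin.castLE (Nat.sub_le _ _) j') = u (Fin.castLE (Nat.sub_le _ _) j') := by
    intro l x u a j'
    simp only [hB₀]
    rw [dif_neg]
    rintro ⟨i', -, heq⟩
    have h2 := j'.isLt
    have heq' : Wd l - N (l.val + 1) + i'.val = j'.val := heq
    omega
  have hffτ : ∀ (l : Fin L), (∃ i, sg l i ≠ 0) → ∀ (i : Fin (N (l.val + 1)))
      (x : Fin (N l.val) → ℝ) (v : Fin (Wd l - N (l.val + 1)) → ℝ),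
      ff l i x v = τ l (x, emb (Wd l) (N (l.val + 1)) v) i := by
    intro l hmod i x v
    have hjv : Wd l - N (l.val + 1) + i.val < Wd l := by
      have := (hff l hmod).1; have := i.isLt; omega
    have h2 := (hff l hmod).2 i x (emb (Wd l) (N (l.val + 1)) v) hjv
    have h3 : (fun j => emb (Wd l) (N (l.val + 1)) v (Fin.castLE (Nat.sub_le _ _) j)) = v :=
      funext (emb_castLE _ _ v)
    rw [h2, h3, emb_bias]
    ring
  -- exact control of the pre-activation values along th
  have hTy : ∀ (wt : Params L Wd) (a : (l : Fin L) → Fin (N (l.val + 1)) → ℝ)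
      (l : Fin L) (i : Fin (N (l.val + 1))), sg l i ≠ 0 →
      τ l (Z l.val (th τ hfun c B₀ L wt a), th τ hfun c B₀ L wt a l) i = y l w i + a l i := by
    intro wt a l i hs
    have hlL : l.val < L := l.isLt
    have h1 : th τ hfun c B₀ L wt a l = th τ hfun c B₀ (l.val + 1) wt a l :=
      th_low wt a L (l.val + 1) hlL l (Nat.lt_succ_self _)
    have h2 : th τ hfun c B₀ (l.val + 1) wt a l
        = B₀ l (Z l.val (th τ hfun c B₀ l.val wt a)) (th τ hfun c B₀ l.val wt a l) (a l) := by
      simp only [th]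
      rw [dif_pos hlL]
      exact Function.update_self _ _ _
    have h3 : Z l.val (th τ hfun c B₀ L wt a) = Z l.val (th τ hfun c B₀ l.val wt a) :=
      zh_th wt a (le_of_lt hlL)
    have h4 : th τ hfun c B₀ l.val wt a l = wt l := th_high wt a l.val l le_rfl
    rw [h3, h1, h2, h4]
    rw [(hff l ⟨i, hs⟩).2 i _ _ (hjlt l i hs)]
    rw [hBbias l _ (wt l) (a l) i hs]
    have h5 : (fun j' => B₀ l (Z l.val (th τ hfun c B₀ l.val wt a)) (wt l) (a l)
          (Fin.castLE (Nat.sub_le _ _) j'))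
        = fun j' => wt l (Fin.castLE (Nat.sub_le _ _) j') :=
      funext (hBfirst l _ (wt l) (a l))
    rw [h5]
    ring
  -- th is a retraction: composed with the canonical section it is the identity
  have hThPhi : ∀ (wb : Params L Wd) (steps : ℕ),
      th τ hfun c B₀ steps wb (fun l i => τ l (Z l.val wb, wb l) i - y l w i) = wb := by
    intro wb steps
    induction steps with
    | zero => rfl
    | succ s ih =>
      simp only [th]
      by_cases hl : s < L
      · rw [dif_pos hl, ih]
        have hvec : B₀ ⟨s, hl⟩ (Z s wb) (wb ⟨s, hl⟩)
            ((fun (l : Fin L) (i : Fin (N (l.val + 1))) =>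
              τ l (Z l.val wb, wb l) i - y l w i) ⟨s, hl⟩) = wb ⟨s, hl⟩ := by
          funext j
          by_cases hm : ∃ i' : Fin (N (s + 1)), sg ⟨s, hl⟩ i' ≠ 0 ∧
              Wd ⟨s, hl⟩ - N (s + 1) + i'.val = j.val
          · simp only [hB₀]
            rw [dif_pos hm]
            obtain ⟨hs', heq⟩ := hm.choose_spec
            have htau := (hff ⟨s, hl⟩ ⟨hm.choose, hs'⟩).2 hm.choose (Z s wb) (wb ⟨s, hl⟩)
              (hjlt ⟨s, hl⟩ hm.choose hs')
            have hjeq : (⟨Wd ⟨s, hl⟩ - N (s + 1) + hm.choose.val,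
                hjlt ⟨s, hl⟩ hm.choose hs'⟩ : Fin (Wd ⟨s, hl⟩)) = j := Fin.ext heq
            rw [hjeq] at htau
            rw [htau]
            ring
          · simp only [hB₀]
            rw [dif_neg hm]
        rw [hvec]
        exact Function.update_eq_self _ _
      · rw [dif_neg hl]
        exact ih
  have hτdiff : ∀ (l : Fin L) (i : Fin (N (l.val + 1)))
      (q : (Fin (N l.val) → ℝ) × (Fin (Wd l) → ℝ)),
      DifferentiableAt ℝ (fun q => τ l q i) q :=
    fun l i q => ((contDiffAt_pi.mp ((hτ l q).contDiffAt (n := 1))) i).differentiableAt one_ne_zero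
  have hth5 : ∀ steps : ℕ, th τ hfun c B₀ steps w 0 = w ∧
      DifferentiableAt ℝ (fun p : Params L Wd × ((l : Fin L) → Fin (N (l.val + 1)) → ℝ) =>
        th τ hfun c B₀ steps p.1 p.2) (w, 0) := by
    intro steps
    induction steps with
    | zero => exact ⟨rfl, differentiableAt_fst⟩
    | succ s ih =>
      by_cases hl : s < L
      · have hsL : s ≤ L := le_of_lt hl
        constructor
        · simp only [th]
          rw [dif_pos hl, ih.1]
          have hvec : B₀ ⟨s, hl⟩ (Z s w) (w ⟨s, hl⟩)
              ((0 : (l : Fin L) → Fin (N (l.val + 1)) → ℝ) ⟨s, hl⟩) = w ⟨s, hl⟩ := by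
            funext j
            by_cases hm : ∃ i' : Fin (N (s + 1)), sg ⟨s, hl⟩ i' ≠ 0 ∧
                Wd ⟨s, hl⟩ - N (s + 1) + i'.val = j.val
            · simp only [hB₀]
              rw [dif_pos hm]
              obtain ⟨hs', heq⟩ := hm.choose_spec
              have htau := (hff ⟨s, hl⟩ ⟨hm.choose, hs'⟩).2 hm.choose (Z s w) (w ⟨s, hl⟩)
                (hjlt ⟨s, hl⟩ hm.choose hs')
              have hjeq : (⟨Wd ⟨s, hl⟩ - N (s + 1) + hm.choose.val,
                  hjlt ⟨s, hl⟩ hm.choose hs'⟩ : Fin (Wd ⟨s, hl⟩)) = j := Fin.ext heq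
              rw [hjeq] at htau
              have hyv : τ ⟨s, hl⟩ (Z s w, w ⟨s, hl⟩) hm.choose = y ⟨s, hl⟩ w hm.choose :=
                congrFun (hyw ⟨s, hl⟩) hm.choose
              rw [← hyv, htau]
              simp only [Pi.zero_apply]
              ring
            · simp only [hB₀]
              rw [dif_neg hm]
          rw [hvec]
          exact Function.update_eq_self _ _
        · have hrw : (fun p : Params L Wd × ((l : Fin L) → Fin (N (l.val + 1)) → ℝ) =>
                th τ hfun c B₀ (s + 1) p.1 p.2)
              = fun p => Function.update (th τ hfun c B₀ s p.1 p.2) ⟨s, hl⟩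
                  (B₀ ⟨s, hl⟩ (Z s (th τ hfun c B₀ s p.1 p.2))
                    (th τ hfun c B₀ s p.1 p.2 ⟨s, hl⟩) (p.2 ⟨s, hl⟩)) := by
            funext p
            simp only [th]
            rw [dif_pos hl]
          rw [hrw, differentiableAt_pi]
          intro l''
          have hthd := ih.2
          have hthco : ∀ (l' : Fin L) (j : Fin (Wd l')),
              DifferentiableAt ℝ (fun p : Params L Wd × ((l : Fin L) → Fin (N (l.val + 1)) → ℝ)
                => th τ hfun c B₀ s p.1 p.2 l' j) (w, 0) :=
            fun l' j => differentiableAt_pi.mp (differentiableAt_pi.mp hthd l') j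
          by_cases hcase : l'' = (⟨s, hl⟩ : Fin L)
          · subst hcase
            have hre : (fun p : Params L Wd × ((l : Fin L) → Fin (N (l.val + 1)) → ℝ) =>
                  Function.update (th τ hfun c B₀ s p.1 p.2)
                  ⟨s, hl⟩ (B₀ ⟨s, hl⟩ (Z s (th τ hfun c B₀ s p.1 p.2))
                    (th τ hfun c B₀ s p.1 p.2 ⟨s, hl⟩) (p.2 ⟨s, hl⟩)) ⟨s, hl⟩)
                = fun p => B₀ ⟨s, hl⟩ (Z s (th τ hfun c B₀ s p.1 p.2))
                    (th τ hfun c B₀ s p.1 p.2 ⟨s, hl⟩) (p.2 ⟨s, hl⟩) :=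
              funext fun p => Function.update_self _ _ _
            rw [hre, differentiableAt_pi]
            intro j
            have hZco : DifferentiableAt ℝ
                (fun p : Params L Wd × ((l : Fin L) → Fin (N (l.val + 1)) → ℝ) =>
                Z s (th τ hfun c B₀ s p.1 p.2)) (w, 0) := by
              have h1 : DifferentiableAt ℝ (Z s) (th τ hfun c B₀ s w 0) := by
                rw [ih.1]
                exact (hZcd s hsL).differentiableAt one_ne_zero
              exact h1.comp (w, 0) hthd
            by_cases hm : ∃ i' : Fin (N (s + 1)), sg ⟨s, hl⟩ i' ≠ 0 ∧
                Wd ⟨s, hl⟩ - N (s + 1) + i'.val = j.val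
            · have hre2 : (fun p : Params L Wd × ((l : Fin L) → Fin (N (l.val + 1)) → ℝ) =>
                    B₀ ⟨s, hl⟩
                    (Z s (th τ hfun c B₀ s p.1 p.2)) (th τ hfun c B₀ s p.1 p.2 ⟨s, hl⟩)
                    (p.2 ⟨s, hl⟩) j)
                  = fun p => (y ⟨s, hl⟩ w hm.choose + p.2 ⟨s, hl⟩ hm.choose)
                      - τ ⟨s, hl⟩ (Z s (th τ hfun c B₀ s p.1 p.2),
                          emb (Wd ⟨s, hl⟩) (N (s + 1))
                            (fun j' => th τ hfun c B₀ s p.1 p.2 ⟨s, hl⟩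
                              (Fin.castLE (Nat.sub_le _ _) j'))) hm.choose := by
                funext p
                simp only [hB₀]
                rw [dif_pos hm, hffτ ⟨s, hl⟩ ⟨hm.choose, hm.choose_spec.1⟩]
              rw [hre2]
              apply DifferentiableAt.sub
              · have hsnd : DifferentiableAt ℝ
                    (Prod.snd : Params L Wd × ((l : Fin L) → Fin (N (l.val + 1)) → ℝ) →
                      ((l : Fin L) → Fin (N (l.val + 1)) → ℝ)) (w, 0) := differentiableAt_snd
                exact (differentiableAt_const _).add
                  (differentiableAt_pi.mp (differentiableAt_pi.mp hsnd ⟨s, hl⟩) hm.choose)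
              · have harg : DifferentiableAt ℝ
                    (fun p : Params L Wd × ((l : Fin L) → Fin (N (l.val + 1)) → ℝ) =>
                    (fun j' : Fin (Wd ⟨s, hl⟩ - N (s + 1)) => th τ hfun c B₀ s p.1 p.2 ⟨s, hl⟩
                      (Fin.castLE (Nat.sub_le _ _) j'))) (w, 0) :=
                  differentiableAt_pi.mpr fun j' => hthco ⟨s, hl⟩ _
                have hembd : DifferentiableAt ℝ
                    (fun p : Params L Wd × ((l : Fin L) → Fin (N (l.val + 1)) → ℝ) =>
                    emb (Wd ⟨s, hl⟩) (N (s + 1)) (fun j' => th τ hfun c B₀ s p.1 p.2 ⟨s, hl⟩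
                      (Fin.castLE (Nat.sub_le _ _) j'))) (w, 0) :=
                  (emb_differentiable _ _ _).comp (w, 0) harg
                exact (hτdiff ⟨s, hl⟩ hm.choose _).comp (w, 0) (hZco.prodMk hembd)
            · have hre2 : (fun p : Params L Wd × ((l : Fin L) → Fin (N (l.val + 1)) → ℝ) =>
                    B₀ ⟨s, hl⟩
                    (Z s (th τ hfun c B₀ s p.1 p.2)) (th τ hfun c B₀ s p.1 p.2 ⟨s, hl⟩)
                    (p.2 ⟨s, hl⟩) j)
                  = fun p => th τ hfun c B₀ s p.1 p.2 ⟨s, hl⟩ j := by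
                funext p
                simp only [hB₀]
                rw [dif_neg hm]
              rw [hre2]
              exact hthco ⟨s, hl⟩ j
          · have hre : (fun p : Params L Wd × ((l : Fin L) → Fin (N (l.val + 1)) → ℝ) =>
                  Function.update (th τ hfun c B₀ s p.1 p.2)
                  ⟨s, hl⟩ (B₀ ⟨s, hl⟩ (Z s (th τ hfun c B₀ s p.1 p.2))
                    (th τ hfun c B₀ s p.1 p.2 ⟨s, hl⟩) (p.2 ⟨s, hl⟩)) l'')
                = fun p => th τ hfun c B₀ s p.1 p.2 l'' :=
              funext fun p => Function.update_of_ne hcase _ _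
            rw [hre]
            exact differentiableAt_pi.mp hthd l''
      · constructor
        · simp only [th]; rw [dif_neg hl]; exact ih.1
        · have hrw : (fun p : Params L Wd × ((l : Fin L) → Fin (N (l.val + 1)) → ℝ) =>
              th τ hfun c B₀ (s + 1) p.1 p.2) = fun p => th τ hfun c B₀ s p.1 p.2 := by
            funext p; simp only [th]; rw [dif_neg hl]
          rw [hrw]; exact ih.2
  -- C¹ data for Z L at w
  obtain ⟨F', U, hU, hF'c, hF'd⟩ := contDiffAt_one_iff.mp (hZcd L le_rfl)
  have hF'w : F' w = J L w := (hF'd w (mem_of_mem_nhds hU)).unique (hZfd L le_rfl)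
  -- ==================== Part 1 ====================
  have part1 : DifferentiableAt ℝ (z L) w → J L w = fderiv ℝ (z L) w := by
    intro hdiff
    set Θf : Params L Wd × ((l : Fin L) → Fin (N (l.val + 1)) → ℝ) → Params L Wd :=
      fun p => th τ hfun c B₀ L p.1 p.2 with hΘf
    have hΘd : DifferentiableAt ℝ Θf (w, 0) := (hth5 L).2
    have hΘw : Θf (w, 0) = w := (hth5 L).1
    set G : Params L Wd × ((l : Fin L) → Fin (N (l.val + 1)) → ℝ) → Fin (N L) → ℝ :=
      fun p => z L (Θf p) - Z L (Θf p) with hG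
    have hsubd : DifferentiableAt ℝ (fun w' => z L w' - Z L w') w :=
      hdiff.sub ((hZcd L le_rfl).differentiableAt one_ne_zero)
    have hGd : DifferentiableAt ℝ G (w, 0) := by
      have h1 : DifferentiableAt ℝ (fun w' => z L w' - Z L w') (Θf (w, 0)) := by
        rw [hΘw]; exact hsubd
      exact h1.comp (w, 0) hΘd
    have hGzero : ∀ (wb : Params L Wd) (a : (l : Fin L) → Fin (N (l.val + 1)) → ℝ),
        (∀ (l : Fin L) (i : Fin (N (l.val + 1))), sg l i ≠ 0 →
          0 ≤ sg l i * a l i ∧ sg l i * a l i ≤ δs l i) →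
        G (wb, a) = 0 := by
      intro wb a hc
      have hz1 : z L (Θf (wb, a)) = Z L (Θf (wb, a)) := by
        apply hagree _ ?_ L le_rfl
        intro l i hs
        rw [hΘf]
        simp only
        rw [hTy wb a l i hs]
        have hgoal : y l w i + a l i - y l w i = a l i := by ring
        rw [hgoal]
        exact hc l i hs
      rw [hG]
      simp only
      rw [hz1, sub_self]
    have hGfd0 : fderiv ℝ G (w, 0) = 0 := by
      have hcone : ∀ (ν : Params L Wd) (α : (l : Fin L) → Fin (N (l.val + 1)) → ℝ),
          (∀ (l : Fin L) (i : Fin (N (l.val + 1))), sg l i ≠ 0 → 0 ≤ sg l i * α l i) →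
          fderiv ℝ G (w, 0) (ν, α) = 0 := by
        intro ν α hα
        apply fderiv_zero_on_ray hGd
        have hself : ∀ᶠ t in 𝓝[≥] (0:ℝ), 0 ≤ t :=
          eventually_mem_set.mpr self_mem_nhdsWithin
        have hbound : ∀ᶠ t in 𝓝[≥] (0:ℝ), ∀ (l : Fin L) (i : Fin (N (l.val + 1))),
            sg l i ≠ 0 → t * (sg l i * α l i) ≤ δs l i := by
          rw [eventually_all]
          intro l
          rw [eventually_all]
          intro i
          by_cases hs : sg l i = 0
          · exact Eventually.of_forall (fun t hss => absurd hs hss)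
          · have htend : Tendsto (fun t : ℝ => t * (sg l i * α l i)) (𝓝[≥] 0) (𝓝 0) := by
              have h1 : Tendsto (fun t : ℝ => t * (sg l i * α l i)) (𝓝 0)
                  (𝓝 (0 * (sg l i * α l i))) :=
                (continuous_id.mul continuous_const).tendsto 0
              rw [zero_mul] at h1
              exact h1.mono_left nhdsWithin_le_nhds
            exact (htend.eventually_lt_const (hδpos l i)).mono (fun t ht _ => ht.le)
        filter_upwards [hself, hbound] with t ht hb
        have hpt : (((w, 0) : Params L Wd × ((l : Fin L) → Fin (N (l.val + 1)) → ℝ))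
            + t • (ν, α)) = (w + t • ν, t • α) := by
          ext <;> simp
        rw [hpt]
        have hc1 : ∀ (l : Fin L) (i : Fin (N (l.val + 1))), sg l i ≠ 0 →
            0 ≤ sg l i * (t • α) l i ∧ sg l i * (t • α) l i ≤ δs l i := by
          intro l i hs
          have h1 : sg l i * (t • α) l i = t * (sg l i * α l i) := by
            simp [Pi.smul_apply]; ring
          rw [h1]
          exact ⟨mul_nonneg ht (hα l i hs), hb l i hs⟩
        have hc0 : ∀ (l : Fin L) (i : Fin (N (l.val + 1))), sg l i ≠ 0 →
            0 ≤ sg l i * (0 : (l : Fin L) → Fin (N (l.val + 1)) → ℝ) l i ∧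
            sg l i * (0 : (l : Fin L) → Fin (N (l.val + 1)) → ℝ) l i ≤ δs l i := by
          intro l i hs
          simp only [Pi.zero_apply, mul_zero]
          exact ⟨le_refl 0, (hδpos l i).le⟩
        rw [hGzero (w + t • ν) (t • α) hc1, hGzero w 0 hc0]
      have hall : ∀ ξ : Params L Wd × ((l : Fin L) → Fin (N (l.val + 1)) → ℝ),
          fderiv ℝ G (w, 0) ξ = 0 := by
        rintro ⟨ν, α⟩
        have hβcone : ∀ (l : Fin L) (i : Fin (N (l.val + 1))), sg l i ≠ 0 →
            0 ≤ sg l i * (if 0 ≤ sg l i * α l i then α l i else 0) := by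
          intro l i hs
          by_cases hc0 : 0 ≤ sg l i * α l i
          · rw [if_pos hc0]; exact hc0
          · rw [if_neg hc0]; simp
        have hγcone : ∀ (l : Fin L) (i : Fin (N (l.val + 1))), sg l i ≠ 0 →
            0 ≤ sg l i * ((if 0 ≤ sg l i * α l i then α l i else 0) - α l i) := by
          intro l i hs
          by_cases hc0 : 0 ≤ sg l i * α l i
          · rw [if_pos hc0]; simp
          · rw [if_neg hc0]
            have h1 := not_le.mp hc0
            nlinarith
        have h1 := hcone ν (fun l i => if 0 ≤ sg l i * α l i then α l i else 0) hβcone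
        have h2 := hcone 0 (fun l i => (if 0 ≤ sg l i * α l i then α l i else 0) - α l i) hγcone
        have h3 : ((ν, α) : Params L Wd × ((l : Fin L) → Fin (N (l.val + 1)) → ℝ))
            = ((ν, fun l i => if 0 ≤ sg l i * α l i then α l i else 0)
                : Params L Wd × ((l : Fin L) → Fin (N (l.val + 1)) → ℝ))
              - (0, fun l i => (if 0 ≤ sg l i * α l i then α l i else 0) - α l i) := by
          have hfst : ν = ν - 0 := by simp
          have hsnd : α = (fun (l : Fin L) (i : Fin (N (l.val + 1))) =>
                if 0 ≤ sg l i * α l i then α l i else 0)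
              - (fun l i => (if 0 ≤ sg l i * α l i then α l i else 0) - α l i) := by
            funext l i
            simp [Pi.sub_apply]
          rw [Prod.mk_sub_mk, ← hfst, ← hsnd]
        rw [h3, map_sub, h1, h2, sub_zero]
      refine ContinuousLinearMap.ext fun ξ => ?_
      rw [ContinuousLinearMap.zero_apply]
      exact hall ξ
    have hGeq : fderiv ℝ G (w, 0) = (fderiv ℝ (fun w' => z L w' - Z L w') w).comp
        (fderiv ℝ Θf (w, 0)) := by
      have h1 : DifferentiableAt ℝ (fun w' => z L w' - Z L w') (Θf (w, 0)) := by
        rw [hΘw]; exact hsubd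
      have h2 := fderiv_comp (𝕜 := ℝ) (w, 0) h1 hΘd
      rw [hΘw] at h2
      exact h2
    set Φm : Params L Wd → Params L Wd × ((l : Fin L) → Fin (N (l.val + 1)) → ℝ) :=
      fun wb => (wb, fun l i => τ l (Z l.val wb, wb l) i - y l w i) with hΦm
    have hΦw : Φm w = (w, 0) := by
      rw [hΦm]
      simp only
      have hzero : (fun (l : Fin L) (i : Fin (N (l.val + 1))) =>
          τ l (Z l.val w, w l) i - y l w i) = 0 := by
        funext l i
        rw [congrFun (hyw l) i]
        exact sub_self _
      rw [hzero]
    have hΦd : DifferentiableAt ℝ Φm w := by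
      rw [hΦm]
      apply DifferentiableAt.prodMk differentiableAt_id
      rw [differentiableAt_pi]
      intro l
      rw [differentiableAt_pi]
      intro i
      apply DifferentiableAt.sub _ (differentiableAt_const _)
      exact (hτdiff l i _).comp w (((hZcd l.val (le_of_lt l.isLt)).differentiableAt one_ne_zero).prodMk
        (ContinuousLinearMap.proj (R := ℝ) (φ := fun l : Fin L => Fin (Wd l) → ℝ)
          l).differentiableAt)
    have hcompid : (fderiv ℝ Θf (w, 0)).comp (fderiv ℝ Φm w)
        = ContinuousLinearMap.id ℝ (Params L Wd) := by
      have h1 : (Θf ∘ Φm) = id := by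
        funext wb
        rw [hΘf, hΦm]
        exact hThPhi wb L
      have hΘd' : DifferentiableAt ℝ Θf (Φm w) := by rw [hΦw]; exact hΘd
      have h2 := fderiv_comp (𝕜 := ℝ) w hΘd' hΦd
      rw [hΦw] at h2
      rw [← h2, h1, fderiv_id]
    have hsub0 : fderiv ℝ (fun w' => z L w' - Z L w') w = 0 := by
      have h4 : ((fderiv ℝ (fun w' => z L w' - Z L w') w).comp
          ((fderiv ℝ Θf (w, 0)).comp (fderiv ℝ Φm w)))
          = 0 := by
        rw [← ContinuousLinearMap.comp_assoc, ← hGeq, hGfd0, ContinuousLinearMap.zero_comp]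
      rw [hcompid, ContinuousLinearMap.comp_id] at h4
      exact h4
    have h6 : fderiv ℝ (fun w' => z L w' - Z L w') w = _ := fderiv_sub (𝕜 := ℝ) hdiff ((hZcd L le_rfl).differentiableAt one_ne_zero)
    rw [hsub0] at h6
    have h5 : fderiv ℝ (z L) w = fderiv ℝ (Z L) w := sub_eq_zero.mp h6.symm
    rw [h5, (hZfd L le_rfl).fderiv]
  -- ==================== Part 2 (unconditional) ====================
  have part2core : ∃ u : ℕ → Params L Wd, Tendsto u atTop (𝓝 w) ∧
      (∀ k, DifferentiableAt ℝ (z L) (u k)) ∧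
      Tendsto (fun k => fderiv ℝ (z L) (u k)) atTop (𝓝 (J L w)) := by
    set aseq : ℕ → (l : Fin L) → Fin (N (l.val + 1)) → ℝ :=
      fun n l i => sg l i * δs l i * ((n : ℝ) + 2)⁻¹ with haseq
    set u0 : ℕ → Params L Wd := fun n => th τ hfun c B₀ L w (aseq n) with hu0
    have hinv : Tendsto (fun n : ℕ => ((n : ℝ) + 2)⁻¹) atTop (𝓝 0) :=
      tendsto_inv_atTop_zero.comp
        (tendsto_atTop_add_const_right atTop 2 tendsto_natCast_atTop_atTop)
    have haseq0 : Tendsto aseq atTop (𝓝 0) := by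
      rw [tendsto_pi_nhds]
      intro l
      rw [tendsto_pi_nhds]
      intro i
      have h1 := hinv.const_mul (sg l i * δs l i)
      rw [mul_zero] at h1
      simp only [haseq, Pi.zero_apply]
      exact h1
    have hu0w : Tendsto u0 atTop (𝓝 w) := by
      have h1 : Tendsto (fun n => ((w, aseq n)
          : Params L Wd × ((l : Fin L) → Fin (N (l.val + 1)) → ℝ))) atTop (𝓝 (w, 0)) :=
        tendsto_const_nhds.prodMk_nhds haseq0
      have h2 : ContinuousAt (fun p : Params L Wd × ((l : Fin L) → Fin (N (l.val + 1)) → ℝ) =>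
          th τ hfun c B₀ L p.1 p.2) (w, 0) := (hth5 L).2.continuousAt
      have h3 := (h2.tendsto).comp h1
      rw [(hth5 L).1] at h3
      exact h3
    have hsgsq : ∀ (l : Fin L) (i : Fin (N (l.val + 1))), sg l i ≠ 0 →
        sg l i * sg l i = 1 := by
      intro l i hs
      rcases hsg l i with h | h
      · exact absurd h hs
      · exact h
    have hstrict : ∀ (n : ℕ) (l : Fin L) (i : Fin (N (l.val + 1))), sg l i ≠ 0 →
        0 < sg l i * aseq n l i ∧ sg l i * aseq n l i < δs l i := by
      intro n l i hs
      have h1 : sg l i * aseq n l i = δs l i * ((n:ℝ)+2)⁻¹ := by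
        simp only [haseq]
        calc sg l i * (sg l i * δs l i * ((n:ℝ)+2)⁻¹)
            = (sg l i * sg l i) * (δs l i * ((n:ℝ)+2)⁻¹) := by ring
          _ = δs l i * ((n:ℝ)+2)⁻¹ := by rw [hsgsq l i hs, one_mul]
      have hn2 : (0:ℝ) < (n:ℝ) + 2 := by positivity
      constructor
      · rw [h1]
        have := hδpos l i
        positivity
      · rw [h1]
        have h2 : ((n:ℝ)+2)⁻¹ < 1 := by
          rw [inv_lt_one_iff₀]
          right
          have : (0:ℝ) ≤ (n:ℝ) := Nat.cast_nonneg n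
          linarith
        have h3 := hδpos l i
        nlinarith
    have hZcont : ∀ l : ℕ, Continuous (Z l) := by
      rw [hZ]
      exact zh_continuous τ hfun c hτc hhcont
    have hnear : ∀ n, z L =ᶠ[𝓝 (u0 n)] Z L := by
      intro n
      have hev : ∀ᶠ w'' in 𝓝 (u0 n), ∀ (l : Fin L) (i : Fin (N (l.val + 1))), sg l i ≠ 0 →
          0 ≤ sg l i * (τ l (Z l.val w'', w'' l) i - y l w i) ∧
          sg l i * (τ l (Z l.val w'', w'' l) i - y l w i) ≤ δs l i := by
        rw [eventually_all]
        intro l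
        rw [eventually_all]
        intro i
        by_cases hs : sg l i = 0
        · exact Eventually.of_forall (fun w'' hss => absurd hs hss)
        · have hco : ContinuousAt (fun w'' : Params L Wd =>
              sg l i * (τ l (Z l.val w'', w'' l) i - y l w i)) (u0 n) := by
            apply ContinuousAt.mul continuousAt_const
            apply ContinuousAt.sub _ continuousAt_const
            exact ((continuous_apply i).comp ((hτc l).comp
              ((hZcont l.val).prodMk (continuous_apply l)))).continuousAt
          have hval : sg l i * (τ l (Z l.val (u0 n), (u0 n) l) i - y l w i)
              ∈ Ioo 0 (δs l i) := by
            have hyval : τ l (Z l.val (u0 n), (u0 n) l) i = y l w i + aseq n l i := by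
              simp only [hu0]
              exact hTy w (aseq n) l i hs
            rw [hyval]
            have hg2 : y l w i + aseq n l i - y l w i = aseq n l i := by ring
            rw [hg2]
            exact ⟨(hstrict n l i hs).1, (hstrict n l i hs).2⟩
          have hoo := hco (isOpen_Ioo.mem_nhds hval)
          filter_upwards [hoo] with w'' hw'' _
          exact ⟨le_of_lt hw''.1, le_of_lt hw''.2⟩
      filter_upwards [hev] with w'' hw''
      exact hagree w'' hw'' L le_rfl
    have hediff : ∀ᶠ n in atTop, DifferentiableAt ℝ (z L) (u0 n) ∧
        fderiv ℝ (z L) (u0 n) = F' (u0 n) := by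
      have hUev : ∀ᶠ n in atTop, u0 n ∈ U := hu0w.eventually (eventually_mem_set.mpr hU)
      filter_upwards [hUev] with n hn
      have hfd : HasFDerivAt (Z L) (F' (u0 n)) (u0 n) := hF'd (u0 n) hn
      constructor
      · exact (hnear n).differentiableAt_iff.mpr hfd.differentiableAt
      · rw [(hnear n).fderiv_eq, hfd.fderiv]
    obtain ⟨n₀, hn₀⟩ := eventually_atTop.mp hediff
    refine ⟨fun k => u0 (k + n₀), ?_, ?_, ?_⟩
    · exact hu0w.comp (tendsto_add_atTop_nat n₀)
    · exact fun k => (hn₀ (k + n₀) (Nat.le_add_left n₀ k)).1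
    · have hF'cw : ContinuousAt F' w := hF'c.continuousAt hU
      have h7 : Tendsto (fun k => F' (u0 (k + n₀))) atTop (𝓝 (F' w)) :=
        (hF'cw.tendsto).comp (hu0w.comp (tendsto_add_atTop_nat n₀))
      rw [hF'w] at h7
      refine Tendsto.congr' ?_ h7
      exact Eventually.of_forall (fun k => ((hn₀ (k + n₀) (Nat.le_add_left n₀ k)).2).symm)
  -- ==================== Conclusion ====================
  refine ⟨part1, fun _ => part2core, ?_⟩
  apply subset_convexHull
  by_cases hdiff : DifferentiableAt ℝ (z L) w
  · refine ⟨fun _ => w, tendsto_const_nhds, fun _ => hdiff, ?_⟩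
    have hh : J L w = fderiv ℝ (z L) w := part1 hdiff
    rw [hh]
    exact tendsto_const_nhds
  · exact part2core
end

section
/- Let f : ℝ → ℝ be continuous and piecewise-analytic, and let g be an extended derivative of f. Then there exist n ∈ ℕ, a partition {A_i}_{i∈[n]} of ℝ into nonempty intervals, and differentiable functions f_i : ℝ → ℝ such that f = f_i on A_i and g = f_i′ on A_i for every i ∈ [n], and moreover ⋃_{i∈[n]} bd(A_i) = ⋃_{i∈[n]} (A_i \ int(A_i)) = ndf(f). -/
open Filter Topology Set

/-! ### Auxiliary lemmas -/

lemma germ_right (f : ℝ → ℝ) (hf : Continuous f) (hpa : PiecewiseAnalytic f) (a : ℝ) :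
    ∃ φ : ℝ → ℝ, Differentiable ℝ φ ∧ ∃ ε : ℝ, 0 < ε ∧ Set.EqOn f φ (Set.Ico a (a + ε)) := by
  obtain ⟨n, A, G, hne, _, hcov, han, heq⟩ := hpa
  have hmem : ∀ m : ℕ, ∃ j, a + 1/(m+1 : ℝ) ∈ A j := by
    intro m
    have : a + 1/(m+1 : ℝ) ∈ ⋃ i, A i := hcov ▸ Set.mem_univ _
    simpa using this
  choose idx hidx using hmem
  obtain ⟨j, hj⟩ := Finite.exists_infinite_fiber idx
  have hjinf : (idx ⁻¹' {j}).Infinite := Set.infinite_coe_iff.mp hj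
  obtain ⟨m0, hm0⟩ : ∃ m0, idx m0 = j := hjinf.nonempty
  set ε := 1/(m0+1 : ℝ) with hεdef
  have hε : 0 < ε := by positivity
  have hsub : Set.Ioc a (a + ε) ⊆ A j := by
    intro x hx
    obtain ⟨N, hN⟩ := exists_nat_one_div_lt (show (0:ℝ) < x - a by linarith [hx.1])
    obtain ⟨m, hmK, hmN⟩ := hjinf.exists_gt N
    have h1 : (1:ℝ)/(m+1) ≤ 1/(N+1) := by
      apply one_div_le_one_div_of_le (by positivity)
      exact_mod_cast by omega
    have hx1 : a + 1/(m+1 : ℝ) ∈ A j := by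
      have := hidx m; rwa [hmK] at this
    have hx2 : a + 1/(m0+1 : ℝ) ∈ A j := by
      have := hidx m0; rwa [hm0] at this
    have hord := (hne j).2
    exact hord.out hx1 hx2 ⟨by linarith, hx.2⟩
  refine ⟨G j, fun x => (han j x).differentiableAt, ε, hε, ?_⟩
  have heqIoo : Set.EqOn f (G j) (Set.Ioc a (a + ε)) := fun x hx => heq j x (hsub hx)
  intro x hx
  rcases eq_or_lt_of_le hx.1 with h | h
  · rw [← h]
    have h1 : Tendsto f (𝓝[>] a) (𝓝 (f a)) := (hf.continuousAt).continuousWithinAt.tendsto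
    have h2 : Tendsto (G j) (𝓝[>] a) (𝓝 (G j a)) :=
      ((han j a).continuousAt).continuousWithinAt.tendsto
    have h3 : f =ᶠ[𝓝[>] a] (G j) := by
      filter_upwards [Ioo_mem_nhdsGT_of_mem (⟨le_refl a, by linarith⟩ : a ∈ Set.Ico a (a+ε))]
        with y hy
      exact heqIoo ⟨hy.1, le_of_lt hy.2⟩
    exact tendsto_nhds_unique (h1.congr' h3) h2
  · exact heqIoo ⟨h, le_of_lt hx.2⟩

lemma germ_left (f : ℝ → ℝ) (hf : Continuous f) (hpa : PiecewiseAnalytic f) (a : ℝ) :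
    ∃ φ : ℝ → ℝ, Differentiable ℝ φ ∧ ∃ ε : ℝ, 0 < ε ∧ Set.EqOn f φ (Set.Ioc (a - ε) a) := by
  obtain ⟨n, A, G, hne, _, hcov, han, heq⟩ := hpa
  have hmem : ∀ m : ℕ, ∃ j, a - 1/(m+1 : ℝ) ∈ A j := by
    intro m
    have : a - 1/(m+1 : ℝ) ∈ ⋃ i, A i := hcov ▸ Set.mem_univ _
    simpa using this
  choose idx hidx using hmem
  obtain ⟨j, hj⟩ := Finite.exists_infinite_fiber idx
  have hjinf : (idx ⁻¹' {j}).Infinite := Set.infinite_coe_iff.mp hj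
  obtain ⟨m0, hm0⟩ : ∃ m0, idx m0 = j := hjinf.nonempty
  set ε := 1/(m0+1 : ℝ) with hεdef
  have hε : 0 < ε := by positivity
  have hsub : Set.Ico (a - ε) a ⊆ A j := by
    intro x hx
    obtain ⟨N, hN⟩ := exists_nat_one_div_lt (show (0:ℝ) < a - x by linarith [hx.2])
    obtain ⟨m, hmK, hmN⟩ := hjinf.exists_gt N
    have h1 : (1:ℝ)/(m+1) ≤ 1/(N+1) := by
      apply one_div_le_one_div_of_le (by positivity)
      exact_mod_cast by omega
    have hx1 : a - 1/(m+1 : ℝ) ∈ A j := by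
      have := hidx m; rwa [hmK] at this
    have hx2 : a - 1/(m0+1 : ℝ) ∈ A j := by
      have := hidx m0; rwa [hm0] at this
    have hord := (hne j).2
    exact hord.out hx2 hx1 ⟨hx.1, by linarith⟩
  refine ⟨G j, fun x => (han j x).differentiableAt, ε, hε, ?_⟩
  have heqIoo : Set.EqOn f (G j) (Set.Ico (a - ε) a) := fun x hx => heq j x (hsub hx)
  intro x hx
  rcases eq_or_lt_of_le hx.2 with h | h
  · rw [h]
    have h1 : Tendsto f (𝓝[<] a) (𝓝 (f a)) := (hf.continuousAt).continuousWithinAt.tendsto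
    have h2 : Tendsto (G j) (𝓝[<] a) (𝓝 (G j a)) :=
      ((han j a).continuousAt).continuousWithinAt.tendsto
    have h3 : f =ᶠ[𝓝[<] a] (G j) := by
      filter_upwards [Ioo_mem_nhdsLT_of_mem (⟨by linarith, le_refl a⟩ : a ∈ Set.Ioc (a-ε) a)]
        with y hy
      exact heqIoo ⟨le_of_lt hy.1, hy.2⟩
    exact tendsto_nhds_unique (h1.congr' h3) h2
  · exact heqIoo ⟨le_of_lt hx.1, h⟩

lemma key3 (s : Set ℝ) (hs : s.OrdConnected) :
    ∀ a b c : ℝ, a ∈ closure s → b ∈ frontier s → c ∈ closure s → a < b → b < c → False := by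
  intro a b c ha hb hc hab hbc
  have hIoo : Set.Ioo a c ⊆ s := by
    intro w hw
    obtain ⟨p, hps, hp⟩ : ∃ p ∈ s, p < w := by
      have := mem_closure_iff.mp ha (Set.Iio w) isOpen_Iio hw.1
      obtain ⟨p, hp1, hp2⟩ := this
      exact ⟨p, hp2, hp1⟩
    obtain ⟨q, hqs, hq⟩ : ∃ q ∈ s, w < q := by
      have := mem_closure_iff.mp hc (Set.Ioi w) isOpen_Ioi hw.2
      obtain ⟨q, hq1, hq2⟩ := this
      exact ⟨q, hq2, hq1⟩
    exact hs.out hps hqs ⟨le_of_lt hp, le_of_lt hq⟩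
  exact hb.2 (mem_interior.mpr ⟨Set.Ioo a c, hIoo, isOpen_Ioo, hab, hbc⟩)

lemma frontier_finite_of_ordConnected (s : Set ℝ) (hs : s.OrdConnected) :
    (frontier s).Finite := by
  by_contra h
  have hinf : (frontier s).Infinite := h
  obtain ⟨x, hx⟩ := hinf.nonempty
  obtain ⟨y, hy⟩ := (hinf.diff (Set.finite_singleton x)).nonempty
  obtain ⟨z, hz⟩ := (hinf.diff (Set.toFinite {x, y})).nonempty
  have hxy : x ≠ y := fun h => hy.2 (by simp [h])
  have hxz : x ≠ z := fun h => hz.2 (by simp [h])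
  have hyz : y ≠ z := fun h => hz.2 (by simp [h])
  have hyf := hy.1; have hzf := hz.1
  have hcl : ∀ w, w ∈ frontier s → w ∈ closure s := fun w hw => hw.1
  rcases lt_trichotomy x y with h1 | h1 | h1
  · rcases lt_trichotomy y z with h2 | h2 | h2
    · exact key3 s hs x y z (hcl x hx) hyf (hcl z hzf) h1 h2
    · exact hyz h2
    · rcases lt_trichotomy x z with h3 | h3 | h3
      · exact key3 s hs x z y (hcl x hx) hzf (hcl y hyf) h3 h2
      · exact hxz h3
      · exact key3 s hs z x y (hcl z hzf) hx (hcl y hyf) h3 h1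
  · exact hxy h1
  · rcases lt_trichotomy x z with h2 | h2 | h2
    · exact key3 s hs y x z (hcl y hyf) hx (hcl z hzf) h1 h2
    · exact hxz h2
    · rcases lt_trichotomy y z with h3 | h3 | h3
      · exact key3 s hs y z x (hcl y hyf) hzf (hcl x hx) h3 h2
      · exact hyz h3
      · exact key3 s hs z y x (hcl z hzf) hyf (hcl x hx) h3 h1

lemma ndf_finite (f : ℝ → ℝ) (hpa : PiecewiseAnalytic f) :
    {x : ℝ | ¬DifferentiableAt ℝ f x}.Finite := by
  obtain ⟨n, A, G, hne, _, hcov, han, heq⟩ := hpa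
  apply Set.Finite.subset (Set.finite_iUnion
    (fun i => frontier_finite_of_ordConnected (A i) (hne i).2))
  intro x hx
  by_contra hfr
  simp only [Set.mem_iUnion, not_exists] at hfr
  obtain ⟨j, hj⟩ : ∃ j, x ∈ A j := by
    have : x ∈ ⋃ i, A i := hcov ▸ Set.mem_univ x
    simpa using this
  have hint : x ∈ interior (A j) := by
    have := hfr j
    rw [frontier, Set.mem_diff] at this
    push_neg at this
    exact this (subset_closure hj)
  have : DifferentiableAt ℝ f x := by
    apply ((han j x).differentiableAt).congr_of_eventuallyEq
    filter_upwards [mem_interior_iff_mem_nhds.mp hint] with y hy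
    exact heq j y hy
  exact hx this

lemma lin_hasDerivAt (c m s x : ℝ) : HasDerivAt (fun y => c + m * (y - s)) m x := by
  simpa using (((hasDerivAt_id x).sub_const s).const_mul m).const_add c

lemma glue_right (F φ : ℝ → ℝ) (a ε : ℝ) (hε : 0 < ε) (hφ : Differentiable ℝ φ)
    (h1 : ∀ y, y ≤ a → F y = φ a + deriv φ a * (y - a))
    (h2 : ∀ y ∈ Set.Ico a (a + ε), F y = φ y) :
    HasDerivAt F (deriv φ a) a := by
  have hFa : F a = φ a := h2 a ⟨le_refl a, by linarith⟩
  have hl : HasDerivWithinAt F (deriv φ a) (Set.Iic a) a :=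
    ((lin_hasDerivAt (φ a) (deriv φ a) a a).hasDerivWithinAt).congr
      (fun y hy => h1 y hy) (by simpa using h1 a le_rfl)
  have hr : HasDerivWithinAt F (deriv φ a) (Set.Ico a (a + ε)) a :=
    (((hφ a).hasDerivAt).hasDerivWithinAt).congr (fun y hy => h2 y hy) hFa
  have hu := hl.union hr
  have hset : Set.Iic a ∪ Set.Ico a (a + ε) = Set.Iio (a + ε) := by
    ext y
    simp only [Set.mem_union, Set.mem_Iic, Set.mem_Ico, Set.mem_Iio]
    constructor
    · rintro (h | ⟨_, h⟩) <;> [linarith; exact h]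
    · intro h
      rcases le_or_gt y a with h' | h'
      · exact Or.inl h'
      · exact Or.inr ⟨le_of_lt h', h⟩
  rw [hset] at hu
  exact hu.hasDerivAt (Iio_mem_nhds (by linarith))

lemma glue_left (F φ : ℝ → ℝ) (a ε : ℝ) (hε : 0 < ε) (hφ : Differentiable ℝ φ)
    (h1 : ∀ y, a ≤ y → F y = φ a + deriv φ a * (y - a))
    (h2 : ∀ y ∈ Set.Ioc (a - ε) a, F y = φ y) :
    HasDerivAt F (deriv φ a) a := by
  have hFa : F a = φ a := h2 a ⟨by linarith, le_refl a⟩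
  have hl : HasDerivWithinAt F (deriv φ a) (Set.Ici a) a :=
    ((lin_hasDerivAt (φ a) (deriv φ a) a a).hasDerivWithinAt).congr
      (fun y hy => h1 y hy) (by simpa using h1 a le_rfl)
  have hr : HasDerivWithinAt F (deriv φ a) (Set.Ioc (a - ε) a) a :=
    (((hφ a).hasDerivAt).hasDerivWithinAt).congr (fun y hy => h2 y hy) hFa
  have hu := hl.union hr
  have hset : Set.Ici a ∪ Set.Ioc (a - ε) a = Set.Ioi (a - ε) := by
    ext y
    simp only [Set.mem_union, Set.mem_Ici, Set.mem_Ioc, Set.mem_Ioi]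
    constructor
    · rintro (h | ⟨h, _⟩) <;> [linarith; exact h]
    · intro h
      rcases le_or_gt a y with h' | h'
      · exact Or.inl h'
      · exact Or.inr ⟨h, le_of_lt h'⟩
  rw [hset] at hu
  exact hu.hasDerivAt (Ioi_mem_nhds (by linarith))

lemma ext_Ioi (f : ℝ → ℝ) (hf : Continuous f) (hpa : PiecewiseAnalytic f) (a : ℝ)
    (hd : ∀ x ∈ Set.Ioi a, DifferentiableAt ℝ f x) :
    ∃ F : ℝ → ℝ, Differentiable ℝ F ∧ Set.EqOn f F (Set.Ioi a) := by
  obtain ⟨φ, hφ, ε, hε, heq⟩ := germ_right f hf hpa a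
  set F : ℝ → ℝ := fun x => if x ≤ a then φ a + deriv φ a * (x - a) else f x with hF
  have hFeq : ∀ x, a < x → F x = f x := fun x hx => if_neg (not_le.mpr hx)
  refine ⟨F, ?_, fun x hx => (hFeq x hx).symm⟩
  intro x
  rcases lt_trichotomy x a with h | h | h
  · apply ((lin_hasDerivAt (φ a) (deriv φ a) a x).differentiableAt).congr_of_eventuallyEq
    filter_upwards [Iio_mem_nhds h] with y hy
    exact if_pos (le_of_lt hy)
  · subst h
    refine (glue_right F φ x ε hε hφ (fun y hy => if_pos hy) ?_).differentiableAt
    intro y hy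
    rcases eq_or_lt_of_le hy.1 with h' | h'
    · rw [← h']; simp [hF]
    · rw [hFeq y h']; exact heq ⟨le_of_lt h', hy.2⟩
  · apply (hd x h).congr_of_eventuallyEq
    filter_upwards [Ioi_mem_nhds h] with y hy
    exact hFeq y hy

lemma ext_Iio (f : ℝ → ℝ) (hf : Continuous f) (hpa : PiecewiseAnalytic f) (b : ℝ)
    (hd : ∀ x ∈ Set.Iio b, DifferentiableAt ℝ f x) :
    ∃ F : ℝ → ℝ, Differentiable ℝ F ∧ Set.EqOn f F (Set.Iio b) := by
  obtain ⟨φ, hφ, ε, hε, heq⟩ := germ_left f hf hpa b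
  set F : ℝ → ℝ := fun x => if b ≤ x then φ b + deriv φ b * (x - b) else f x with hF
  have hFeq : ∀ x, x < b → F x = f x := fun x hx => if_neg (not_le.mpr hx)
  refine ⟨F, ?_, fun x hx => (hFeq x hx).symm⟩
  intro x
  rcases lt_trichotomy x b with h | h | h
  · apply (hd x h).congr_of_eventuallyEq
    filter_upwards [Iio_mem_nhds h] with y hy
    exact hFeq y hy
  · subst h
    refine (glue_left F φ x ε hε hφ (fun y hy => if_pos hy) ?_).differentiableAt
    intro y hy
    rcases eq_or_lt_of_le hy.2 with h' | h'
    · rw [h']; simp [hF]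
    · rw [hFeq y h']; exact heq ⟨hy.1, le_of_lt h'⟩
  · apply ((lin_hasDerivAt (φ b) (deriv φ b) b x).differentiableAt).congr_of_eventuallyEq
    filter_upwards [Ioi_mem_nhds h] with y hy
    exact if_pos (le_of_lt hy)

lemma ext_Ioo (f : ℝ → ℝ) (hf : Continuous f) (hpa : PiecewiseAnalytic f) (a b : ℝ)
    (hab : a < b) (hd : ∀ x ∈ Set.Ioo a b, DifferentiableAt ℝ f x) :
    ∃ F : ℝ → ℝ, Differentiable ℝ F ∧ Set.EqOn f F (Set.Ioo a b) := by
  obtain ⟨φ, hφ, ε, hε, heq⟩ := germ_right f hf hpa a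
  obtain ⟨ψ, hψ, δ, hδ, heq'⟩ := germ_left f hf hpa b
  set ε' := min ε (b - a) with hε'def
  have hε' : 0 < ε' := lt_min hε (by linarith)
  have hε'1 : ε' ≤ ε := min_le_left _ _
  have hε'2 : ε' ≤ b - a := min_le_right _ _
  set δ' := min δ (b - a) with hδ'def
  have hδ' : 0 < δ' := lt_min hδ (by linarith)
  have hδ'1 : δ' ≤ δ := min_le_left _ _
  have hδ'2 : δ' ≤ b - a := min_le_right _ _
  set F : ℝ → ℝ := fun x =>
    if x ≤ a then φ a + deriv φ a * (x - a)
    else if x < b then f x else ψ b + deriv ψ b * (x - b) with hF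
  have hFeq : ∀ x, a < x → x < b → F x = f x := fun x h1 h2 => by
    rw [hF]; simp only [if_neg (not_le.mpr h1), if_pos h2]
  have hFright : ∀ x, b ≤ x → F x = ψ b + deriv ψ b * (x - b) := fun x h1 => by
    rw [hF]
    simp only [if_neg (not_le.mpr (lt_of_lt_of_le hab h1)), if_neg (not_lt.mpr h1)]
  refine ⟨F, ?_, fun x hx => (hFeq x hx.1 hx.2).symm⟩
  intro x
  rcases lt_trichotomy x a with h | h | h
  · apply ((lin_hasDerivAt (φ a) (deriv φ a) a x).differentiableAt).congr_of_eventuallyEq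
    filter_upwards [Iio_mem_nhds h] with y hy
    exact if_pos (le_of_lt hy)
  · subst h
    refine (glue_right F φ x ε' hε' hφ (fun y hy => if_pos hy) ?_).differentiableAt
    intro y hy
    rcases eq_or_lt_of_le hy.1 with h' | h'
    · rw [← h']; simp [hF]
    · rw [hFeq y h' (by linarith [hy.2])]
      exact heq ⟨le_of_lt h', by linarith [hy.2]⟩
  · rcases lt_trichotomy x b with h2 | h2 | h2
    · apply (hd x ⟨h, h2⟩).congr_of_eventuallyEq
      filter_upwards [Ioo_mem_nhds h h2] with y hy
      exact hFeq y hy.1 hy.2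
    · subst h2
      refine (glue_left F ψ x δ' hδ' hψ (fun y hy => hFright y hy) ?_).differentiableAt
      intro y hy
      rcases eq_or_lt_of_le hy.2 with h' | h'
      · rw [h', hFright x le_rfl]; simp
      · rw [hFeq y (by linarith [hy.1]) h']
        exact heq' ⟨by linarith [hy.1], le_of_lt h'⟩
    · apply ((lin_hasDerivAt (ψ b) (deriv ψ b) b x).differentiableAt).congr_of_eventuallyEq
      filter_upwards [Ioi_mem_nhds h2] with y hy
      exact hFright y (le_of_lt hy)

lemma countA (T : Finset ℝ) {k : ℕ} (hc : T.card = k) (j : Fin k) :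
    (T.filter (fun t => t < ((T.orderIsoOfFin hc j : ℝ)))).card = j.val := by
  set σ := T.orderIsoOfFin hc with hσ
  have himg : T.filter (fun t => t < ((σ j : ℝ))) =
      (Finset.Iio j).image (fun i => ((σ i : ℝ))) := by
    ext t
    simp only [Finset.mem_filter, Finset.mem_image, Finset.mem_Iio]
    constructor
    · rintro ⟨ht, hlt⟩
      refine ⟨σ.symm ⟨t, ht⟩, ?_, by simp⟩
      rw [← σ.lt_iff_lt, OrderIso.apply_symm_apply]
      exact Subtype.mk_lt_mk.mpr hlt
    · rintro ⟨i, hij, rfl⟩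
      exact ⟨(σ i).2, Subtype.coe_lt_coe.mpr (σ.lt_iff_lt.mpr hij)⟩
  have hinj : Function.Injective (fun i : Fin k => ((σ i : ℝ))) :=
    fun a b h => σ.injective (Subtype.coe_injective h)
  rw [himg, Finset.card_image_of_injective _ hinj, Fin.card_Iio]

lemma countA' (T : Finset ℝ) {k : ℕ} (hc : T.card = k) (j : Fin k) :
    (T.filter (fun t => t ≤ ((T.orderIsoOfFin hc j : ℝ)))).card = j.val + 1 := by
  set σ := T.orderIsoOfFin hc with hσ
  have himg : T.filter (fun t => t ≤ ((σ j : ℝ))) =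
      (Finset.Iic j).image (fun i => ((σ i : ℝ))) := by
    ext t
    simp only [Finset.mem_filter, Finset.mem_image, Finset.mem_Iic]
    constructor
    · rintro ⟨ht, hle⟩
      refine ⟨σ.symm ⟨t, ht⟩, ?_, by simp⟩
      rw [← σ.le_iff_le, OrderIso.apply_symm_apply]
      exact Subtype.mk_le_mk.mpr hle
    · rintro ⟨i, hij, rfl⟩
      exact ⟨(σ i).2, Subtype.coe_le_coe.mpr (σ.le_iff_le.mpr hij)⟩
  have hinj : Function.Injective (fun i : Fin k => ((σ i : ℝ))) :=
    fun a b h => σ.injective (Subtype.coe_injective h)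
  rw [himg, Finset.card_image_of_injective _ hinj, Fin.card_Iic]

/-- A continuous piecewise-analytic function `f` with extended derivative `g`
admits a piecewise-differentiable representation defining `g`, whose partition boundaries are
exactly the set of non-differentiability points of `f`. -/
theorem stmt13 (f g : ℝ → ℝ) (hf : Continuous f) (hpa : PiecewiseAnalytic f)
    (hg : IsExtendedDeriv f g) :
    ∃ (n : ℕ) (A : Fin n → Set ℝ) (F : Fin n → ℝ → ℝ),
      1 ≤ n ∧
      (∀ i, (A i).Nonempty ∧ (A i).OrdConnected) ∧
      (Pairwise fun i j => Disjoint (A i) (A j)) ∧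
      (⋃ i, A i) = Set.univ ∧
      (∀ i, Differentiable ℝ (F i)) ∧
      (∀ i, ∀ x ∈ A i, f x = F i x ∧ g x = deriv (F i) x) ∧
      (⋃ i, frontier (A i)) = {x : ℝ | ¬DifferentiableAt ℝ f x} ∧
      (⋃ i, (A i \ interior (A i))) = {x : ℝ | ¬DifferentiableAt ℝ f x} := by
  classical
  have hSfin : {x : ℝ | ¬DifferentiableAt ℝ f x}.Finite := ndf_finite f hpa
  set T : Finset ℝ := hSfin.toFinset with hTdef
  have hTS : ∀ x : ℝ, x ∈ T ↔ ¬DifferentiableAt ℝ f x := fun x => hSfin.mem_toFinset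
  by_cases hT : T = ∅
  · have hdiff : Differentiable ℝ f := by
      intro x
      by_contra hx
      have : x ∈ T := (hTS x).mpr hx
      simp [hT] at this
    have hSempty : {x : ℝ | ¬DifferentiableAt ℝ f x} = ∅ := by
      ext x; simp only [Set.mem_setOf_eq, Set.mem_empty_iff_false, iff_false, not_not]
      exact hdiff x
    refine ⟨1, fun _ => Set.univ, fun _ => f, le_refl 1, ?_, ?_, ?_, ?_, ?_, ?_, ?_⟩
    · exact fun i => ⟨⟨0, trivial⟩, Set.ordConnected_univ⟩
    · intro i j hij; exact absurd (Subsingleton.elim i j) hij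
    · show (⋃ _ : Fin 1, (Set.univ : Set ℝ)) = Set.univ
      exact Set.iUnion_const _
    · exact fun _ => hdiff
    · exact fun i x _ => ⟨rfl, hg x (hdiff x)⟩
    · show (⋃ _ : Fin 1, frontier (Set.univ : Set ℝ)) = _
      rw [hSempty]
      simp
    · show (⋃ _ : Fin 1, ((Set.univ : Set ℝ) \ interior Set.univ)) = _
      rw [hSempty]
      simp
  · set k := T.card with hk
    have hk0 : 0 < k := Finset.card_pos.mpr (Finset.nonempty_of_ne_empty hT)
    set σ := T.orderIsoOfFin rfl with hσ
    have hσmem : ∀ j : Fin k, ((σ j : ℝ)) ∈ T := fun j => (σ j).2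
    have hσmono : ∀ j j' : Fin k, j < j' → ((σ j : ℝ)) < ((σ j' : ℝ)) :=
      fun j j' h => Subtype.coe_lt_coe.mpr (σ.lt_iff_lt.mpr h)
    have hσmono' : ∀ j j' : Fin k, j ≤ j' → ((σ j : ℝ)) ≤ ((σ j' : ℝ)) :=
      fun j j' h => Subtype.coe_le_coe.mpr (σ.le_iff_le.mpr h)
    have hσtot : ∀ t ∈ T, ∃ j : Fin k, ((σ j : ℝ)) = t :=
      fun t ht => ⟨σ.symm ⟨t, ht⟩, by simp⟩
    -- the gap sets
    set gap : Fin (k+1) → Set ℝ := fun i =>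
      (if h : 0 < i.val then Set.Ioi ((σ ⟨i.val - 1, by have := i.isLt; omega⟩ : ℝ))
        else Set.univ) ∩
      (if h : i.val < k then Set.Iio ((σ ⟨i.val, h⟩ : ℝ)) else Set.univ) with hgap
    have hgap_open : ∀ i, IsOpen (gap i) := by
      intro i
      apply IsOpen.inter <;> (split_ifs <;> simp [isOpen_Ioi, isOpen_Iio])
    have hgap_ord : ∀ i, (gap i).OrdConnected := by
      intro i
      apply Set.OrdConnected.inter <;>
        (split_ifs <;> first
          | exact Set.ordConnected_Ioi | exact Set.ordConnected_Iio
          | exact Set.ordConnected_univ)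
    have hgap_ne : ∀ i, (gap i).Nonempty := by
      intro i
      have hilt := i.isLt
      rw [hgap]
      by_cases h1 : 0 < i.val <;> by_cases h2 : i.val < k
      · refine ⟨(((σ ⟨i.val - 1, by omega⟩ : ℝ)) + ((σ ⟨i.val, h2⟩ : ℝ)))/2, ?_, ?_⟩
        · rw [dif_pos h1]
          have := hσmono ⟨i.val - 1, by omega⟩ ⟨i.val, h2⟩ (Fin.mk_lt_mk.mpr (by omega))
          simp only [Set.mem_Ioi]; linarith
        · rw [dif_pos h2]
          have := hσmono ⟨i.val - 1, by omega⟩ ⟨i.val, h2⟩ (Fin.mk_lt_mk.mpr (by omega))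
          simp only [Set.mem_Iio]; linarith
      · refine ⟨((σ ⟨i.val - 1, by omega⟩ : ℝ)) + 1, ?_, ?_⟩
        · rw [dif_pos h1]; simp only [Set.mem_Ioi]; linarith
        · rw [dif_neg h2]; trivial
      · refine ⟨((σ ⟨i.val, h2⟩ : ℝ)) - 1, ?_, ?_⟩
        · rw [dif_neg h1]; trivial
        · rw [dif_pos h2]; simp only [Set.mem_Iio]; linarith
      · exact ⟨0, by rw [dif_neg h1]; trivial, by rw [dif_neg h2]; trivial⟩
    have hgapσ : ∀ (i : Fin (k+1)) (j : Fin k), ((σ j : ℝ)) ∉ gap i := by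
      intro i j hmem
      have hilt := i.isLt
      have hjlt := j.isLt
      rw [hgap] at hmem
      obtain ⟨hm1, hm2⟩ := hmem
      rcases le_or_gt i.val j.val with h | h
      · have hik : i.val < k := lt_of_le_of_lt h j.isLt
        rw [dif_pos hik] at hm2
        have : ((σ ⟨i.val, hik⟩ : ℝ)) ≤ ((σ j : ℝ)) :=
          hσmono' _ _ (by rw [Fin.le_def]; simpa using h)
        simp only [Set.mem_Iio] at hm2; linarith
      · have h1 : 0 < i.val := by omega
        rw [dif_pos h1] at hm1
        have : ((σ j : ℝ)) ≤ ((σ ⟨i.val - 1, by omega⟩ : ℝ)) :=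
          hσmono' _ _ (by rw [Fin.le_def]; simp; omega)
        simp only [Set.mem_Ioi] at hm1; linarith
    have hgap_notT : ∀ (i : Fin (k+1)) x, x ∈ gap i → x ∉ T := by
      intro i x hx hxT
      obtain ⟨j, hj⟩ := hσtot x hxT
      rw [← hj] at hx
      exact hgapσ i j hx
    have hgap_diff : ∀ (i : Fin (k+1)) x, x ∈ gap i → DifferentiableAt ℝ f x := by
      intro i x hx
      by_contra hd
      exact hgap_notT i x hx ((hTS x).mpr hd)
    have hgap_disj : ∀ i i' : Fin (k+1), i.val < i'.val → Disjoint (gap i) (gap i') := by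
      intro i i' h
      have hilt := i'.isLt
      rw [Set.disjoint_left]
      intro x hx hx'
      rw [hgap] at hx hx'
      have hik : i.val < k := by omega
      have h1' : 0 < i'.val := by omega
      have hm2 := hx.2; rw [dif_pos hik] at hm2
      have hm1 := hx'.1; rw [dif_pos h1'] at hm1
      have : ((σ ⟨i.val, hik⟩ : ℝ)) ≤ ((σ ⟨i'.val - 1, by omega⟩ : ℝ)) :=
        hσmono' _ _ (Fin.mk_le_mk.mpr (by omega))
      simp only [Set.mem_Iio] at hm2
      simp only [Set.mem_Ioi] at hm1
      linarith
    have hgap_frontier : ∀ i : Fin (k+1), frontier (gap i) ⊆ (T : Set ℝ) := by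
      intro i
      have hilt := i.isLt
      simp only [hgap]
      by_cases h1 : 0 < i.val <;> by_cases h2 : i.val < k
      · rw [dif_pos h1, dif_pos h2, Set.Ioi_inter_Iio]
        have hab := hσmono ⟨i.val - 1, by omega⟩ ⟨i.val, h2⟩ (Fin.mk_lt_mk.mpr (by omega))
        rw [frontier_Ioo hab]
        rintro x (rfl | rfl) <;> simp [hσmem]
      · rw [dif_pos h1, dif_neg h2, Set.inter_univ, frontier_Ioi]
        rintro x rfl; simp [hσmem]
      · rw [dif_neg h1, dif_pos h2, Set.univ_inter, frontier_Iio]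
        rintro x rfl; simp [hσmem]
      · rw [dif_neg h1, dif_neg h2, Set.univ_inter, frontier_univ]
        exact Set.empty_subset _
    -- covering by gaps
    have hcov_gap : ∀ x : ℝ, x ∉ T → ∃ i : Fin (k+1), x ∈ gap i := by
      intro x hx
      set c := (T.filter (fun t => t < x)).card with hcdef
      have hle : c ≤ k := Finset.card_filter_le _ _
      refine ⟨⟨c, by omega⟩, ?_⟩
      simp only [hgap, Fin.val_mk]
      refine Set.mem_inter ?_ ?_
      · split_ifs with h1
        · simp only [Set.mem_Ioi]
          by_contra hle2
          push_neg at hle2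
          have hca : (T.filter (fun t => t < ((σ ⟨c - 1, by omega⟩ : ℝ)))).card = c - 1 :=
            countA T rfl ⟨c - 1, by omega⟩
          have hsub : T.filter (fun t => t < x) ⊆
              T.filter (fun t => t < ((σ ⟨c - 1, by omega⟩ : ℝ))) := by
            intro t ht
            rw [Finset.mem_filter] at ht ⊢
            exact ⟨ht.1, lt_of_lt_of_le ht.2 hle2⟩
          have hcard := Finset.card_le_card hsub
          rw [hca, ← hcdef] at hcard
          omega
        · trivial
      · split_ifs with h2
        · simp only [Set.mem_Iio]
          by_contra hle2
          push_neg at hle2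
          have hca : (T.filter (fun t => t ≤ ((σ ⟨c, h2⟩ : ℝ)))).card = c + 1 :=
            countA' T rfl ⟨c, h2⟩
          have hsub : T.filter (fun t => t ≤ ((σ ⟨c, h2⟩ : ℝ))) ⊆
              T.filter (fun t => t < x) := by
            intro t ht
            rw [Finset.mem_filter] at ht ⊢
            refine ⟨ht.1, lt_of_le_of_ne (le_trans ht.2 hle2) ?_⟩
            rintro rfl; exact hx ht.1
          have hcard := Finset.card_le_card hsub
          rw [hca, ← hcdef] at hcard
          omega
        · trivial
    -- extensions on gaps
    have hFgap : ∀ i : Fin (k+1), ∃ F : ℝ → ℝ, Differentiable ℝ F ∧ Set.EqOn f F (gap i) := by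
      intro i
      have hilt := i.isLt
      by_cases h1 : 0 < i.val <;> by_cases h2 : i.val < k
      · have hab := hσmono ⟨i.val - 1, by omega⟩ ⟨i.val, h2⟩ (Fin.mk_lt_mk.mpr (by omega))
        have hgeq : gap i = Set.Ioo ((σ ⟨i.val - 1, by omega⟩ : ℝ)) ((σ ⟨i.val, h2⟩ : ℝ)) := by
          simp only [hgap]; rw [dif_pos h1, dif_pos h2, Set.Ioi_inter_Iio]
        rw [hgeq]
        exact ext_Ioo f hf hpa _ _ hab (fun x hx => hgap_diff i x (by rw [hgeq]; exact hx))
      · have hgeq : gap i = Set.Ioi ((σ ⟨i.val - 1, by omega⟩ : ℝ)) := by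
          simp only [hgap]; rw [dif_pos h1, dif_neg h2, Set.inter_univ]
        rw [hgeq]
        exact ext_Ioi f hf hpa _ (fun x hx => hgap_diff i x (by rw [hgeq]; exact hx))
      · have hgeq : gap i = Set.Iio ((σ ⟨i.val, h2⟩ : ℝ)) := by
          simp only [hgap]; rw [dif_neg h1, dif_pos h2, Set.univ_inter]
        rw [hgeq]
        exact ext_Iio f hf hpa _ (fun x hx => hgap_diff i x (by rw [hgeq]; exact hx))
      · exact absurd hk0 (by omega)
    choose Fgap hFgap_diff hFgap_eq using hFgap
    -- assembling
    set B : Fin (k+1) ⊕ Fin k → Set ℝ := Sum.elim gap (fun j => {((σ j : ℝ))}) with hB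
    set FF : Fin (k+1) ⊕ Fin k → ℝ → ℝ :=
      Sum.elim Fgap (fun j => fun x => f ((σ j : ℝ)) + g ((σ j : ℝ)) * (x - ((σ j : ℝ)))) with hFF
    set e := (finSumFinEquiv : Fin (k+1) ⊕ Fin k ≃ Fin ((k+1) + k)) with he
    have hkey : ∀ C : Fin (k+1) ⊕ Fin k → Set ℝ, (⋃ i, C (e.symm i)) = ⋃ s, C s :=
      fun C => e.symm.surjective.iUnion_comp C
    have key1 : (⋃ i, B (e.symm i)) = ⋃ s, B s := hkey B
    have key2 : (⋃ i, frontier (B (e.symm i))) = ⋃ s, frontier (B s) := hkey (fun s => frontier (B s))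
    have key3' : (⋃ i, (B (e.symm i) \ interior (B (e.symm i)))) =
        ⋃ s, (B s \ interior (B s)) := hkey (fun s => B s \ interior (B s))
    have hBfr : ∀ s, frontier (B s) ⊆ {x : ℝ | ¬DifferentiableAt ℝ f x} := by
      intro s
      rcases s with s | s
      · simp only [hB, Sum.elim_inl]
        intro x hx
        exact (hTS x).mp (hgap_frontier s hx)
      · simp only [hB, Sum.elim_inr, frontier, closure_singleton, interior_singleton,
          Set.diff_empty]
        rintro x rfl
        exact (hTS _).mp (hσmem s)
    refine ⟨(k+1) + k, fun i => B (e.symm i), fun i => FF (e.symm i), by omega, ?_, ?_, ?_, ?_,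
      ?_, ?_, ?_⟩
    · intro i
      show (B (e.symm i)).Nonempty ∧ (B (e.symm i)).OrdConnected
      rcases hs : e.symm i with s | s
      · simp only [hB, Sum.elim_inl]
        exact ⟨hgap_ne s, hgap_ord s⟩
      · simp only [hB, Sum.elim_inr]
        exact ⟨⟨_, rfl⟩, Set.ordConnected_singleton⟩
    · intro i j hij
      show Disjoint (B (e.symm i)) (B (e.symm j))
      have hsij : e.symm i ≠ e.symm j := fun h => hij (e.symm.injective h)
      rcases hsi : e.symm i with s | s <;> rcases hsj : e.symm j with s' | s' <;>
        rw [hsi, hsj] at hsij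
      · simp only [hB, Sum.elim_inl]
        rcases lt_trichotomy s.val s'.val with h | h | h
        · exact hgap_disj s s' h
        · exact absurd (congrArg Sum.inl (Fin.ext h)) hsij
        · exact (hgap_disj s' s h).symm
      · simp only [hB, Sum.elim_inl, Sum.elim_inr]
        exact (Set.disjoint_singleton_right).mpr (hgapσ s s')
      · simp only [hB, Sum.elim_inl, Sum.elim_inr]
        exact (Set.disjoint_singleton_left).mpr (hgapσ s' s)
      · simp only [hB, Sum.elim_inr]
        rw [Set.disjoint_singleton]
        intro h
        exact hsij (congrArg Sum.inr (σ.injective (Subtype.coe_injective h)))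
    · show (⋃ i, B (e.symm i)) = Set.univ
      rw [key1, Set.eq_univ_iff_forall]
      intro x
      rw [Set.mem_iUnion]
      by_cases hx : x ∈ T
      · obtain ⟨j, hj⟩ := hσtot x hx
        refine ⟨Sum.inr j, ?_⟩
        simp only [hB, Sum.elim_inr]
        exact hj.symm ▸ rfl
      · obtain ⟨i, hi⟩ := hcov_gap x hx
        refine ⟨Sum.inl i, ?_⟩
        simpa only [hB, Sum.elim_inl] using hi
    · intro i
      show Differentiable ℝ (FF (e.symm i))
      rcases hs : e.symm i with s | s
      · simp only [hFF, Sum.elim_inl]; exact hFgap_diff s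
      · simp only [hFF, Sum.elim_inr]
        exact fun x => (lin_hasDerivAt _ _ _ x).differentiableAt
    · intro i x hx
      have hx' : x ∈ B (e.symm i) := hx
      show f x = FF (e.symm i) x ∧ g x = deriv (FF (e.symm i)) x
      rcases hs : e.symm i with s | s <;> rw [hs] at hx'
      · simp only [hB, Sum.elim_inl] at hx'
        simp only [hFF, Sum.elim_inl]
        have hev : Fgap s =ᶠ[𝓝 x] f := by
          filter_upwards [(hgap_open s).mem_nhds hx'] with y hy
          exact (hFgap_eq s hy).symm
        refine ⟨hFgap_eq s hx', ?_⟩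
        rw [hev.deriv_eq]
        exact hg x (hgap_diff s x hx')
      · simp only [hB, Sum.elim_inr, Set.mem_singleton_iff] at hx'
        subst hx'
        simp only [hFF, Sum.elim_inr]
        constructor
        · simp
        · rw [(lin_hasDerivAt (f ((σ s : ℝ))) (g ((σ s : ℝ))) ((σ s : ℝ)) ((σ s : ℝ))).deriv]
    · show (⋃ i, frontier (B (e.symm i))) = {x : ℝ | ¬DifferentiableAt ℝ f x}
      rw [key2]
      apply Set.Subset.antisymm
      · exact Set.iUnion_subset hBfr
      · intro x hx
        have hxT : x ∈ T := (hTS x).mpr hx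
        obtain ⟨j, hj⟩ := hσtot x hxT
        rw [Set.mem_iUnion]
        refine ⟨Sum.inr j, ?_⟩
        simp only [hB, Sum.elim_inr, frontier, closure_singleton, interior_singleton,
          Set.diff_empty]
        exact hj.symm ▸ rfl
    · show (⋃ i, (B (e.symm i) \ interior (B (e.symm i)))) = {x : ℝ | ¬DifferentiableAt ℝ f x}
      rw [key3']
      apply Set.Subset.antisymm
      · apply Set.iUnion_subset
        intro s
        rcases s with s | s
        · simp only [hB, Sum.elim_inl, (hgap_open s).interior_eq, Set.diff_self]
          exact Set.empty_subset _
        · simp only [hB, Sum.elim_inr, interior_singleton, Set.diff_empty]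
          rintro x rfl
          exact (hTS _).mp (hσmem s)
      · intro x hx
        have hxT : x ∈ T := (hTS x).mpr hx
        obtain ⟨j, hj⟩ := hσtot x hxT
        rw [Set.mem_iUnion]
        refine ⟨Sum.inr j, ?_⟩
        simp only [hB, Sum.elim_inr, interior_singleton, Set.diff_empty]
        exact hj.symm ▸ rfl
end
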